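/- arXiv:2410.21263 — 6 statements merged into one kernel-verified Lean document; each statement's English description precedes it below -/
import Mathlib

section
/- In the two-component symmetric univariate Gaussian mixture transfer setting, the independent task learning estimator Ž^ITL_{0,i} = sgn(X_{0,i}) satisfies P(Ž^ITL_{0,i} ≠ Z*_{0,i}) = Φ(−μ/σ) for every i ∈ [n], and the data-pooling estimator Ž^DP_{0,i} = sgn(X_{0,i} + X_{1,i}) satisfies 0 ≤ P(Ž^DP_{0,i} ≠ Z*_{0,i}) − Φ(−√2·μ/σ) ≤ ε/2 for every i ∈ [n]. -/
open MeasureTheory ProbabilityTheory Real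
open scoped NNReal ENNReal

/-- The standard normal CDF. -/
noncomputable def stdGaussCDF (x : ℝ) : ℝ :=
  ((ProbabilityTheory.gaussianReal 0 1) (Set.Iic x)).toReal

/-- The uniform distribution on `{±1}` (Rademacher law). -/
noncomputable def radMeasure : MeasureTheory.Measure ℝ :=
  (2 : ENNReal)⁻¹ • (MeasureTheory.Measure.dirac 1 + MeasureTheory.Measure.dirac (-1))

lemma aux_map_withDensity_equiv {α β : Type*} [MeasurableSpace α] [MeasurableSpace β]
    (μ : Measure α) (e : MeasurableEquiv α β) {f : β → ℝ≥0∞} (hf : Measurable f) :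
    (μ.withDensity (f ∘ e)).map e = (μ.map e).withDensity f := by
  ext s hs
  rw [Measure.map_apply e.measurable hs, withDensity_apply _ (e.measurable hs),
    withDensity_apply _ hs, setLIntegral_map hs hf e.measurable]
  rfl

lemma aux_gauss_prod {v : ℝ≥0} (hv : v ≠ 0) :
    (gaussianReal 0 v).prod (gaussianReal 0 v) =
      (volume : Measure (ℝ × ℝ)).withDensity
        (fun p => gaussianPDF 0 v p.1 * gaussianPDF 0 v p.2) := by
  refine Measure.prod_eq (fun s t hs ht => ?_)
  rw [gaussianReal_of_var_ne_zero 0 hv, withDensity_apply _ (hs.prod ht),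
    withDensity_apply _ hs, withDensity_apply _ ht,
    MeasureTheory.Measure.volume_eq_prod, ← Measure.prod_restrict]
  exact lintegral_prod_mul (measurable_gaussianPDF 0 v).aemeasurable
    (measurable_gaussianPDF 0 v).aemeasurable

noncomputable def auxT : (ℝ × ℝ) ≃ₗ[ℝ] (ℝ × ℝ) where
  toFun p := (p.1 + p.2, p.1 - p.2)
  invFun q := ((q.1 + q.2) / 2, (q.1 - q.2) / 2)
  map_add' a b := by simp only [Prod.ext_iff, Prod.fst_add, Prod.snd_add, Prod.smul_fst, Prod.smul_snd, smul_eq_mul, RingHom.id_apply]; constructor <;> ring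
  map_smul' c a := by simp only [Prod.ext_iff, Prod.fst_add, Prod.snd_add, Prod.smul_fst, Prod.smul_snd, smul_eq_mul, RingHom.id_apply]; constructor <;> ring
  left_inv p := by simp only [Prod.ext_iff, Prod.fst_add, Prod.snd_add, Prod.smul_fst, Prod.smul_snd, smul_eq_mul, RingHom.id_apply]; constructor <;> ring
  right_inv q := by simp only [Prod.ext_iff, Prod.fst_add, Prod.snd_add, Prod.smul_fst, Prod.smul_snd, smul_eq_mul, RingHom.id_apply]; constructor <;> ring

noncomputable def auxE : MeasurableEquiv (ℝ × ℝ) (ℝ × ℝ) :=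
  auxT.toContinuousLinearEquiv.toHomeomorph.toMeasurableEquiv

lemma auxE_apply (p : ℝ × ℝ) : auxE p = (p.1 + p.2, p.1 - p.2) := rfl

lemma auxT_det : LinearMap.det (auxT : (ℝ × ℝ) →ₗ[ℝ] (ℝ × ℝ)) = -2 := by
  rw [← LinearMap.det_toMatrix (Module.Basis.finTwoProd ℝ), Matrix.det_fin_two]
  simp [LinearMap.toMatrix_apply, Module.Basis.finTwoProd_zero, Module.Basis.finTwoProd_one,
    Module.Basis.coe_finTwoProd_repr, auxT]
  norm_num

lemma aux_map_vol :
    (volume : Measure (ℝ × ℝ)).map auxE = (2 : ℝ≥0∞)⁻¹ • volume := by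
  have h := Measure.map_linearMap_addHaar_eq_smul_addHaar
    (volume : Measure (ℝ × ℝ)) (f := (auxT : (ℝ × ℝ) →ₗ[ℝ] (ℝ × ℝ)))
    (by rw [auxT_det]; norm_num)
  rw [auxT_det] at h
  have hc : ⇑(auxT : (ℝ × ℝ) →ₗ[ℝ] (ℝ × ℝ)) = ⇑auxE := rfl
  rw [hc] at h
  rw [h]
  congr 1
  rw [show |(-2 : ℝ)⁻¹| = (2 : ℝ)⁻¹ by norm_num, ENNReal.ofReal_inv_of_pos (by norm_num)]
  norm_num

lemma aux_pdf_id (u w : ℝ) :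
    (2:ℝ)⁻¹ * (gaussianPDFReal 0 1 ((u + w)/2) * gaussianPDFReal 0 1 ((u - w)/2))
      = gaussianPDFReal 0 2 u * gaussianPDFReal 0 2 w := by
  simp only [gaussianPDFReal, NNReal.coe_one, NNReal.coe_ofNat, mul_one, sub_zero]
  rw [mul_mul_mul_comm ((√(2*π))⁻¹), mul_mul_mul_comm ((√(2*π*2))⁻¹),
    ← Real.exp_add, ← Real.exp_add, ← mul_inv, ← mul_inv,
    Real.mul_self_sqrt (by positivity), Real.mul_self_sqrt (by positivity), ← mul_assoc]
  congr 1
  · rw [← mul_inv]; norm_num; ring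
  · ring

lemma aux_gauss_sum :
    ((gaussianReal 0 1).prod (gaussianReal 0 1)).map (fun p : ℝ × ℝ => p.1 + p.2)
      = gaussianReal 0 2 := by
  set f : ℝ × ℝ → ℝ≥0∞ :=
    fun q => gaussianPDF 0 1 ((q.1 + q.2)/2) * gaussianPDF 0 1 ((q.1 - q.2)/2) with hf_def
  have hfm : Measurable f :=
    ((measurable_gaussianPDF 0 1).comp ((measurable_fst.add measurable_snd).div_const 2)).mul
      ((measurable_gaussianPDF 0 1).comp ((measurable_fst.sub measurable_snd).div_const 2))
  have hfe : f ∘ auxE = fun p : ℝ × ℝ => gaussianPDF 0 1 p.1 * gaussianPDF 0 1 p.2 := by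
    funext p
    simp only [Function.comp_apply, auxE_apply, hf_def]
    congr 1 <;> congr 1 <;> ring
  have hmapE : ((gaussianReal 0 1).prod (gaussianReal 0 1)).map auxE
      = (gaussianReal 0 2).prod (gaussianReal 0 2) := by
    rw [aux_gauss_prod one_ne_zero, ← hfe, aux_map_withDensity_equiv _ _ hfm, aux_map_vol,
      withDensity_smul_measure, ← withDensity_smul' _ _ (by norm_num),
      aux_gauss_prod two_ne_zero]
    congr 1
    funext q
    simp only [Pi.smul_apply, smul_eq_mul, hf_def, gaussianPDF]
    rw [show ((2:ℝ≥0∞)⁻¹) = ENNReal.ofReal ((2:ℝ)⁻¹) by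
        rw [ENNReal.ofReal_inv_of_pos (by norm_num)]; norm_num,
      ← ENNReal.ofReal_mul (gaussianPDFReal_nonneg _ _ _),
      ← ENNReal.ofReal_mul (by positivity),
      ← ENNReal.ofReal_mul (gaussianPDFReal_nonneg _ _ _), aux_pdf_id]
  have : (fun p : ℝ × ℝ => p.1 + p.2) = Prod.fst ∘ ⇑auxE := rfl
  rw [this, ← Measure.map_map measurable_fst auxE.measurable, hmapE, Measure.map_fst_prod]
  simp

lemma aux_gauss_neg (v : ℝ≥0) : (gaussianReal 0 v).map (fun x => -x) = gaussianReal 0 v := by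
  have h := gaussianReal_map_const_mul (μ := 0) (v := v) (-1)
  have h1 : (fun x : ℝ => -x) = ((-1 : ℝ) * ·) := by funext x; ring
  have h2 : (NNReal.mk ((-1 : ℝ)^2) (sq_nonneg _)) = 1 := by ext; norm_num
  rw [h1, h, h2]
  norm_num

lemma aux_gauss_Ici (v : ℝ≥0) (a : ℝ) :
    gaussianReal 0 v (Set.Ici a) = gaussianReal 0 v (Set.Iic (-a)) := by
  conv_lhs => rw [← aux_gauss_neg v]
  rw [Measure.map_apply measurable_neg measurableSet_Ici]
  congr 1
  ext x
  simp [le_neg]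

lemma aux_gauss_singleton (v : ℝ≥0) (hv : v ≠ 0) (a : ℝ) : gaussianReal 0 v {a} = 0 :=
  (gaussianReal_absolutelyContinuous 0 hv) Real.volume_singleton

lemma aux_gauss_Iic_zero (v : ℝ≥0) (hv : v ≠ 0) :
    gaussianReal 0 v (Set.Iic (0:ℝ)) = 2⁻¹ := by
  have hIci : gaussianReal 0 v (Set.Ici (0:ℝ)) = gaussianReal 0 v (Set.Iic (0:ℝ)) := by
    rw [aux_gauss_Ici, neg_zero]
  have hIoi : gaussianReal 0 v (Set.Ioi (0:ℝ)) = gaussianReal 0 v (Set.Ici (0:ℝ)) := by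
    rw [show (Set.Ici (0:ℝ)) = {0} ∪ Set.Ioi 0 by
        ext x; simp [le_iff_lt_or_eq, or_comm, eq_comm],
      measure_union (by simp) measurableSet_Ioi, aux_gauss_singleton v hv, zero_add]
  have htot : gaussianReal 0 v (Set.Iic (0:ℝ)) + gaussianReal 0 v (Set.Ioi (0:ℝ)) = 1 := by
    rw [← measure_union (Set.Iic_disjoint_Ioi le_rfl) measurableSet_Ioi, Set.Iic_union_Ioi,
      measure_univ]
  rw [hIoi, hIci] at htot
  have h2 : (2:ℝ≥0∞) * gaussianReal 0 v (Set.Iic (0:ℝ)) = 1 := by rw [two_mul]; exact htot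
  have := congrArg (fun x => (2:ℝ≥0∞)⁻¹ * x) h2
  simpa [← mul_assoc, ENNReal.inv_mul_cancel] using this

lemma aux_gauss_two_Iic (t : ℝ) :
    gaussianReal 0 2 (Set.Iic t) = gaussianReal 0 1 (Set.Iic (t / √2)) := by
  have h2 : (NNReal.mk ((√2 : ℝ)^2) (sq_nonneg _)) * 1 = 2 := by
    ext; simp [Real.sq_sqrt]
  have h := gaussianReal_map_const_mul (μ := 0) (v := 1) (√2)
  rw [mul_zero, h2] at h
  rw [← h, Measure.map_apply (by fun_prop) measurableSet_Iic]
  congr 1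
  ext x
  have hs : (0:ℝ) < √2 := by positivity
  simp only [Set.mem_preimage, Set.mem_Iic]
  rw [mul_comm, ← le_div_iff₀ hs]

lemma aux_sign_ne_one_iff {t : ℝ} : Real.sign t ≠ 1 ↔ t ≤ 0 := by
  rcases lt_trichotomy t 0 with h | h | h
  · simp [Real.sign_of_neg h, h.le]; norm_num
  · simp [h, Real.sign_zero]
  · simp [Real.sign_of_pos h, h, not_le.mpr h]

lemma aux_sign_ne_neg_one_iff {t : ℝ} : Real.sign t ≠ -1 ↔ 0 ≤ t := by
  rcases lt_trichotomy t 0 with h | h | h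
  · simp [Real.sign_of_neg h, not_le.mpr h]
  · simp [h, Real.sign_zero]
  · simp [Real.sign_of_pos h, h.le]; norm_num
/-- **Proposition (ITL and DP baselines in the two-component symmetric univariate GMM).**
For every `i`: `P(sgn(X_{0,i}) ≠ Z*_{0,i}) = Φ(−μ/σ)`, and
`0 ≤ P(sgn(X_{0,i}+X_{1,i}) ≠ Z*_{0,i}) − Φ(−√2 μ/σ) ≤ ε/2`. -/
theorem stmt0
    {Ω : Type*} [MeasurableSpace Ω] (P : Measure Ω) [IsProbabilityMeasure P]
    (n : ℕ) (μ σ ε : ℝ) (hμ : 0 ≤ μ) (hσ : 0 < σ) (hε0 : 0 ≤ ε) (hε1 : ε ≤ 1 / 2)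
    -- latent labels and standard Gaussian noises
    (Z0 Z1 V0 V1 : Fin n → Ω → ℝ)
    (hmZ0 : ∀ i, Measurable (Z0 i)) (hmZ1 : ∀ i, Measurable (Z1 i))
    (hmV0 : ∀ i, Measurable (V0 i)) (hmV1 : ∀ i, Measurable (V1 i))
    -- labels take values in {±1}
    (hZ0v : ∀ i ω, Z0 i ω = 1 ∨ Z0 i ω = -1)
    (hZ1v : ∀ i ω, Z1 i ω = 1 ∨ Z1 i ω = -1)
    -- Z*_{0,i} are i.i.d. uniform on {±1}
    (hZ0d : ∀ i, P.map (Z0 i) = radMeasure)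
    (hZiid : iIndepFun (fun i ω => (Z0 i ω, Z1 i ω)) P)
    -- label discrepancy at most ε
    (hmis : ∀ i, P {ω | Z1 i ω ≠ Z0 i ω} ≤ ENNReal.ofReal ε)
    -- the noises are i.i.d. N(0,1), independent of the labels
    (hVd : ∀ j : Fin n ⊕ Fin n, P.map (Sum.elim V0 V1 j) = gaussianReal 0 1)
    (hViid : iIndepFun (Sum.elim V0 V1) P)
    (hLVindep : IndepFun (fun ω => (fun i => Z0 i ω, fun i => Z1 i ω))
      (fun ω => (fun i => V0 i ω, fun i => V1 i ω)) P)
    -- observed data: X_{m,i} | Z*_{m,i} ~ N(Z*_{m,i} μ, σ²)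
    (X0 X1 : Fin n → Ω → ℝ)
    (hX0 : ∀ i ω, X0 i ω = μ * Z0 i ω + σ * V0 i ω)
    (hX1 : ∀ i ω, X1 i ω = μ * Z1 i ω + σ * V1 i ω) :
    ∀ i : Fin n,
      (P {ω | Real.sign (X0 i ω) ≠ Z0 i ω}).toReal = stdGaussCDF (-(μ / σ)) ∧
      0 ≤ (P {ω | Real.sign (X0 i ω + X1 i ω) ≠ Z0 i ω}).toReal
            - stdGaussCDF (-(Real.sqrt 2 * μ / σ)) ∧
      (P {ω | Real.sign (X0 i ω + X1 i ω) ≠ Z0 i ω}).toReal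
            - stdGaussCDF (-(Real.sqrt 2 * μ / σ)) ≤ ε / 2 := by
  intro i
  have hV0law : P.map (V0 i) = gaussianReal 0 1 := by simpa using hVd (Sum.inl i)
  have hV1law : P.map (V1 i) = gaussianReal 0 1 := by simpa using hVd (Sum.inr i)
  have hc : μ / σ * σ = μ := div_mul_cancel₀ μ hσ.ne'
  have hc2 : 2 * μ / σ * σ = 2 * μ := div_mul_cancel₀ _ hσ.ne'
  -- independence of label and noise for ITL
  have hindepZV : IndepFun (Z0 i) (V0 i) P := by
    exact hLVindep.comp (φ := fun z : (Fin n → ℝ) × (Fin n → ℝ) => z.1 i)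
      (ψ := fun v : (Fin n → ℝ) × (Fin n → ℝ) => v.1 i)
      ((measurable_pi_apply i).comp measurable_fst)
      ((measurable_pi_apply i).comp measurable_fst)
  have key1 : ∀ (A B : Set ℝ), MeasurableSet A → MeasurableSet B →
      P (Z0 i ⁻¹' A ∩ V0 i ⁻¹' B) = P (Z0 i ⁻¹' A) * gaussianReal 0 1 B := by
    intro A B hA hB
    rw [hindepZV.measure_inter_preimage_eq_mul A B hA hB,
      ← Measure.map_apply (hmV0 i) hB, hV0law]
  have hdZ : Disjoint (Z0 i ⁻¹' {1}) (Z0 i ⁻¹' {(-1 : ℝ)}) := by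
    refine (Set.disjoint_singleton.mpr (by norm_num)).preimage (Z0 i)
  have hZuniv : Z0 i ⁻¹' {1} ∪ Z0 i ⁻¹' {(-1 : ℝ)} = Set.univ := by
    ext ω; simpa using hZ0v i ω
  have hZsum : P (Z0 i ⁻¹' {1}) + P (Z0 i ⁻¹' {(-1 : ℝ)}) = 1 := by
    rw [← measure_union hdZ ((hmZ0 i) (measurableSet_singleton _)), hZuniv, measure_univ]
  -- ITL computation
  have hITL : P {ω | Real.sign (X0 i ω) ≠ Z0 i ω}
      = gaussianReal 0 1 (Set.Iic (-(μ / σ))) := by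
    have hset1 : {ω | Real.sign (X0 i ω) ≠ Z0 i ω}
        = (Z0 i ⁻¹' {1} ∩ V0 i ⁻¹' (Set.Iic (-(μ / σ))))
          ∪ (Z0 i ⁻¹' {(-1 : ℝ)} ∩ V0 i ⁻¹' (Set.Ici (μ / σ))) := by
      ext ω
      have hx := hX0 i ω
      rcases hZ0v i ω with h | h <;>
        simp only [Set.mem_setOf_eq, Set.mem_union, Set.mem_inter_iff, Set.mem_preimage,
          Set.mem_singleton_iff, Set.mem_Iic, Set.mem_Ici, h, hx, mul_one, mul_neg_one]
      · rw [aux_sign_ne_one_iff]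
        norm_num
        constructor <;> intro h' <;> nlinarith [hc, hσ]
      · rw [aux_sign_ne_neg_one_iff]
        norm_num
        constructor <;> intro h' <;> nlinarith [hc, hσ]
    rw [hset1, measure_union
        (hdZ.mono Set.inter_subset_left Set.inter_subset_left)
        (((hmZ0 i) (measurableSet_singleton _)).inter ((hmV0 i) measurableSet_Ici)),
      key1 _ _ (measurableSet_singleton _) measurableSet_Iic,
      key1 _ _ (measurableSet_singleton _) measurableSet_Ici,
      aux_gauss_Ici, ← add_mul, hZsum, one_mul]
  -- DP setup
  have hWm : Measurable fun ω => V0 i ω + V1 i ω := (hmV0 i).add (hmV1 i)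
  have hindepV : IndepFun (V0 i) (V1 i) P := by
    have h := hViid.indepFun (i := Sum.inl i) (j := Sum.inr i) (by simp)
    simpa using h
  have hWlaw : P.map (fun ω => V0 i ω + V1 i ω) = gaussianReal 0 2 := by
    have hpair : P.map (fun ω => (V0 i ω, V1 i ω)) = (P.map (V0 i)).prod (P.map (V1 i)) :=
      (indepFun_iff_map_prod_eq_prod_map_map (hmV0 i).aemeasurable
        (hmV1 i).aemeasurable).mp hindepV
    have heq : (fun ω => V0 i ω + V1 i ω)
        = (fun p : ℝ × ℝ => p.1 + p.2) ∘ (fun ω => (V0 i ω, V1 i ω)) := rfl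
    rw [heq, ← Measure.map_map (g := fun p : ℝ × ℝ => p.1 + p.2) (measurable_fst.add measurable_snd)
      ((hmV0 i).prodMk (hmV1 i)), hpair, hV0law, hV1law, aux_gauss_sum]
  have hSm : Measurable fun ω => (Z0 i ω, Z1 i ω) := (hmZ0 i).prodMk (hmZ1 i)
  have hindepSW : IndepFun (fun ω => (Z0 i ω, Z1 i ω)) (fun ω => V0 i ω + V1 i ω) P := by
    exact hLVindep.comp
      (φ := fun z : (Fin n → ℝ) × (Fin n → ℝ) => (z.1 i, z.2 i))
      (ψ := fun v : (Fin n → ℝ) × (Fin n → ℝ) => v.1 i + v.2 i)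
      (((measurable_pi_apply i).comp measurable_fst).prodMk
        ((measurable_pi_apply i).comp measurable_snd))
      (((measurable_pi_apply i).comp measurable_fst).add
        ((measurable_pi_apply i).comp measurable_snd))
  have key2 : ∀ (A : Set (ℝ × ℝ)) (B : Set ℝ), MeasurableSet A → MeasurableSet B →
      P ((fun ω => (Z0 i ω, Z1 i ω)) ⁻¹' A ∩ (fun ω => V0 i ω + V1 i ω) ⁻¹' B)
        = P ((fun ω => (Z0 i ω, Z1 i ω)) ⁻¹' A) * gaussianReal 0 2 B := by
    intro A B hA hB
    rw [hindepSW.measure_inter_preimage_eq_mul A B hA hB, ← Measure.map_apply hWm hB, hWlaw]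
  have hdS : ∀ p q : ℝ × ℝ, p ≠ q →
      Disjoint ((fun ω => (Z0 i ω, Z1 i ω)) ⁻¹' {p}) ((fun ω => (Z0 i ω, Z1 i ω)) ⁻¹' {q}) :=
    fun p q h => (Set.disjoint_singleton.mpr h).preimage _
  have hD : ∀ (p q : ℝ × ℝ) (U V' : Set ℝ), p ≠ q →
      Disjoint ((fun ω => (Z0 i ω, Z1 i ω)) ⁻¹' {p} ∩ (fun ω => V0 i ω + V1 i ω) ⁻¹' U)
        ((fun ω => (Z0 i ω, Z1 i ω)) ⁻¹' {q} ∩ (fun ω => V0 i ω + V1 i ω) ⁻¹' V') :=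
    fun p q U V' h => (hdS p q h).mono Set.inter_subset_left Set.inter_subset_left
  have hmS : ∀ p : ℝ × ℝ, MeasurableSet ((fun ω => (Z0 i ω, Z1 i ω)) ⁻¹' {p}) :=
    fun p => hSm (measurableSet_singleton p)
  set p1 := P ((fun ω => (Z0 i ω, Z1 i ω)) ⁻¹' {((1:ℝ),(1:ℝ))}) with hp1
  set p2 := P ((fun ω => (Z0 i ω, Z1 i ω)) ⁻¹' {((-1:ℝ),(-1:ℝ))}) with hp2
  set p3 := P ((fun ω => (Z0 i ω, Z1 i ω)) ⁻¹' {((1:ℝ),(-1:ℝ))}) with hp3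
  set p4 := P ((fun ω => (Z0 i ω, Z1 i ω)) ⁻¹' {((-1:ℝ),(1:ℝ))}) with hp4
  have hsum4 : p1 + p2 + p3 + p4 = 1 := by
    rw [hp1, hp2, hp3, hp4,
      ← measure_union (hdS _ _ (by norm_num [Prod.ext_iff])) (hmS _),
      ← measure_union (Disjoint.union_left (hdS _ _ (by norm_num [Prod.ext_iff]))
        (hdS _ _ (by norm_num [Prod.ext_iff]))) (hmS _),
      ← measure_union (Disjoint.union_left (Disjoint.union_left
          (hdS _ _ (by norm_num [Prod.ext_iff])) (hdS _ _ (by norm_num [Prod.ext_iff])))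
        (hdS _ _ (by norm_num [Prod.ext_iff]))) (hmS _)]
    rw [show ((fun ω => (Z0 i ω, Z1 i ω)) ⁻¹' {((1:ℝ),(1:ℝ))}
        ∪ (fun ω => (Z0 i ω, Z1 i ω)) ⁻¹' {((-1:ℝ),(-1:ℝ))}
        ∪ (fun ω => (Z0 i ω, Z1 i ω)) ⁻¹' {((1:ℝ),(-1:ℝ))}
        ∪ (fun ω => (Z0 i ω, Z1 i ω)) ⁻¹' {((-1:ℝ),(1:ℝ))}) = Set.univ by
      ext ω
      rcases hZ0v i ω with h0 | h0 <;> rcases hZ1v i ω with h1 | h1 <;>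
        simp [Prod.ext_iff, h0, h1]]
    exact measure_univ
  have hdisagP : p3 + p4 ≤ ENNReal.ofReal ε := by
    rw [hp3, hp4, ← measure_union (hdS _ _ (by norm_num [Prod.ext_iff])) (hmS _)]
    refine le_trans (le_of_eq ?_) (hmis i)
    congr 1
    ext ω
    rcases hZ0v i ω with h0 | h0 <;> rcases hZ1v i ω with h1 | h1 <;>
      simp [Prod.ext_iff, h0, h1] <;> norm_num
  have hDP : P {ω | Real.sign (X0 i ω + X1 i ω) ≠ Z0 i ω}
      = (p1 + p2) * gaussianReal 0 2 (Set.Iic (-(2 * μ / σ))) + (p3 + p4) * 2⁻¹ := by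
    have hset2 : {ω | Real.sign (X0 i ω + X1 i ω) ≠ Z0 i ω}
        = ((fun ω => (Z0 i ω, Z1 i ω)) ⁻¹' {((1:ℝ),(1:ℝ))}
            ∩ (fun ω => V0 i ω + V1 i ω) ⁻¹' Set.Iic (-(2 * μ / σ)))
          ∪ ((fun ω => (Z0 i ω, Z1 i ω)) ⁻¹' {((-1:ℝ),(-1:ℝ))}
            ∩ (fun ω => V0 i ω + V1 i ω) ⁻¹' Set.Ici (2 * μ / σ))
          ∪ ((fun ω => (Z0 i ω, Z1 i ω)) ⁻¹' {((1:ℝ),(-1:ℝ))}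
            ∩ (fun ω => V0 i ω + V1 i ω) ⁻¹' Set.Iic 0)
          ∪ ((fun ω => (Z0 i ω, Z1 i ω)) ⁻¹' {((-1:ℝ),(1:ℝ))}
            ∩ (fun ω => V0 i ω + V1 i ω) ⁻¹' Set.Ici 0) := by
      ext ω
      have hx0 := hX0 i ω
      have hx1 := hX1 i ω
      rcases hZ0v i ω with h0 | h0 <;> rcases hZ1v i ω with h1 | h1 <;>
        simp only [Set.mem_setOf_eq, Set.mem_union, Set.mem_inter_iff, Set.mem_preimage,
          Set.mem_singleton_iff, Set.mem_Iic, Set.mem_Ici, Prod.mk.injEq, h0, h1, hx0, hx1,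
          mul_one, mul_neg_one]
      · rw [aux_sign_ne_one_iff]; norm_num
        constructor <;> intro h' <;> nlinarith [hc2, hσ]
      · rw [aux_sign_ne_one_iff]; norm_num
        constructor <;> intro h' <;> nlinarith [hσ]
      · rw [aux_sign_ne_neg_one_iff]; norm_num
        constructor <;> intro h' <;> nlinarith [hσ]
      · rw [aux_sign_ne_neg_one_iff]; norm_num
        constructor <;> intro h' <;> nlinarith [hc2, hσ]
    rw [hset2,
      measure_union (Disjoint.union_left (Disjoint.union_left
          (hD _ _ _ _ (by norm_num [Prod.ext_iff])) (hD _ _ _ _ (by norm_num [Prod.ext_iff])))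
          (hD _ _ _ _ (by norm_num [Prod.ext_iff])))
        ((hmS _).inter (hWm measurableSet_Ici)),
      measure_union (Disjoint.union_left
          (hD _ _ _ _ (by norm_num [Prod.ext_iff])) (hD _ _ _ _ (by norm_num [Prod.ext_iff])))
        ((hmS _).inter (hWm measurableSet_Iic)),
      measure_union (hD _ _ _ _ (by norm_num [Prod.ext_iff]))
        ((hmS _).inter (hWm measurableSet_Ici)),
      key2 _ _ (measurableSet_singleton _) measurableSet_Iic,
      key2 _ _ (measurableSet_singleton _) measurableSet_Ici,
      key2 _ _ (measurableSet_singleton _) measurableSet_Iic,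
      key2 _ _ (measurableSet_singleton _) measurableSet_Ici,
      aux_gauss_Ici, aux_gauss_Ici, neg_zero, aux_gauss_Iic_zero 2 (by norm_num)]
    ring
  have hcfin : gaussianReal 0 2 (Set.Iic (-(2 * μ / σ))) ≠ ⊤ := measure_ne_top _ _
  have hc_le : gaussianReal 0 2 (Set.Iic (-(2 * μ / σ))) ≤ 2⁻¹ := by
    rw [← aux_gauss_Iic_zero 2 (by norm_num)]
    exact measure_mono (Set.Iic_subset_Iic.mpr (neg_nonpos.mpr (by positivity)))
  have hcR : (gaussianReal 0 2 (Set.Iic (-(2 * μ / σ)))).toReal = stdGaussCDF (-(√2 * μ / σ)) := by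
    rw [aux_gauss_two_Iic]
    have hs2 : (√2:ℝ) * √2 = 2 := Real.mul_self_sqrt (by norm_num)
    have hdiv : -(2 * μ / σ) / √2 = -(√2 * μ / σ) := by
      rw [neg_div]
      congr 1
      rw [div_div, div_eq_div_iff (by positivity) hσ.ne']
      linear_combination (-(μ * σ)) * hs2
    rw [hdiv]; rfl
  have hp12fin : p1 + p2 ≠ ⊤ :=
    ENNReal.add_ne_top.mpr ⟨measure_ne_top _ _, measure_ne_top _ _⟩
  have hp34fin : p3 + p4 ≠ ⊤ :=
    ENNReal.add_ne_top.mpr ⟨measure_ne_top _ _, measure_ne_top _ _⟩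
  have hhalffin : ((2:ℝ≥0∞)⁻¹) ≠ ⊤ := by simp
  have hDPR : (P {ω | Real.sign (X0 i ω + X1 i ω) ≠ Z0 i ω}).toReal
      = (p1 + p2).toReal * stdGaussCDF (-(√2 * μ / σ)) + (p3 + p4).toReal * (1/2) := by
    rw [hDP, ENNReal.toReal_add (ENNReal.mul_ne_top hp12fin hcfin)
        (ENNReal.mul_ne_top hp34fin hhalffin),
      ENNReal.toReal_mul, ENNReal.toReal_mul, hcR]
    norm_num
  have hsumR : (p1 + p2).toReal + (p3 + p4).toReal = 1 := by
    rw [← ENNReal.toReal_add hp12fin hp34fin, show p1 + p2 + (p3 + p4) = 1 by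
      rw [← add_assoc]; exact hsum4]
    simp
  have hdRε : (p3 + p4).toReal ≤ ε := by
    calc (p3 + p4).toReal ≤ (ENNReal.ofReal ε).toReal :=
          ENNReal.toReal_mono ENNReal.ofReal_ne_top hdisagP
    _ = ε := ENNReal.toReal_ofReal hε0
  have hdR0 : 0 ≤ (p3 + p4).toReal := ENNReal.toReal_nonneg
  have hcR0 : 0 ≤ stdGaussCDF (-(√2 * μ / σ)) := ENNReal.toReal_nonneg
  have hcRhalf : stdGaussCDF (-(√2 * μ / σ)) ≤ 1/2 := by
    rw [← hcR]
    calc (gaussianReal 0 2 (Set.Iic (-(2 * μ / σ)))).toReal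
        ≤ ((2:ℝ≥0∞)⁻¹).toReal := ENNReal.toReal_mono hhalffin hc_le
    _ = 1/2 := by norm_num
  refine ⟨by rw [hITL]; rfl, ?_, ?_⟩
  · rw [hDPR]
    nlinarith [mul_nonneg hdR0 (sub_nonneg.mpr hcRhalf), hsumR]
  · rw [hDPR]
    nlinarith [mul_nonneg hdR0 hcR0, mul_nonneg hdR0 (sub_nonneg.mpr hcRhalf), hsumR, hdRε]
end

section
/- In the two-component symmetric univariate Gaussian mixture transfer setting with ε ∈ (0,1/2], define SNR := μ²/(2σ²) and α := log(1/ε)/(4·SNR). There exists a universal constant C₀ > 0 such that, for all instances with μ/σ ≥ 1, inf_{λ ≥ 0} E ℓ(Ž^λ_0, Z*_0) ≤ C₀·exp(−SNR·min{(1+α)², 2}). -/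
open MeasureTheory ProbabilityTheory Real

/-- The normalized Hamming distance `ℓ(Z,Z') = (1/n) ∑_i 1{Z_i ≠ Z'_i}`. -/
noncomputable def hamDist {α : Type*} [DecidableEq α] {n : ℕ} (Z Z' : Fin n → α) : ℝ :=
  (∑ i, if Z i ≠ Z' i then (1 : ℝ) else 0) / n

/-- Per-coordinate transfer clustering argmin property. -/
def IsTCmin (μ σ lam x0 x1 u v : ℝ) : Prop :=
  (u = 1 ∨ u = -1) ∧ (v = 1 ∨ v = -1) ∧
  ∀ u' v' : ℝ, (u' = 1 ∨ u' = -1) → (v' = 1 ∨ v' = -1) →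
    -μ * (u * x0 + v * x1) + lam * σ ^ 2 * (if u ≠ v then (1:ℝ) else 0) ≤
    -μ * (u' * x0 + v' * x1) + lam * σ ^ 2 * (if u' ≠ v' then (1:ℝ) else 0)

namespace TCAux

lemma gauss_pdf_shift (t x : ℝ) :
    rexp (t * x) * gaussianPDFReal 0 1 x = rexp (t ^ 2 / 2) * gaussianPDFReal t 1 x := by
  simp only [gaussianPDFReal, NNReal.coe_one, mul_one]
  rw [mul_left_comm, mul_left_comm (rexp (t ^ 2 / 2))]
  congr 1
  rw [← Real.exp_add, ← Real.exp_add]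
  congr 1
  ring

lemma gauss_integrable_exp (t : ℝ) :
    Integrable (fun x => rexp (t * x)) (gaussianReal 0 1) := by
  rw [gaussianReal_of_var_ne_zero 0 one_ne_zero]
  rw [integrable_withDensity_iff (measurable_gaussianPDF 0 1)
    (Filter.Eventually.of_forall fun x => ENNReal.ofReal_lt_top)]
  have : (fun x => rexp (t * x) * (gaussianPDF 0 1 x).toReal)
      = fun x => rexp (t ^ 2 / 2) * gaussianPDFReal t 1 x := by
    funext x
    rw [gaussianPDF, ENNReal.toReal_ofReal (gaussianPDFReal_nonneg 0 1 x), gauss_pdf_shift]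
  rw [this]
  exact (integrable_gaussianPDFReal t 1).const_mul _

lemma gauss_integral_exp (t : ℝ) :
    ∫ x, rexp (t * x) ∂(gaussianReal 0 1) = rexp (t ^ 2 / 2) := by
  have hpdf : gaussianPDF 0 1 = fun x => (((gaussianPDFReal 0 1 x).toNNReal : NNReal) : ENNReal) :=
    rfl
  rw [gaussianReal_of_var_ne_zero 0 one_ne_zero, hpdf,
    integral_withDensity_eq_integral_smul
      (measurable_gaussianPDFReal 0 1).real_toNNReal _]
  have : (fun x => ((gaussianPDFReal 0 1 x).toNNReal : NNReal)
      • rexp (t * x)) = fun x => rexp (t ^ 2 / 2) * gaussianPDFReal t 1 x := by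
    funext x
    rw [NNReal.smul_def, Real.coe_toNNReal _ (gaussianPDFReal_nonneg 0 1 x), smul_eq_mul,
      mul_comm (gaussianPDFReal 0 1 x), gauss_pdf_shift]
  rw [this, integral_const_mul, integral_gaussianPDFReal_eq_one t one_ne_zero, mul_one]

variable {Ω : Type*} [MeasurableSpace Ω] {P : Measure Ω} [IsProbabilityMeasure P]

omit [IsProbabilityMeasure P] in
lemma integrable_exp_std {V : Ω → ℝ} (hm : Measurable V)
    (hd : P.map V = gaussianReal 0 1) (t : ℝ) :
    Integrable (fun ω => rexp (t * V ω)) P := by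
  have h := gauss_integrable_exp t
  rw [← hd] at h
  exact (integrable_map_measure
    (by fun_prop : Measurable fun x => rexp (t * x)).aestronglyMeasurable
    hm.aemeasurable).mp h

omit [IsProbabilityMeasure P] in
lemma mgf_std {V : Ω → ℝ} (hm : Measurable V)
    (hd : P.map V = gaussianReal 0 1) (t : ℝ) :
    mgf V P t = rexp (t ^ 2 / 2) := by
  rw [mgf, ← integral_map hm.aemeasurable
    (by fun_prop : Measurable fun x => rexp (t * x)).aestronglyMeasurable, hd,
    gauss_integral_exp]

lemma chernoff_tail {X : Ω → ℝ} {c : ℝ} (hc : 0 < c)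
    (hInt : ∀ s : ℝ, Integrable (fun ω => rexp (s * X ω)) P)
    (hmgf : ∀ s : ℝ, mgf X P s = rexp (c * s ^ 2 / 2)) {t : ℝ} (ht : 0 ≤ t) :
    P {ω | t ≤ X ω} ≤ ENNReal.ofReal (rexp (-(t ^ 2 / (2 * c)))) := by
  have h := measure_ge_le_exp_mul_mgf (X := X) (μ := P) t
    (div_nonneg ht hc.le) (hInt (t / c))
  rw [hmgf (t / c)] at h
  have heq : rexp (-(t / c) * t) * rexp (c * (t / c) ^ 2 / 2) = rexp (-(t ^ 2 / (2 * c))) := by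
    rw [← Real.exp_add]
    congr 1
    field_simp
    ring
  rw [heq] at h
  calc P {ω | t ≤ X ω} = ENNReal.ofReal (P {ω | t ≤ X ω}).toReal :=
        (ENNReal.ofReal_toReal (measure_ne_top P _)).symm
    _ ≤ ENNReal.ofReal (rexp (-(t ^ 2 / (2 * c)))) := ENNReal.ofReal_le_ofReal h

lemma chernoff_abs {X : Ω → ℝ} {c : ℝ} (hc : 0 < c)
    (hInt : ∀ s : ℝ, Integrable (fun ω => rexp (s * X ω)) P)
    (hmgf : ∀ s : ℝ, mgf X P s = rexp (c * s ^ 2 / 2)) {t : ℝ} (ht : 0 ≤ t) :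
    P {ω | t ≤ |X ω|} ≤ ENNReal.ofReal (2 * rexp (-(t ^ 2 / (2 * c)))) := by
  have hInt' : ∀ s : ℝ, Integrable (fun ω => rexp (s * (-X) ω)) P := by
    intro s
    simpa [mul_neg, neg_mul] using hInt (-s)
  have hmgf' : ∀ s : ℝ, mgf (-X) P s = rexp (c * s ^ 2 / 2) := by
    intro s
    rw [mgf_neg, hmgf, neg_pow]
    norm_num
  have hsub : {ω | t ≤ |X ω|} ⊆ {ω | t ≤ X ω} ∪ {ω | t ≤ (-X) ω} := by
    intro ω hω
    simp only [Set.mem_setOf_eq] at hω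
    rcases le_abs.mp hω with h | h
    · exact Or.inl h
    · exact Or.inr h
  calc P {ω | t ≤ |X ω|} ≤ P ({ω | t ≤ X ω} ∪ {ω | t ≤ (-X) ω}) := measure_mono hsub
    _ ≤ P {ω | t ≤ X ω} + P {ω | t ≤ (-X) ω} := measure_union_le _ _
    _ ≤ ENNReal.ofReal (rexp (-(t ^ 2 / (2 * c)))) + ENNReal.ofReal (rexp (-(t ^ 2 / (2 * c)))) :=
        add_le_add (chernoff_tail hc hInt hmgf ht) (chernoff_tail hc hInt' hmgf' ht)
    _ = ENNReal.ofReal (2 * rexp (-(t ^ 2 / (2 * c)))) := by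
        rw [show (2:ℝ) * rexp (-(t ^ 2 / (2 * c)))
            = rexp (-(t ^ 2 / (2 * c))) + rexp (-(t ^ 2 / (2 * c))) by ring,
          ENNReal.ofReal_add (Real.exp_nonneg _) (Real.exp_nonneg _)]

lemma tcmin_err {μ σ lam x0 x1 u v z : ℝ} (hμ : 0 < μ) (hτ : 0 ≤ lam * σ ^ 2)
    (h : IsTCmin μ σ lam x0 x1 u v) (hz : z = 1 ∨ z = -1) (hne : u ≠ z) :
    μ * (z * x0) ≤ lam * σ ^ 2 / 2 ∧
      (z * (x0 + x1) ≤ 0 ∨ μ * (z * x0) ≤ -(lam * σ ^ 2 / 2)) := by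
  obtain ⟨hu, hv, hmin⟩ := h
  rcases hz with rfl | rfl
  · have hu' : u = -1 := by rcases hu with h | h; exact absurd h hne; exact h
    subst hu'
    rcases hv with rfl | rfl
    · have h1 := hmin 1 1 (Or.inl rfl) (Or.inl rfl)
      norm_num at h1
      constructor
      · nlinarith
      · right; nlinarith
    · have h1 := hmin 1 1 (Or.inl rfl) (Or.inl rfl)
      have h2 := hmin 1 (-1) (Or.inl rfl) (Or.inr rfl)
      norm_num at h1 h2
      constructor
      · nlinarith
      · left; nlinarith
  · have hu' : u = 1 := by rcases hu with h | h; exact h; exact absurd h hne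
    subst hu'
    rcases hv with rfl | rfl
    · have h1 := hmin (-1) (-1) (Or.inr rfl) (Or.inr rfl)
      have h2 := hmin (-1) 1 (Or.inr rfl) (Or.inl rfl)
      norm_num at h1 h2
      constructor
      · nlinarith
      · left; nlinarith
    · have h1 := hmin (-1) (-1) (Or.inr rfl) (Or.inr rfl)
      norm_num at h1
      constructor
      · nlinarith
      · right; nlinarith

end TCAux

open TCAux in
set_option maxHeartbeats 1000000 in
/-- **Theorem (oracle rate of transfer clustering).**  With `SNR = μ²/(2σ²)` and
`α = log(1/ε)/(4 SNR)`, there is a universal constant `C₀ > 0` such that for every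
instance with `μ/σ ≥ 1`,
`inf_{λ ≥ 0} E ℓ(Ž^λ_0, Z*_0) ≤ C₀ exp(−SNR · min{(1+α)², 2})`. -/
theorem stmt2 :
    ∃ C₀ : ℝ, 0 < C₀ ∧
      ∀ (Ω : Type) [MeasurableSpace Ω] (P : Measure Ω) [IsProbabilityMeasure P]
        (n : ℕ), 0 < n →
      ∀ (μ σ ε : ℝ), 1 ≤ μ / σ → 0 < σ → 0 < ε → ε ≤ 1 / 2 →
      ∀ (Z0 Z1 V0 V1 : Fin n → Ω → ℝ),
        (∀ i, Measurable (Z0 i)) → (∀ i, Measurable (Z1 i)) →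
        (∀ i, Measurable (V0 i)) → (∀ i, Measurable (V1 i)) →
        (∀ i ω, Z0 i ω = 1 ∨ Z0 i ω = -1) →
        (∀ i ω, Z1 i ω = 1 ∨ Z1 i ω = -1) →
        (∀ i, P.map (Z0 i) = radMeasure) →
        iIndepFun (fun i ω => (Z0 i ω, Z1 i ω)) P →
        (∀ i, P {ω | Z1 i ω ≠ Z0 i ω} ≤ ENNReal.ofReal ε) →
      ∀ (hVd : ∀ j : Fin n ⊕ Fin n, P.map (Sum.elim V0 V1 j) = gaussianReal 0 1),
        iIndepFun (Sum.elim V0 V1) P →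
        IndepFun (fun ω => (fun i => Z0 i ω, fun i => Z1 i ω))
          (fun ω => (fun i => V0 i ω, fun i => V1 i ω)) P →
      -- a family of transfer clustering estimators, one for each penalty λ ≥ 0
      ∀ (Zc0 Zc1 : ℝ → Fin n → Ω → ℝ),
        (∀ lam i, Measurable (Zc0 lam i)) →
        (∀ lam : ℝ, 0 ≤ lam → ∀ i ω,
          IsTCmin μ σ lam (μ * Z0 i ω + σ * V0 i ω) (μ * Z1 i ω + σ * V1 i ω)
            (Zc0 lam i ω) (Zc1 lam i ω)) →
        (⨅ lam : {l : ℝ // 0 ≤ l},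
            ∫ ω, hamDist (fun i => Zc0 lam.1 i ω) (fun i => Z0 i ω) ∂P)
          ≤ C₀ * Real.exp (-(μ ^ 2 / (2 * σ ^ 2) *
              min ((1 + Real.log (1 / ε) / (4 * (μ ^ 2 / (2 * σ ^ 2)))) ^ 2) 2)) := by
  refine ⟨6, by norm_num, ?_⟩
  intro Ω _ P _ n hn μ σ ε hμσ hσ hε hε1 Z0 Z1 V0 V1 hZ0m hZ1m hV0m hV1m hZ0v hZ1v hZ0d
    hZind hmis hVd hVind hZV Zc0 Zc1 hZcm hTC
  have hμ : 0 < μ := by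
    have h1 : σ ≤ μ := (one_le_div hσ).mp hμσ
    linarith
  set SNR := μ ^ 2 / (2 * σ ^ 2) with hSNRdef
  have hSNR : 0 < SNR := by positivity
  set α := Real.log (1 / ε) / (4 * SNR) with hαdef
  have hlog : 0 < Real.log (1 / ε) := Real.log_pos (by rw [lt_div_iff₀ hε]; linarith)
  have hα : 0 < α := by positivity
  set Emin := Real.exp (-(SNR * min ((1 + α) ^ 2) 2)) with hEdef
  have hE0 : 0 < Emin := Real.exp_pos _
  set lamstar : ℝ := 2 * α * μ ^ 2 / σ ^ 2 with hlamdef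
  have hlam : 0 ≤ lamstar := by positivity
  have hτ : lamstar * σ ^ 2 = 2 * α * μ ^ 2 := by
    rw [hlamdef]; field_simp
  have hlogε : Real.log (1 / ε) = 4 * SNR * α := by
    rw [hαdef]; field_simp
  -- per-coordinate bound
  have key : ∀ i, (P {ω | Zc0 lamstar i ω ≠ Z0 i ω}).toReal ≤ 6 * Emin := by
    intro i
    have hV0d : P.map (V0 i) = gaussianReal 0 1 := hVd (Sum.inl i)
    have hV1d : P.map (V1 i) = gaussianReal 0 1 := hVd (Sum.inr i)
    have hint0 : ∀ s : ℝ, Integrable (fun ω => rexp (s * V0 i ω)) P :=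
      integrable_exp_std (hV0m i) hV0d
    have hint1 : ∀ s : ℝ, Integrable (fun ω => rexp (s * V1 i ω)) P :=
      integrable_exp_std (hV1m i) hV1d
    have hmgf0 : ∀ s : ℝ, mgf (V0 i) P s = rexp (1 * s ^ 2 / 2) := fun s => by
      rw [mgf_std (hV0m i) hV0d, one_mul]
    have hIndV : IndepFun (V0 i) (V1 i) P :=
      hVind.indepFun (show (Sum.inl i : Fin n ⊕ Fin n) ≠ Sum.inr i by simp)
    have hintS : ∀ s : ℝ, Integrable (fun ω => rexp (s * (V0 i + V1 i) ω)) P := fun s =>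
      hIndV.integrable_exp_mul_add (hint0 s) (hint1 s)
    have hmgfS : ∀ s : ℝ, mgf (V0 i + V1 i) P s = rexp (2 * s ^ 2 / 2) := fun s => by
      rw [hIndV.mgf_add (hint0 s).aestronglyMeasurable (hint1 s).aestronglyMeasurable,
        mgf_std (hV0m i) hV0d, mgf_std (hV1m i) hV1d, ← Real.exp_add]
      congr 1; ring
    set A := {ω | 2 * (μ / σ) ≤ |(V0 i + V1 i) ω|} with hAdef
    set B := {ω | Z1 i ω ≠ Z0 i ω} with hBdef
    set D := {ω | (1 - α) * (μ / σ) ≤ |V0 i ω|} with hDdef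
    set C := {ω | (1 + α) * (μ / σ) ≤ |V0 i ω|} with hCdef
    -- inclusion
    have hincl : {ω | Zc0 lamstar i ω ≠ Z0 i ω} ⊆ (A ∪ B ∩ D) ∪ C := by
      intro ω hω
      obtain ⟨h3, h12⟩ := tcmin_err hμ (mul_nonneg hlam (sq_nonneg σ))
        (hTC lamstar hlam i ω) (hZ0v i ω) hω
      rw [hτ] at h3 h12
      simp only [hAdef, hBdef, hDdef, hCdef, Set.mem_union, Set.mem_inter_iff,
        Set.mem_setOf_eq, Pi.add_apply]
      by_cases hB1 : Z1 i ω = Z0 i ω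
      · rcases h12 with h1 | h2
        · left; left
          rw [hB1] at h1
          rw [show (2:ℝ) * (μ / σ) = 2 * μ / σ by ring, div_le_iff₀ hσ]
          rcases hZ0v i ω with hz | hz <;> rw [hz] at h1
          · linarith [mul_le_mul_of_nonneg_left (neg_abs_le (V0 i ω + V1 i ω)) hσ.le]
          · linarith [mul_le_mul_of_nonneg_left (le_abs_self (V0 i ω + V1 i ω)) hσ.le]
        · right
          rw [show ((1:ℝ) + α) * (μ / σ) = (1 + α) * μ / σ by ring, div_le_iff₀ hσ]
          rcases hZ0v i ω with hz | hz <;> rw [hz] at h2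
          · nlinarith [mul_le_mul_of_nonneg_left (neg_abs_le (V0 i ω))
                (mul_nonneg hμ.le hσ.le), hμ, hσ]
          · nlinarith [mul_le_mul_of_nonneg_left (le_abs_self (V0 i ω))
                (mul_nonneg hμ.le hσ.le), hμ, hσ]
      · left; right
        refine ⟨hB1, ?_⟩
        rw [show ((1:ℝ) - α) * (μ / σ) = (1 - α) * μ / σ by ring, div_le_iff₀ hσ]
        rcases hZ0v i ω with hz | hz <;> rw [hz] at h3
        · nlinarith [mul_le_mul_of_nonneg_left (neg_abs_le (V0 i ω))
              (mul_nonneg hμ.le hσ.le), hμ, hσ]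
        · nlinarith [mul_le_mul_of_nonneg_left (le_abs_self (V0 i ω))
              (mul_nonneg hμ.le hσ.le), hμ, hσ]
    -- bound for A
    have hA : P A ≤ ENNReal.ofReal (2 * Emin) := by
      have ht : (0:ℝ) ≤ 2 * (μ / σ) := by positivity
      refine (chernoff_abs two_pos hintS hmgfS ht).trans (ENNReal.ofReal_le_ofReal ?_)
      have : rexp (-((2 * (μ / σ)) ^ 2 / (2 * 2))) ≤ Emin := by
        rw [hEdef]
        apply Real.exp_le_exp.mpr
        have h1 : SNR * min ((1 + α) ^ 2) 2 ≤ SNR * 2 :=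
          mul_le_mul_of_nonneg_left (min_le_right _ _) hSNR.le
        have h2 : SNR * 2 = (2 * (μ / σ)) ^ 2 / (2 * 2) := by
          rw [hSNRdef]; field_simp
        linarith
      linarith
    -- bound for C
    have hC : P C ≤ ENNReal.ofReal (2 * Emin) := by
      have ht : (0:ℝ) ≤ (1 + α) * (μ / σ) := by positivity
      refine (chernoff_abs one_pos hint0 hmgf0 ht).trans (ENNReal.ofReal_le_ofReal ?_)
      have : rexp (-(((1 + α) * (μ / σ)) ^ 2 / (2 * 1))) ≤ Emin := by
        rw [hEdef]
        apply Real.exp_le_exp.mpr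
        have h1 : SNR * min ((1 + α) ^ 2) 2 ≤ SNR * (1 + α) ^ 2 :=
          mul_le_mul_of_nonneg_left (min_le_left _ _) hSNR.le
        have h2 : SNR * (1 + α) ^ 2 = ((1 + α) * (μ / σ)) ^ 2 / (2 * 1) := by
          rw [hSNRdef]; field_simp
        linarith
      linarith
    -- bound for B ∩ D
    have hεexp : ε = rexp (-(4 * SNR * α)) := by
      rw [← hlogε]
      rw [show Real.log (1 / ε) = -Real.log ε by rw [one_div, Real.log_inv], neg_neg,
        Real.exp_log hε]
    have hBD : P (B ∩ D) ≤ ENNReal.ofReal (2 * Emin) := by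
      by_cases hα1 : α ≤ 1
      · -- independence splitting
        have hmeasS : MeasurableSet {p : (Fin n → ℝ) × (Fin n → ℝ) | p.2 i = p.1 i} :=
          measurableSet_eq_fun (by fun_prop) (by fun_prop)
        have hmeasT : MeasurableSet
            {p : (Fin n → ℝ) × (Fin n → ℝ) | (1 - α) * (μ / σ) ≤ |p.1 i|} :=
          measurableSet_le measurable_const (by fun_prop)
        have hprod := hZV.measure_inter_preimage_eq_mul _ _ hmeasS.compl hmeasT
        have eB : (fun ω => (fun i => Z0 i ω, fun i => Z1 i ω)) ⁻¹'
            {p : (Fin n → ℝ) × (Fin n → ℝ) | p.2 i = p.1 i}ᶜ = B :=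
          Set.ext fun ω => Iff.rfl
        have eD : (fun ω => (fun i => V0 i ω, fun i => V1 i ω)) ⁻¹'
            {p : (Fin n → ℝ) × (Fin n → ℝ) | (1 - α) * (μ / σ) ≤ |p.1 i|} = D :=
          Set.ext fun ω => Iff.rfl
        rw [eB, eD] at hprod
        rw [hprod]
        have hPB : P B ≤ ENNReal.ofReal ε := hmis i
        have ht3 : (0:ℝ) ≤ (1 - α) * (μ / σ) := by
          apply mul_nonneg (by linarith) (by positivity)
        have hPD : P D ≤ ENNReal.ofReal (2 * rexp (-(((1 - α) * (μ / σ)) ^ 2 / (2 * 1)))) :=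
          chernoff_abs one_pos hint0 hmgf0 ht3
        refine (mul_le_mul' hPB hPD).trans ?_
        rw [← ENNReal.ofReal_mul hε.le]
        apply ENNReal.ofReal_le_ofReal
        rw [hεexp, hEdef]
        rw [show rexp (-(4 * SNR * α)) * (2 * rexp (-(((1 - α) * (μ / σ)) ^ 2 / (2 * 1))))
            = 2 * rexp (-(4 * SNR * α) + -(((1 - α) * (μ / σ)) ^ 2 / (2 * 1))) by
          rw [Real.exp_add]; ring]
        have hexps : -(4 * SNR * α) + -(((1 - α) * (μ / σ)) ^ 2 / (2 * 1))
            ≤ -(SNR * min ((1 + α) ^ 2) 2) := by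
          have h1 : SNR * min ((1 + α) ^ 2) 2 ≤ SNR * (1 + α) ^ 2 :=
            mul_le_mul_of_nonneg_left (min_le_left _ _) hSNR.le
          have h2 : ((1 - α) * (μ / σ)) ^ 2 / (2 * 1) = SNR * (1 - α) ^ 2 := by
            rw [hSNRdef]; field_simp
          have h3 : SNR * (1 + α) ^ 2 = 4 * SNR * α + SNR * (1 - α) ^ 2 := by ring
          linarith
        have := Real.exp_le_exp.mpr hexps
        linarith
      · -- α > 1 : crude bound via ε
        refine (measure_mono Set.inter_subset_left).trans ((hmis i).trans ?_)
        apply ENNReal.ofReal_le_ofReal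
        rw [hεexp, hEdef]
        have hexps : -(4 * SNR * α) ≤ -(SNR * min ((1 + α) ^ 2) 2) := by
          have h1 : SNR * min ((1 + α) ^ 2) 2 ≤ SNR * 2 :=
            mul_le_mul_of_nonneg_left (min_le_right _ _) hSNR.le
          nlinarith
        have := Real.exp_le_exp.mpr hexps
        linarith
    -- combine
    have htot : P {ω | Zc0 lamstar i ω ≠ Z0 i ω} ≤ ENNReal.ofReal (6 * Emin) := by
      calc P {ω | Zc0 lamstar i ω ≠ Z0 i ω} ≤ P ((A ∪ B ∩ D) ∪ C) := measure_mono hincl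
        _ ≤ P (A ∪ B ∩ D) + P C := measure_union_le _ _
        _ ≤ (P A + P (B ∩ D)) + P C := add_le_add_left (measure_union_le _ _) _
        _ ≤ (ENNReal.ofReal (2 * Emin) + ENNReal.ofReal (2 * Emin))
              + ENNReal.ofReal (2 * Emin) := add_le_add (add_le_add hA hBD) hC
        _ = ENNReal.ofReal (6 * Emin) := by
            rw [← ENNReal.ofReal_add (by positivity) (by positivity),
              ← ENNReal.ofReal_add (by positivity) (by positivity)]
            congr 1
            ring
    exact ENNReal.toReal_le_of_le_ofReal (by positivity) htot
  -- measurability and integrability of indicators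
  have hErrm : ∀ i, MeasurableSet {ω | Zc0 lamstar i ω ≠ Z0 i ω} := fun i =>
    (measurableSet_eq_fun (hZcm lamstar i) (hZ0m i)).compl
  have hindic : ∀ i, (fun ω => if Zc0 lamstar i ω ≠ Z0 i ω then (1:ℝ) else 0)
      = Set.indicator {ω | Zc0 lamstar i ω ≠ Z0 i ω} (fun _ => (1:ℝ)) := by
    intro i
    funext ω
    by_cases h : Zc0 lamstar i ω ≠ Z0 i ω <;> simp [Set.indicator, h]
  have hInt : ∀ i, Integrable (fun ω => if Zc0 lamstar i ω ≠ Z0 i ω then (1:ℝ) else 0) P := by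
    intro i
    rw [hindic i]
    exact (integrable_const 1).indicator (hErrm i)
  have hintegral : ∫ ω, hamDist (fun j => Zc0 lamstar j ω) (fun j => Z0 j ω) ∂P
      = (∑ i, (P {ω | Zc0 lamstar i ω ≠ Z0 i ω}).toReal) / n := by
    simp only [hamDist]
    rw [integral_div, integral_finset_sum _ (fun i _ => hInt i)]
    congr 1
    refine Finset.sum_congr rfl fun i _ => ?_
    rw [hindic i, integral_indicator (hErrm i), setIntegral_const, smul_eq_mul, mul_one, measureReal_def]
  -- value at lamstar
  have hval : ∫ ω, hamDist (fun j => Zc0 lamstar j ω) (fun j => Z0 j ω) ∂P ≤ 6 * Emin := by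
    rw [hintegral]
    have hn' : (0:ℝ) < n := Nat.cast_pos.mpr hn
    rw [div_le_iff₀ hn']
    calc (∑ i, (P {ω | Zc0 lamstar i ω ≠ Z0 i ω}).toReal)
        ≤ ∑ _i : Fin n, 6 * Emin := Finset.sum_le_sum fun i _ => key i
      _ = n * (6 * Emin) := by
          rw [Finset.sum_const, Finset.card_univ, Fintype.card_fin, nsmul_eq_mul]
      _ = 6 * Emin * n := by ring
  -- infimum over lam
  have hnonneg : ∀ lam : {l : ℝ // 0 ≤ l},
      0 ≤ ∫ ω, hamDist (fun j => Zc0 lam.1 j ω) (fun j => Z0 j ω) ∂P := by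
    intro lam
    refine integral_nonneg fun ω => ?_
    unfold hamDist
    apply div_nonneg _ (Nat.cast_nonneg n)
    refine Finset.sum_nonneg fun i _ => ?_
    split <;> norm_num
  refine le_trans (ciInf_le ⟨0, ?_⟩ (⟨lamstar, hlam⟩ : {l : ℝ // 0 ≤ l})) hval
  rintro x ⟨lam, rfl⟩
  exact hnonneg lam
end

section
/- Oracle inequality for the Goldenshluger–Lepski selection rule: let Λ be a finite set of penalty values, ψ̂ : Λ → [0,∞) any (possibly random) function, and let λ̂ ∈ argmin_{λ ∈ Λ}{φ̂(λ) + ψ̂(λ)} where φ̂(λ) := max_{λ' ∈ Λ, λ' < λ}[𝔇(Ẑ^λ_0, Ẑ^{λ'}_0) − ψ̂(λ')]_+. Suppose there is a deterministic non-decreasing function φ on Λ such that P(𝔇(Ẑ^λ_0, Z̄^λ_0) ≤ φ(λ) for all λ ∈ Λ) ≥ 1 − ζ. Then with probability at least 1 − ζ, 𝔇(Ẑ^{λ̂}_0, Z̄^∞_0) ≤ 4·min_{λ ∈ Λ}{φ(λ) + ψ̂(λ)} + 3·ξ_{ψ̂}, where ξ_{ψ̂} := max_{λ ∈ Λ}[𝔇(Z̄^λ_0,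 Z̄^∞_0) − ψ̂(λ)]_+. -/
open MeasureTheory ProbabilityTheory Real

/-- Goldenshluger–Lepski bias proxy
`φ̂(λ) = max_{λ' ∈ Λ, λ' < λ} [dist(λ, λ') − ψ̂(λ')]₊` (an empty maximum is `0`). -/
noncomputable def glPhiHat {Ω : Type*} {M : ℕ} (Λ : Fin M → ℝ)
    (dist : Fin M → Fin M → Ω → ℝ) (ψ : Fin M → Ω → ℝ) (k : Fin M) (ω : Ω) : ℝ :=
  (((Finset.univ.filter fun j => Λ j < Λ k).sup
      fun j => Real.toNNReal (dist k j ω - ψ j ω)) : NNReal)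

lemma hamDist_nonneg {α : Type*} [DecidableEq α] {n : ℕ} (Z Z' : Fin n → α) :
    0 ≤ hamDist Z Z' := by
  apply div_nonneg _ (Nat.cast_nonneg n)
  exact Finset.sum_nonneg fun i _ => by positivity

lemma hamDist_comm {α : Type*} [DecidableEq α] {n : ℕ} (Z Z' : Fin n → α) :
    hamDist Z Z' = hamDist Z' Z := by
  unfold hamDist
  congr 1
  refine Finset.sum_congr rfl fun i _ => ?_
  simp [ne_comm]

lemma hamDist_triangle {α : Type*} [DecidableEq α] {n : ℕ} (X Y Z : Fin n → α) :
    hamDist X Z ≤ hamDist X Y + hamDist Y Z := by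
  unfold hamDist
  rw [← add_div]
  apply div_le_div_of_nonneg_right ?_ (Nat.cast_nonneg n)
  · rw [← Finset.sum_add_distrib]
    refine Finset.sum_le_sum fun i _ => ?_
    by_cases hxz : X i ≠ Z i
    · by_cases hxy : X i ≠ Y i
      · simp only [if_pos hxz, if_pos hxy]
        have : (0:ℝ) ≤ if Y i ≠ Z i then (1:ℝ) else 0 := by positivity
        linarith
      · push_neg at hxy
        have hyz : Y i ≠ Z i := hxy ▸ hxz
        simp only [if_pos hxz, if_pos hyz]
        have : (0:ℝ) ≤ if X i ≠ Y i then (1:ℝ) else 0 := by positivity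
        linarith
    · simp only [if_neg hxz]
      have h1 : (0:ℝ) ≤ if X i ≠ Y i then (1:ℝ) else 0 := by positivity
      have h2 : (0:ℝ) ≤ if Y i ≠ Z i then (1:ℝ) else 0 := by positivity
      linarith

/-- **Lemma (oracle inequality for the Goldenshluger–Lepski method).**
If `P(𝔇(Ẑ^λ₀, Z̄^λ₀) ≤ φ(λ) ∀λ ∈ Λ) ≥ 1 − ζ` with `φ` non-decreasing, then with
probability at least `1 − ζ`,
`𝔇(Ẑ^{λ̂}₀, Z̄^∞₀) ≤ 4 min_{λ ∈ Λ} {φ(λ) + ψ̂(λ)} + 3 ξ_{ψ̂}` where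
`ξ_{ψ̂} = max_{λ ∈ Λ} [𝔇(Z̄^λ₀, Z̄^∞₀) − ψ̂(λ)]₊`. -/
theorem stmt7
    {Ω : Type*} [MeasurableSpace Ω] (P : Measure Ω) [IsProbabilityMeasure P]
    (n K M : ℕ) (hn : 0 < n) (hK : 0 < K) (hM : 0 < M)
    (Λ : Fin M → ℝ) (hΛ : StrictMono Λ)
    -- estimators Ẑ^λ₀, oracle estimators Z̄^λ₀ and Z̄^∞₀ (arbitrary random label vectors)
    (Zhat Zbar : Fin M → Ω → Fin n → Fin K) (Zbarinf : Ω → Fin n → Fin K)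
    -- an arbitrary (possibly random) nonnegative function ψ̂ on Λ
    (ψ : Fin M → Ω → ℝ) (hψ : ∀ k ω, 0 ≤ ψ k ω)
    -- the Goldenshluger–Lepski selection rule
    (lamHat : Ω → Fin M)
    (hsel : ∀ ω k,
      glPhiHat Λ (fun k j ω' => hamDist (Zhat k ω') (Zhat j ω')) ψ (lamHat ω) ω
          + ψ (lamHat ω) ω
        ≤ glPhiHat Λ (fun k j ω' => hamDist (Zhat k ω') (Zhat j ω')) ψ k ω + ψ k ω)
    -- deterministic, non-decreasing bias bound φ holding uniformly w.h.p.
    (φ : Fin M → ℝ) (hmono : Monotone φ) (ζ : ℝ) (hζ0 : 0 < ζ) (hζ1 : ζ < 1)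
    (hφ : ENNReal.ofReal (1 - ζ)
        ≤ P {ω | ∀ k, hamDist (Zhat k ω) (Zbar k ω) ≤ φ k}) :
    ENNReal.ofReal (1 - ζ)
      ≤ P {ω | hamDist (Zhat (lamHat ω) ω) (Zbarinf ω)
            ≤ 4 * (⨅ k : Fin M, (φ k + ψ k ω))
              + 3 * ((Finset.univ.sup
                  fun k => Real.toNNReal (hamDist (Zbar k ω) (Zbarinf ω) - ψ k ω) : NNReal)
                  : ℝ)} := by
  refine le_trans hφ (measure_mono ?_)
  intro ω hω
  simp only [Set.mem_setOf_eq] at hω ⊢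
  -- notation
  set D := fun (A B : Fin n → Fin K) => hamDist A B with hD
  set ξ : ℝ := ((Finset.univ.sup
      fun k => Real.toNNReal (hamDist (Zbar k ω) (Zbarinf ω) - ψ k ω) : NNReal) : ℝ) with hξdef
  set Φ : Fin M → ℝ := fun k =>
    glPhiHat Λ (fun k j ω' => hamDist (Zhat k ω') (Zhat j ω')) ψ k ω with hΦdef
  have hξ0 : 0 ≤ ξ := NNReal.coe_nonneg _
  have hΦ0 : ∀ k, 0 ≤ Φ k := fun k => NNReal.coe_nonneg _
  have hφ0 : ∀ k, 0 ≤ φ k := fun k => le_trans (hamDist_nonneg _ _) (hω k)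
  -- ξ controls D(Zbar k, Zbarinf)
  have hξb : ∀ k, hamDist (Zbar k ω) (Zbarinf ω) ≤ ψ k ω + ξ := by
    intro k
    have h1 : hamDist (Zbar k ω) (Zbarinf ω) - ψ k ω
        ≤ ((Real.toNNReal (hamDist (Zbar k ω) (Zbarinf ω) - ψ k ω) : NNReal) : ℝ) :=
      Real.le_coe_toNNReal _
    have h2 : (Real.toNNReal (hamDist (Zbar k ω) (Zbarinf ω) - ψ k ω) : NNReal)
        ≤ (Finset.univ.sup
            fun k => Real.toNNReal (hamDist (Zbar k ω) (Zbarinf ω) - ψ k ω)) :=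
      Finset.le_sup (f := fun k => Real.toNNReal (hamDist (Zbar k ω) (Zbarinf ω) - ψ k ω))
        (Finset.mem_univ k)
    have := h1.trans (NNReal.coe_le_coe.mpr h2)
    linarith
  -- uniform bound on Φ k
  have hΦb : ∀ k, Φ k ≤ 2 * φ k + ψ k ω + 2 * ξ := by
    intro k
    have hB : 0 ≤ 2 * φ k + ψ k ω + 2 * ξ := by
      have := hψ k ω; have := hφ0 k; linarith
    rw [hΦdef]
    show ((_ : NNReal) : ℝ) ≤ _
    rw [← Real.coe_toNNReal _ hB, NNReal.coe_le_coe]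
    apply Finset.sup_le
    intro j hj
    simp only [Finset.mem_filter, Finset.mem_univ, true_and] at hj
    apply Real.toNNReal_le_toNNReal
    have hjk : j ≤ k := le_of_lt (hΛ.lt_iff_lt.mp hj)
    have t1 : hamDist (Zhat k ω) (Zhat j ω)
        ≤ hamDist (Zhat k ω) (Zbar k ω) + hamDist (Zbar k ω) (Zbarinf ω)
          + hamDist (Zbarinf ω) (Zbar j ω) + hamDist (Zbar j ω) (Zhat j ω) := by
      have a := hamDist_triangle (Zhat k ω) (Zbar k ω) (Zhat j ω)
      have b := hamDist_triangle (Zbar k ω) (Zbarinf ω) (Zhat j ω)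
      have c := hamDist_triangle (Zbarinf ω) (Zbar j ω) (Zhat j ω)
      linarith
    have e1 : hamDist (Zbar j ω) (Zhat j ω) = hamDist (Zhat j ω) (Zbar j ω) :=
      hamDist_comm _ _
    have e2 : hamDist (Zbarinf ω) (Zbar j ω) = hamDist (Zbar j ω) (Zbarinf ω) :=
      hamDist_comm _ _
    have := hω k
    have := hω j
    have := hξb k
    have := hξb j
    have := hmono hjk
    linarith
  -- key deterministic bound for each k
  have key : ∀ k, hamDist (Zhat (lamHat ω) ω) (Zbarinf ω)
      ≤ 4 * (φ k + ψ k ω) + 3 * ξ := by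
    intro k
    set l := lamHat ω with hl
    have hselk : Φ l + ψ l ω ≤ Φ k + ψ k ω := hsel ω k
    rcases le_or_gt (Λ l) (Λ k) with hle | hlt
    · -- Λ l ≤ Λ k : go through Zbar l
      have hlk : l ≤ k := hΛ.le_iff_le.mp hle
      have t : hamDist (Zhat l ω) (Zbarinf ω)
          ≤ hamDist (Zhat l ω) (Zbar l ω) + hamDist (Zbar l ω) (Zbarinf ω) :=
        hamDist_triangle _ _ _
      have h1 := hω l
      have h2 := hξb l
      have h3 : ψ l ω ≤ Φ k + ψ k ω := by have := hΦ0 l; linarith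
      have h4 := hΦb k
      have h5 := hmono hlk
      have := hψ k ω; have := hφ0 k
      linarith
    · -- Λ k < Λ l : use the sup defining Φ l with j = k
      have hmem : k ∈ Finset.univ.filter fun j => Λ j < Λ l := by
        simp [hlt]
      have h1 : hamDist (Zhat l ω) (Zhat k ω) - ψ k ω ≤ Φ l := by
        have a : hamDist (Zhat l ω) (Zhat k ω) - ψ k ω
            ≤ ((Real.toNNReal (hamDist (Zhat l ω) (Zhat k ω) - ψ k ω) : NNReal) : ℝ) :=
          Real.le_coe_toNNReal _
        have b : (Real.toNNReal (hamDist (Zhat l ω) (Zhat k ω) - ψ k ω) : NNReal)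
            ≤ (Finset.univ.filter fun j => Λ j < Λ l).sup
                fun j => Real.toNNReal (hamDist (Zhat l ω) (Zhat j ω) - ψ j ω) :=
          Finset.le_sup
            (f := fun j => Real.toNNReal (hamDist (Zhat l ω) (Zhat j ω) - ψ j ω)) hmem
        exact a.trans (NNReal.coe_le_coe.mpr b)
      have t : hamDist (Zhat l ω) (Zbarinf ω)
          ≤ hamDist (Zhat l ω) (Zhat k ω) + hamDist (Zhat k ω) (Zbar k ω)
            + hamDist (Zbar k ω) (Zbarinf ω) := by
        have a := hamDist_triangle (Zhat l ω) (Zhat k ω) (Zbarinf ω)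
        have b := hamDist_triangle (Zhat k ω) (Zbar k ω) (Zbarinf ω)
        linarith
      have h2 := hω k
      have h3 := hξb k
      have h4 : Φ l ≤ Φ k + ψ k ω := by have := hψ l ω; linarith
      have h5 := hΦb k
      have := hψ k ω; have := hφ0 k
      linarith
  -- pass to the infimum
  have hne : Nonempty (Fin M) := ⟨⟨0, hM⟩⟩
  have hinf : (hamDist (Zhat (lamHat ω) ω) (Zbarinf ω) - 3 * ξ) / 4
      ≤ ⨅ k : Fin M, (φ k + ψ k ω) := by
    apply le_ciInf
    intro k
    have := key k
    linarith
  have := hinf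
  have h4 : (0:ℝ) < 4 := by norm_num
  rw [div_le_iff₀ h4] at this
  have hle : hamDist (Zhat (lamHat ω) ω) (Zbarinf ω)
      ≤ (⨅ k : Fin M, (φ k + ψ k ω)) * 4 + 3 * ξ := by linarith
  linarith [hle]
end

section
/- In the two-component symmetric univariate Gaussian mixture transfer setting with matched-label oracle data, for each i ∈ [n] and each λ ≥ 0, the oracle transfer clustering estimator satisfies P(Z̄^λ_{0,i} ≠ Z*_{0,i}) ≥ max{ Φ(−√2·μ/σ)·(1 − 2Φ(−λ/(√2·μ/σ))), Φ(−μ/σ)² } + Φ(−μ/σ − λ/(2μ/σ))·Φ(μ/σ − λ/(2μ/σ)). -/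
open MeasureTheory ProbabilityTheory Real
open scoped ENNReal NNReal

noncomputable def gs : Measure ℝ := gaussianReal 0 1

instance : IsProbabilityMeasure gs := by unfold gs; infer_instance

lemma gauss_singleton (x : ℝ) : gs {x} = 0 :=
  gaussianReal_absolutelyContinuous 0 one_ne_zero (measure_singleton x)

lemma gauss_map_neg : Measure.map (fun x : ℝ => -x) gs = gs := by
  have h := gaussianReal_map_const_mul (μ := 0) (v := 1) (-1)
  simp only [neg_one_mul, mul_zero] at h
  unfold gs
  rw [h]
  congr 1
  ext
  simp

lemma gauss_Iio (x : ℝ) : gs (Set.Iio x) = gs (Set.Iic x) := by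
  have h : Set.Iic x = Set.Iio x ∪ {x} := by
    ext y; simp [le_iff_lt_or_eq]
  rw [h, measure_union (by simp) (measurableSet_singleton x), gauss_singleton, add_zero]

lemma gauss_symm (x : ℝ) : stdGaussCDF (-x) = 1 - stdGaussCDF x := by
  have h1 : gs (Set.Iic (-x)) = gs (Set.Ici x) := by
    conv_rhs => rw [← gauss_map_neg]
    rw [Measure.map_apply measurable_neg measurableSet_Ici]
    congr 1
    ext y; simp
  have h2 : gs (Set.Ici x) + gs (Set.Iio x) = 1 := by
    rw [← measure_union (by simp [Set.disjoint_left]) measurableSet_Iio]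
    rw [show Set.Ici x ∪ Set.Iio x = Set.univ by ext y; simp [le_or_gt], measure_univ]
  have h3 := gauss_Iio x
  show (gs (Set.Iic (-x))).toReal = 1 - (gs (Set.Iic x)).toReal
  rw [h1]
  have := ENNReal.toReal_add (measure_ne_top gs (Set.Ici x)) (measure_ne_top gs (Set.Iio x))
  rw [h2] at this
  simp only [ENNReal.toReal_one] at this
  rw [h3] at this
  linarith

lemma gauss_mono : Monotone stdGaussCDF := fun x y hxy => by
  unfold stdGaussCDF
  exact ENNReal.toReal_mono (measure_ne_top _ _) (measure_mono (Set.Iic_subset_Iic.mpr hxy))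

lemma gauss_nonneg (x : ℝ) : 0 ≤ stdGaussCDF x := ENNReal.toReal_nonneg

lemma gs_Iic (x : ℝ) : (gs (Set.Iic x)).toReal = stdGaussCDF x := rfl
lemma gs_Iio (x : ℝ) : (gs (Set.Iio x)).toReal = stdGaussCDF x := by rw [gauss_Iio]; rfl
lemma gs_Ici (x : ℝ) : (gs (Set.Ici x)).toReal = stdGaussCDF (-x) := by
  have h1 : gs (Set.Iic (-x)) = gs (Set.Ici x) := by
    conv_rhs => rw [← gauss_map_neg]
    rw [Measure.map_apply measurable_neg measurableSet_Ici]
    congr 1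
    ext y; simp
  rw [← h1]; rfl
lemma gs_Ioo (x y : ℝ) (h : x ≤ y) :
    (gs (Set.Ioo x y)).toReal = stdGaussCDF y - stdGaussCDF x := by
  rcases eq_or_lt_of_le h with rfl | hlt
  · simp
  have h2 : gs (Set.Iic x) + gs (Set.Ioo x y) = gs (Set.Iio y) := by
    rw [← measure_union (by simp [Set.disjoint_left]; intro a ha h1; linarith) measurableSet_Ioo]
    congr 1
    ext z
    simp only [Set.mem_union, Set.mem_Iic, Set.mem_Ioo, Set.mem_Iio]
    constructor
    · rintro (hz | ⟨_, hz⟩)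
      · linarith
      · exact hz
    · intro hz
      rcases le_or_gt z x with h' | h'
      · exact Or.inl h'
      · exact Or.inr ⟨h', hz⟩
  have := ENNReal.toReal_add (measure_ne_top gs (Set.Iic x)) (measure_ne_top gs (Set.Ioo x y))
  rw [h2, gs_Iio] at this
  have e1 : (gs (Set.Iic x)).toReal = stdGaussCDF x := rfl
  rw [e1] at this
  linarith
lemma gs_Ico (x y : ℝ) (h : x ≤ y) :
    (gs (Set.Ico x y)).toReal = stdGaussCDF y - stdGaussCDF x := by
  have h2 : gs (Set.Ico x y) = gs (Set.Ioo x y) := by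
    rcases eq_or_lt_of_le h with rfl | hlt
    · simp
    have : Set.Ico x y = {x} ∪ Set.Ioo x y := by
      ext z
      simp only [Set.mem_Ico, Set.singleton_union, Set.mem_insert_iff, Set.mem_Ioo]
      constructor
      · rintro ⟨h1, h2⟩
        rcases eq_or_lt_of_le h1 with rfl | h1
        · exact Or.inl rfl
        · exact Or.inr ⟨h1, h2⟩
      · rintro (rfl | ⟨h1, h2⟩)
        · exact ⟨le_refl _, hlt⟩
        · exact ⟨le_of_lt h1, h2⟩
    rw [this, measure_union (by simp) measurableSet_Ioo, gauss_singleton, zero_add]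
  rw [h2, gs_Ioo x y h]

noncomputable def rotFun (x : EuclideanSpace ℝ (Fin 2)) : EuclideanSpace ℝ (Fin 2) :=
  WithLp.toLp 2 ![(x 0 + x 1) / Real.sqrt 2, (x 0 - x 1) / Real.sqrt 2]

lemma rotFun_invol (x : EuclideanSpace ℝ (Fin 2)) : rotFun (rotFun x) = x := by
  have h2 : Real.sqrt 2 ≠ 0 := by positivity
  have hsq : Real.sqrt 2 * Real.sqrt 2 = 2 := Real.mul_self_sqrt (by norm_num)
  ext i
  fin_cases i <;>
    simp [rotFun] <;> field_simp <;> ring_nf <;>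
      norm_num

noncomputable def rotIso : EuclideanSpace ℝ (Fin 2) ≃ₗᵢ[ℝ] EuclideanSpace ℝ (Fin 2) where
  toFun := rotFun
  invFun := rotFun
  left_inv := rotFun_invol
  right_inv := rotFun_invol
  map_add' := by
    intro x y
    ext i
    fin_cases i <;> simp [rotFun] <;> ring
  map_smul' := by
    intro c x
    ext i
    fin_cases i <;> simp [rotFun, PiLp.smul_apply, smul_eq_mul] <;> ring
  norm_map' := by
    intro x
    have h2 : (0:ℝ) ≤ 2 := by norm_num
    rw [EuclideanSpace.norm_eq, EuclideanSpace.norm_eq]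
    congr 1
    rw [Fin.sum_univ_two, Fin.sum_univ_two]
    simp only [LinearEquiv.coe_mk, LinearMap.coe_mk, AddHom.coe_mk, rotFun, Matrix.cons_val_zero, Matrix.cons_val_one, Matrix.head_cons,
      Real.norm_eq_abs, sq_abs]
    rw [div_pow, div_pow, Real.sq_sqrt h2]
    ring

noncomputable def Trot (p : ℝ × ℝ) : ℝ × ℝ :=
  ((p.1 + p.2) / Real.sqrt 2, (p.1 - p.2) / Real.sqrt 2)

lemma measurePreserving_Trot :
    MeasurePreserving Trot (volume : Measure (ℝ × ℝ)) volume := by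
  have m1 : MeasurePreserving (⇑(MeasurableEquiv.finTwoArrow (α := ℝ)).symm)
      (volume : Measure (ℝ × ℝ)) volume :=
    MeasurePreserving.symm _ (volume_preserving_finTwoArrow ℝ)
  have m2 : MeasurePreserving (⇑(MeasurableEquiv.toLp 2 (Fin 2 → ℝ)))
      (volume : Measure (Fin 2 → ℝ)) volume :=
    MeasurePreserving.symm _ (EuclideanSpace.volume_preserving_symm_measurableEquiv_toLp (Fin 2))
  have m3 : MeasurePreserving (⇑rotIso)
      (volume : Measure (EuclideanSpace ℝ (Fin 2))) volume := rotIso.measurePreserving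
  have m4 : MeasurePreserving (⇑(MeasurableEquiv.toLp 2 (Fin 2 → ℝ)).symm)
      (volume : Measure (EuclideanSpace ℝ (Fin 2))) volume :=
    EuclideanSpace.volume_preserving_symm_measurableEquiv_toLp (Fin 2)
  have m5 : MeasurePreserving (⇑(MeasurableEquiv.finTwoArrow (α := ℝ)))
      (volume : Measure (Fin 2 → ℝ)) volume := volume_preserving_finTwoArrow ℝ
  have mp := m5.comp (m4.comp (m3.comp (m2.comp m1)))
  have hfun : (⇑(MeasurableEquiv.finTwoArrow (α := ℝ)) ∘
      (⇑(MeasurableEquiv.toLp 2 (Fin 2 → ℝ)).symm ∘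
        (⇑rotIso ∘ (⇑(MeasurableEquiv.toLp 2 (Fin 2 → ℝ)) ∘
          ⇑(MeasurableEquiv.finTwoArrow (α := ℝ)).symm)))) = Trot := by
    funext p
    simp [rotIso, rotFun, Trot]
  rw [hfun] at mp
  exact mp

noncomputable def Fden (p : ℝ × ℝ) : ℝ≥0∞ := gaussianPDF 0 1 p.1 * gaussianPDF 0 1 p.2

lemma Fden_measurable : Measurable Fden :=
  ((measurable_gaussianPDF 0 1).comp measurable_fst).mul
    ((measurable_gaussianPDF 0 1).comp measurable_snd)

lemma gs_prod_eq_withDensity :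
    gs.prod gs = (volume : Measure (ℝ × ℝ)).withDensity Fden := by
  refine (Measure.prod_eq fun s t hs ht => ?_)
  rw [withDensity_apply _ (hs.prod ht), Measure.volume_eq_prod, ← Measure.prod_restrict]
  rw [lintegral_prod _ (Fden_measurable.aemeasurable)]
  have : ∀ x : ℝ, ∫⁻ y in t, Fden (x, y) ∂volume = gaussianPDF 0 1 x * gs t := by
    intro x
    unfold Fden
    simp only
    rw [lintegral_const_mul _ (measurable_gaussianPDF 0 1)]
    unfold gs
    rw [gaussianReal_apply 0 one_ne_zero t]
  simp_rw [this]
  rw [lintegral_mul_const _ (measurable_gaussianPDF 0 1)]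
  unfold gs
  rw [gaussianReal_apply 0 one_ne_zero s]

lemma Fden_Trot (p : ℝ × ℝ) : Fden (Trot p) = Fden p := by
  unfold Fden Trot gaussianPDF
  simp only
  rw [← ENNReal.ofReal_mul (gaussianPDFReal_nonneg _ _ _),
    ← ENNReal.ofReal_mul (gaussianPDFReal_nonneg _ _ _)]
  congr 1
  simp only [gaussianPDFReal, NNReal.coe_one, mul_one, sub_zero]
  have hsq : Real.sqrt 2 ^ 2 = 2 := Real.sq_sqrt (by norm_num)
  have e : rexp (-((p.1 + p.2) / Real.sqrt 2) ^ 2 / 2) * rexp (-((p.1 - p.2) / Real.sqrt 2) ^ 2 / 2)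
      = rexp (-p.1 ^ 2 / 2) * rexp (-p.2 ^ 2 / 2) := by
    rw [← Real.exp_add, ← Real.exp_add]
    congr 1
    rw [div_pow, div_pow, hsq]
    ring
  rw [mul_mul_mul_comm, e, mul_mul_mul_comm]

lemma gs_prod_map_Trot : (gs.prod gs).map Trot = gs.prod gs := by
  rw [gs_prod_eq_withDensity]
  ext s hs
  rw [Measure.map_apply measurePreserving_Trot.measurable hs,
    withDensity_apply _ (measurePreserving_Trot.measurable hs),
    withDensity_apply _ hs]
  conv_rhs => rw [← measurePreserving_Trot.map_eq]
  rw [setLIntegral_map hs Fden_measurable measurePreserving_Trot.measurable]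
  simp_rw [Fden_Trot]

lemma key_region (a c : ℝ) (ha : 0 < a) (hc : 0 ≤ c) :
    max (stdGaussCDF (-(Real.sqrt 2 * a)) * (1 - 2 * stdGaussCDF (-(Real.sqrt 2 * c))))
        ((stdGaussCDF (-a)) ^ 2)
      + stdGaussCDF (-a - c) * stdGaussCDF (a - c)
    ≤ ((gs.prod gs) {p : ℝ × ℝ | a + p.1 + max (-c) (min (a + p.2) c) < 0}).toReal := by
  set m := gs.prod gs with hm
  have : IsProbabilityMeasure m := by rw [hm]; infer_instance
  set S := {p : ℝ × ℝ | a + p.1 + max (-c) (min (a + p.2) c) < 0} with hS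
  set U1 := (Set.Iio (-a - c)) ×ˢ (Set.Ici (c - a)) with hU1
  set RA := {p : ℝ × ℝ | p.1 + p.2 < -(2*a)} ∩ {p | -(2*c) < p.1 - p.2} ∩ {p | p.1 - p.2 < 2*c}
    with hRA
  set B1 := (Set.Iio (-a)) ×ˢ (Set.Iio (-a - c)) with hB1
  set B2 := (Set.Iio (-a)) ×ˢ (Set.Ico (-a - c) (-a)) with hB2
  have hmRA : MeasurableSet RA := by
    refine MeasurableSet.inter (MeasurableSet.inter ?_ ?_) ?_
    · exact measurableSet_lt (measurable_fst.add measurable_snd) measurable_const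
    · exact measurableSet_lt measurable_const (measurable_fst.sub measurable_snd)
    · exact measurableSet_lt (measurable_fst.sub measurable_snd) measurable_const
  have hmU1 : MeasurableSet U1 := measurableSet_Iio.prod measurableSet_Ici
  have hmB1 : MeasurableSet B1 := measurableSet_Iio.prod measurableSet_Iio
  have hmB2 : MeasurableSet B2 := measurableSet_Iio.prod measurableSet_Ico
  -- inclusions
  have hU1S : U1 ⊆ S := by
    rintro ⟨p1, p2⟩ ⟨h1, h2⟩
    simp only [Set.mem_Iio] at h1
    simp only [Set.mem_Ici] at h2
    have : min (a + p2) c = c := min_eq_right (by linarith)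
    simp only [hS, Set.mem_setOf_eq, this, max_eq_right (by linarith : -c ≤ c)]
    linarith
  have hRAS : RA ⊆ S := by
    rintro ⟨p1, p2⟩ ⟨⟨h1, h2⟩, h3⟩
    simp only [Set.mem_setOf_eq] at h1 h2 h3
    simp only [hS, Set.mem_setOf_eq]
    have hp1 : p1 < c - a := by linarith
    have hp2 : p2 < c - a := by linarith
    rcases le_or_gt (a + p2) (-c) with h | h
    · have hmin : min (a + p2) c = a + p2 := min_eq_left (by linarith)
      rw [hmin, max_eq_left (by linarith)]
      linarith
    · have hmin : min (a + p2) c = a + p2 := min_eq_left (by linarith)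
      rw [hmin, max_eq_right (by linarith)]
      linarith
  have hB1S : B1 ⊆ S := by
    rintro ⟨p1, p2⟩ ⟨h1, h2⟩
    simp only [Set.mem_Iio] at h1 h2
    have hmin : min (a + p2) c = a + p2 := min_eq_left (by linarith)
    simp only [hS, Set.mem_setOf_eq, hmin, max_eq_left (by linarith : a + p2 ≤ -c)]
    linarith
  have hB2S : B2 ⊆ S := by
    rintro ⟨p1, p2⟩ ⟨h1, h2⟩
    simp only [Set.mem_Iio] at h1
    simp only [Set.mem_Ico] at h2
    have hmin : min (a + p2) c = a + p2 := min_eq_left (by linarith [h2.2])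
    simp only [hS, Set.mem_setOf_eq, hmin, max_eq_right (by linarith [h2.1] : -c ≤ a + p2)]
    linarith [h2.2]
  -- disjointness
  have hdU1RA : Disjoint U1 RA := by
    rw [Set.disjoint_left]
    rintro ⟨p1, p2⟩ ⟨h1, h2⟩ ⟨⟨g1, g2⟩, g3⟩
    simp only [Set.mem_Ici] at h2
    simp only [Set.mem_setOf_eq] at g1 g2 g3
    linarith
  have hdU1B1 : Disjoint U1 B1 := by
    rw [Set.disjoint_left]
    rintro ⟨p1, p2⟩ ⟨h1, h2⟩ ⟨g1, g2⟩
    simp only [Set.mem_Ici] at h2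
    simp only [Set.mem_Iio] at g2
    linarith
  have hdU1B2 : Disjoint U1 B2 := by
    rw [Set.disjoint_left]
    rintro ⟨p1, p2⟩ ⟨h1, h2⟩ ⟨g1, g2⟩
    simp only [Set.mem_Ici] at h2
    simp only [Set.mem_Ico] at g2
    linarith [g2.2]
  have hdB1B2 : Disjoint B1 B2 := by
    rw [Set.disjoint_left]
    rintro ⟨p1, p2⟩ ⟨h1, h2⟩ ⟨g1, g2⟩
    simp only [Set.mem_Iio] at h2
    simp only [Set.mem_Ico] at g2
    linarith [g2.1]
  -- value of U1
  have hvU1 : (m U1).toReal = stdGaussCDF (-a - c) * stdGaussCDF (a - c) := by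
    rw [hm, hU1, Measure.prod_prod, ENNReal.toReal_mul, gs_Iio]
    have : (gs (Set.Ici (c - a))).toReal = stdGaussCDF (a - c) := by
      rw [gs_Ici]; ring_nf
    rw [this]
  -- value of RA
  have hsqrt2 : (0:ℝ) < Real.sqrt 2 := by positivity
  have hss : Real.sqrt 2 * Real.sqrt 2 = 2 := Real.mul_self_sqrt (by norm_num)
  have hpre : Trot ⁻¹' ((Set.Iio (-(Real.sqrt 2 * a))) ×ˢ
      (Set.Ioo (-(Real.sqrt 2 * c)) (Real.sqrt 2 * c))) = RA := by
    ext ⟨p1, p2⟩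
    simp only [Set.mem_preimage, Trot, Set.mem_prod, Set.mem_Iio, Set.mem_Ioo, hRA,
      Set.mem_inter_iff, Set.mem_setOf_eq]
    constructor
    · rintro ⟨h1, h2, h3⟩
      rw [div_lt_iff₀ hsqrt2] at h1 h3
      rw [lt_div_iff₀ hsqrt2] at h2
      refine ⟨⟨?_, ?_⟩, ?_⟩ <;> nlinarith
    · rintro ⟨⟨h1, h2⟩, h3⟩
      refine ⟨?_, ?_, ?_⟩
      · rw [div_lt_iff₀ hsqrt2]; nlinarith
      · rw [lt_div_iff₀ hsqrt2]; nlinarith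
      · rw [div_lt_iff₀ hsqrt2]; nlinarith
  have hvRA : (m RA).toReal
      = stdGaussCDF (-(Real.sqrt 2 * a)) * (1 - 2 * stdGaussCDF (-(Real.sqrt 2 * c))) := by
    rw [← hpre, hm, ← Measure.map_apply measurePreserving_Trot.measurable
      (measurableSet_Iio.prod measurableSet_Ioo), gs_prod_map_Trot, Measure.prod_prod,
      ENNReal.toReal_mul, gs_Iio, gs_Ioo _ _ (by nlinarith)]
    have : stdGaussCDF (Real.sqrt 2 * c) = 1 - stdGaussCDF (-(Real.sqrt 2 * c)) := by
      rw [← gauss_symm, neg_neg]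
    rw [this]
    ring
  -- values of B1 B2
  have hvB : (m B1).toReal + (m B2).toReal = (stdGaussCDF (-a)) ^ 2 := by
    rw [hm, hB1, hB2, Measure.prod_prod, Measure.prod_prod, ENNReal.toReal_mul,
      ENNReal.toReal_mul, gs_Iio, gs_Iio, gs_Ico _ _ (by linarith)]
    ring
  -- combine
  have hfin : ∀ s : Set (ℝ × ℝ), m s ≠ ⊤ := fun s => measure_ne_top m s
  have hA : stdGaussCDF (-(Real.sqrt 2 * a)) * (1 - 2 * stdGaussCDF (-(Real.sqrt 2 * c)))
      + stdGaussCDF (-a - c) * stdGaussCDF (a - c) ≤ (m S).toReal := by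
    have hsub : U1 ∪ RA ⊆ S := Set.union_subset hU1S hRAS
    have : m (U1 ∪ RA) = m U1 + m RA := measure_union hdU1RA hmRA
    have hle : m (U1 ∪ RA) ≤ m S := measure_mono hsub
    have := ENNReal.toReal_mono (hfin S) hle
    rw [measure_union hdU1RA hmRA, ENNReal.toReal_add (hfin U1) (hfin RA)] at this
    rw [hvU1, hvRA] at this
    linarith
  have hB : (stdGaussCDF (-a)) ^ 2
      + stdGaussCDF (-a - c) * stdGaussCDF (a - c) ≤ (m S).toReal := by
    have hsub : U1 ∪ (B1 ∪ B2) ⊆ S := Set.union_subset hU1S (Set.union_subset hB1S hB2S)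
    have hle : m (U1 ∪ (B1 ∪ B2)) ≤ m S := measure_mono hsub
    have := ENNReal.toReal_mono (hfin S) hle
    rw [measure_union (Set.disjoint_union_right.mpr ⟨hdU1B1, hdU1B2⟩) (hmB1.union hmB2),
      measure_union hdB1B2 hmB2, ENNReal.toReal_add (hfin U1) (by
        exact ENNReal.add_ne_top.mpr ⟨hfin B1, hfin B2⟩),
      ENNReal.toReal_add (hfin B1) (hfin B2)] at this
    rw [hvU1] at this
    linarith [hvB]
  rcases max_cases (stdGaussCDF (-(Real.sqrt 2 * a)) * (1 - 2 * stdGaussCDF (-(Real.sqrt 2 * c))))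
    ((stdGaussCDF (-a)) ^ 2) with ⟨heq, _⟩ | ⟨heq, _⟩ <;> rw [heq]
  · exact hA
  · exact hB


lemma argmin_neg (μ σ lam x0 x1 u v : ℝ) (hlam : 0 ≤ lam)
    (h : IsTCmin μ σ lam x0 x1 u v)
    (hcond : 2*μ*x0 + max (-(lam*σ^2)) (min (2*μ*x1) (lam*σ^2)) < 0) : u = -1 := by
  obtain ⟨hu, hv, hopt⟩ := h
  rcases hu with rfl | rfl
  swap
  · rfl
  exfalso
  have h1 := hopt (-1) (-1) (Or.inr rfl) (Or.inr rfl)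
  have h2 := hopt (-1) 1 (Or.inr rfl) (Or.inl rfl)
  have hM1 := le_max_left (-(lam*σ^2)) (min (2*μ*x1) (lam*σ^2))
  have hM2 := le_max_right (-(lam*σ^2)) (min (2*μ*x1) (lam*σ^2))
  have hm1 := min_le_left (2*μ*x1) (lam*σ^2)
  have hm2 := min_le_right (2*μ*x1) (lam*σ^2)
  have ht' : 0 ≤ lam * σ^2 := mul_nonneg hlam (sq_nonneg σ)
  rcases hv with rfl | rfl
  · norm_num at h1 h2
    have hq : -(2*μ*x0) ≤ 2*μ*x1 := by linarith
    have ht : -(2*μ*x0) ≤ lam*σ^2 := by linarith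
    have := le_min hq ht
    linarith
  · norm_num at h1 h2
    linarith

lemma argmin_pos (μ σ lam x0 x1 u v : ℝ) (hlam : 0 ≤ lam)
    (h : IsTCmin μ σ lam x0 x1 u v)
    (hcond : 0 < 2*μ*x0 + max (-(lam*σ^2)) (min (2*μ*x1) (lam*σ^2))) : u = 1 := by
  obtain ⟨hu, hv, hopt⟩ := h
  rcases hu with rfl | rfl
  · rfl
  exfalso
  have h1 := hopt 1 1 (Or.inl rfl) (Or.inl rfl)
  have h2 := hopt 1 (-1) (Or.inl rfl) (Or.inr rfl)
  have hM1 := le_max_left (-(lam*σ^2)) (min (2*μ*x1) (lam*σ^2))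
  have hM2 := le_max_right (-(lam*σ^2)) (min (2*μ*x1) (lam*σ^2))
  have hm1 := min_le_left (2*μ*x1) (lam*σ^2)
  have hm2 := min_le_right (2*μ*x1) (lam*σ^2)
  have ht' : 0 ≤ lam * σ^2 := mul_nonneg hlam (sq_nonneg σ)
  rcases hv with rfl | rfl
  · norm_num at h1 h2
    have h1' : -(lam*σ^2) ≤ -(2*μ*x0) := by linarith
    have h2' : min (2*μ*x1) (lam*σ^2) ≤ -(2*μ*x0) := by linarith
    have := max_le h1' h2'
    linarith
  · norm_num at h1 h2
    have h1' : -(lam*σ^2) ≤ -(2*μ*x0) := by linarith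
    have h2' : min (2*μ*x1) (lam*σ^2) ≤ -(2*μ*x0) := by linarith
    have := max_le h1' h2'
    linarith

lemma clamp_neg (x c : ℝ) (hc : 0 ≤ c) :
    max (-c) (min (-x) c) = -(max (-c) (min x c)) := by
  rcases le_total x (-c) with h | h <;> rcases le_total x c with h' | h' <;>
    rcases le_total (-x) c with h'' | h'' <;>
      simp [max_def, min_def] <;> split_ifs <;> linarith


/-- **Lemma (lower bound for the oracle transfer clustering estimator with matched
labels).**  For every `i` and `λ ≥ 0`,
`P(Z̄^λ_{0,i} ≠ Z*_{0,i}) ≥ max{Φ(−√2 μ/σ)(1 − 2Φ(−λ/(√2 μ/σ))), Φ(−μ/σ)²}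
  + Φ(−μ/σ − λ/(2μ/σ)) Φ(μ/σ − λ/(2μ/σ))`. -/
theorem stmt15
    {Ω : Type*} [MeasurableSpace Ω] (P : Measure Ω) [IsProbabilityMeasure P]
    (n : ℕ) (μ σ : ℝ) (hμ : 0 < μ) (hσ : 0 < σ)
    (Z0 V0 V1 : Fin n → Ω → ℝ)
    (hmZ0 : ∀ i, Measurable (Z0 i))
    (hmV0 : ∀ i, Measurable (V0 i)) (hmV1 : ∀ i, Measurable (V1 i))
    (hZ0v : ∀ i ω, Z0 i ω = 1 ∨ Z0 i ω = -1)
    (hZ0d : ∀ i, P.map (Z0 i) = radMeasure)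
    (hZiid : iIndepFun Z0 P)
    (hVd : ∀ j : Fin n ⊕ Fin n, P.map (Sum.elim V0 V1 j) = gaussianReal 0 1)
    (hViid : iIndepFun (Sum.elim V0 V1) P)
    (hLVindep : IndepFun (fun ω => fun i => Z0 i ω)
      (fun ω => (fun i => V0 i ω, fun i => V1 i ω)) P)
    -- matched-label data: X₀ and the imaginary source X̄₁ share the labels Z*₀
    (X0 Xbar1 : Fin n → Ω → ℝ)
    (hX0 : ∀ i ω, X0 i ω = μ * Z0 i ω + σ * V0 i ω)
    (hXbar1 : ∀ i ω, Xbar1 i ω = μ * Z0 i ω + σ * V1 i ω)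
    (lam : ℝ) (hlam : 0 ≤ lam)
    (Zbar0 Zbar1 : Fin n → Ω → ℝ)
    (hmZbar0 : ∀ i, Measurable (Zbar0 i))
    (hTCbar : ∀ i ω, IsTCmin μ σ lam (X0 i ω) (Xbar1 i ω) (Zbar0 i ω) (Zbar1 i ω)) :
    ∀ i : Fin n,
      max (stdGaussCDF (-(Real.sqrt 2 * μ / σ))
            * (1 - 2 * stdGaussCDF (-(lam / (Real.sqrt 2 * μ / σ)))))
          ((stdGaussCDF (-(μ / σ))) ^ 2)
        + stdGaussCDF (-(μ / σ) - lam / (2 * (μ / σ)))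
            * stdGaussCDF (μ / σ - lam / (2 * (μ / σ)))
        ≤ (P {ω | Zbar0 i ω ≠ Z0 i ω}).toReal := by
  intro i
  have hσ' : σ ≠ 0 := ne_of_gt hσ
  have hμ' : μ ≠ 0 := ne_of_gt hμ
  have hss : Real.sqrt 2 * Real.sqrt 2 = 2 := Real.mul_self_sqrt (by norm_num)
  have hsqrt2 : (0:ℝ) < Real.sqrt 2 := by positivity
  -- rewrite the two A-type arguments
  have eA1 : -(Real.sqrt 2 * μ / σ) = -(Real.sqrt 2 * (μ / σ)) := by rw [mul_div_assoc]
  have eA2 : -(lam / (Real.sqrt 2 * μ / σ)) = -(Real.sqrt 2 * (lam / (2 * (μ / σ)))) := by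
    rw [neg_inj, eq_comm, eq_div_iff (by positivity)]
    field_simp
    ring_nf
    rw [Real.sq_sqrt (by norm_num : (0:ℝ) ≤ 2)]
    ring
  rw [eA1, eA2]
  set a := μ / σ with ha
  set c := lam / (2 * a) with hc
  have ha0 : 0 < a := div_pos hμ hσ
  have hc0 : 0 ≤ c := div_nonneg hlam (by linarith)
  -- the region
  set S : Set (ℝ × ℝ) := {p : ℝ × ℝ | a + p.1 + max (-c) (min (a + p.2) c) < 0} with hSdef
  have hmS : MeasurableSet S := by
    have hmf : Measurable fun p : ℝ × ℝ => a + p.1 + max (-c) (min (a + p.2) c) :=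
      (measurable_const.add measurable_fst).add
        (measurable_const.max ((measurable_const.add measurable_snd).min measurable_const))
    exact measurableSet_lt hmf measurable_const
  set negp : ℝ × ℝ → ℝ × ℝ := fun p => (-p.1, -p.2) with hnegp
  have hmnegp : Measurable negp := measurable_fst.neg.prodMk measurable_snd.neg
  set Sneg := negp ⁻¹' S with hSneg
  have hmSneg : MeasurableSet Sneg := hmnegp hmS
  set W : Ω → ℝ × ℝ := fun ω => (V0 i ω, V1 i ω) with hW
  have hmW : Measurable W := (hmV0 i).prodMk (hmV1 i)
  -- joint law of W
  have hV0law : P.map (V0 i) = gs := hVd (Sum.inl i)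
  have hV1law : P.map (V1 i) = gs := hVd (Sum.inr i)
  have hVindep : IndepFun (V0 i) (V1 i) P := by
    have := hViid.indepFun (i := Sum.inl i) (j := Sum.inr i) (by simp)
    exact this
  have hWlaw : P.map W = gs.prod gs := by
    have := (indepFun_iff_map_prod_eq_prod_map_map
      (hmV0 i).aemeasurable (hmV1 i).aemeasurable).mp hVindep
    rw [hW, this, hV0law, hV1law]
  -- independence of label and W
  have hZW : IndepFun (Z0 i) W P := by
    have hψ : Measurable (fun q : (Fin n → ℝ) × (Fin n → ℝ) => (q.1 i, q.2 i)) :=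
      Measurable.prodMk ((measurable_pi_apply i).comp measurable_fst)
        ((measurable_pi_apply i).comp measurable_snd)
    have h := hLVindep.comp (φ := fun f : Fin n → ℝ => f i)
      (ψ := fun q : (Fin n → ℝ) × (Fin n → ℝ) => (q.1 i, q.2 i))
      (measurable_pi_apply i : Measurable fun f : Fin n → ℝ => f i) hψ
    exact h
  -- P(Z = z) = 1/2
  have hZ1 : P ((Z0 i) ⁻¹' {1}) = 2⁻¹ := by
    rw [← Measure.map_apply (hmZ0 i) (measurableSet_singleton 1), hZ0d i]
    unfold radMeasure
    simp only [Measure.smul_apply, Measure.add_apply,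
      Measure.dirac_apply' _ (measurableSet_singleton (1:ℝ)),
      Measure.dirac_apply' _ (measurableSet_singleton (1:ℝ))]
    norm_num [Set.indicator]
  have hZm1 : P ((Z0 i) ⁻¹' {-1}) = 2⁻¹ := by
    rw [← Measure.map_apply (hmZ0 i) (measurableSet_singleton (-1)), hZ0d i]
    unfold radMeasure
    simp only [Measure.smul_apply, Measure.add_apply,
      Measure.dirac_apply' _ (measurableSet_singleton (-1:ℝ)),
      Measure.dirac_apply' _ (measurableSet_singleton (-1:ℝ))]
    norm_num [Set.indicator]
  -- measure of Sneg
  have hmapneg : (gs.prod gs).map negp = gs.prod gs := by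
    have h := Measure.map_prod_map (f := fun x : ℝ => -x) (g := fun x : ℝ => -x) gs gs
      measurable_neg measurable_neg
    rw [gauss_map_neg] at h
    rw [show negp = Prod.map (fun x : ℝ => -x) (fun x : ℝ => -x) from rfl, ← h]
  have hnegval : (gs.prod gs) Sneg = (gs.prod gs) S := by
    rw [hSneg, ← Measure.map_apply hmnegp hmS, hmapneg]
  -- event probabilities
  have hD1 : P ((Z0 i) ⁻¹' {1} ∩ W ⁻¹' S) = 2⁻¹ * (gs.prod gs) S := by
    rw [hZW.measure_inter_preimage_eq_mul _ _ (measurableSet_singleton 1) hmS, hZ1,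
      ← Measure.map_apply hmW hmS, hWlaw]
  have hD2 : P ((Z0 i) ⁻¹' {-1} ∩ W ⁻¹' Sneg) = 2⁻¹ * (gs.prod gs) S := by
    rw [hZW.measure_inter_preimage_eq_mul _ _ (measurableSet_singleton (-1)) hmSneg, hZm1,
      ← Measure.map_apply hmW hmSneg, hWlaw, hnegval]
  -- scaling facts
  have hk : (0:ℝ) < 2 * μ * σ := by positivity
  have ekc : (2 * μ * σ) * c = lam * σ ^ 2 := by
    rw [hc, ha]; field_simp
  have eka : (2 * μ * σ) * a = 2 * μ * μ := by
    rw [ha]; field_simp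
  -- inclusion in the error event
  have hincl1 : (Z0 i) ⁻¹' {1} ∩ W ⁻¹' S ⊆ {ω | Zbar0 i ω ≠ Z0 i ω} := by
    rintro ω ⟨hz, hw⟩
    simp only [Set.mem_preimage, Set.mem_singleton_iff] at hz
    simp only [Set.mem_preimage, hSdef, Set.mem_setOf_eq, hW] at hw
    have hcond : 2*μ*(X0 i ω) + max (-(lam*σ^2)) (min (2*μ*(Xbar1 i ω)) (lam*σ^2)) < 0 := by
      have heq : 2*μ*(X0 i ω) + max (-(lam*σ^2)) (min (2*μ*(Xbar1 i ω)) (lam*σ^2))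
          = (2*μ*σ) * (a + V0 i ω + max (-c) (min (a + V1 i ω) c)) := by
        have e1 : (2*μ*σ) * (a + V0 i ω) = 2*μ*(μ * 1 + σ * V0 i ω) := by
          rw [mul_add, eka]; ring
        have e2 : (2*μ*σ) * (a + V1 i ω) = 2*μ*(μ * 1 + σ * V1 i ω) := by
          rw [mul_add, eka]; ring
        rw [hX0 i ω, hXbar1 i ω, hz]
        conv_rhs => rw [mul_add, mul_max_of_nonneg _ _ hk.le,
          mul_min_of_nonneg _ _ hk.le, mul_neg, ekc, e1, e2]
      rw [heq]
      exact mul_neg_of_pos_of_neg hk hw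
    have hu := argmin_neg μ σ lam _ _ _ _ hlam (hTCbar i ω) hcond
    simp only [Set.mem_setOf_eq, hu, hz]
    norm_num
  have hincl2 : (Z0 i) ⁻¹' {-1} ∩ W ⁻¹' Sneg ⊆ {ω | Zbar0 i ω ≠ Z0 i ω} := by
    rintro ω ⟨hz, hw⟩
    simp only [Set.mem_preimage, Set.mem_singleton_iff] at hz
    simp only [hSneg, Set.mem_preimage, hnegp, hSdef, Set.mem_setOf_eq, hW] at hw
    -- hw : a + -(V0 i ω) + max (-c) (min (a + -(V1 i ω)) c) < 0
    have hflip : 0 < (V0 i ω - a) + max (-c) (min (V1 i ω - a) c) := by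
      have hcl := clamp_neg (a + -(V1 i ω)) c hc0
      have hv : V1 i ω - a = -(a + -(V1 i ω)) := by ring
      rw [hv, hcl]
      linarith [hw]
    have hcond : 0 < 2*μ*(X0 i ω) + max (-(lam*σ^2)) (min (2*μ*(Xbar1 i ω)) (lam*σ^2)) := by
      have heq : 2*μ*(X0 i ω) + max (-(lam*σ^2)) (min (2*μ*(Xbar1 i ω)) (lam*σ^2))
          = (2*μ*σ) * ((V0 i ω - a) + max (-c) (min (V1 i ω - a) c)) := by
        have e1 : (2*μ*σ) * (V0 i ω - a) = 2*μ*(μ * (-1) + σ * V0 i ω) := by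
          rw [mul_sub, eka]; ring
        have e2 : (2*μ*σ) * (V1 i ω - a) = 2*μ*(μ * (-1) + σ * V1 i ω) := by
          rw [mul_sub, eka]; ring
        rw [hX0 i ω, hXbar1 i ω, hz]
        conv_rhs => rw [mul_add, mul_max_of_nonneg _ _ hk.le,
          mul_min_of_nonneg _ _ hk.le, mul_neg, ekc, e1, e2]
      rw [heq]
      exact mul_pos hk hflip
    have hu := argmin_pos μ σ lam _ _ _ _ hlam (hTCbar i ω) hcond
    simp only [Set.mem_setOf_eq, hu, hz]
    norm_num
  -- putting it together
  have hdisj : Disjoint ((Z0 i) ⁻¹' {1} ∩ W ⁻¹' S) ((Z0 i) ⁻¹' {-1} ∩ W ⁻¹' Sneg) := by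
    rw [Set.disjoint_left]
    rintro ω ⟨h1, _⟩ ⟨h2, _⟩
    simp only [Set.mem_preimage, Set.mem_singleton_iff] at h1 h2
    rw [h1] at h2
    norm_num at h2
  have hD2meas : MeasurableSet ((Z0 i) ⁻¹' {-1} ∩ W ⁻¹' Sneg) :=
    ((hmZ0 i) (measurableSet_singleton (-1))).inter (hmW hmSneg)
  have hsum : (gs.prod gs) S ≤ P {ω | Zbar0 i ω ≠ Z0 i ω} := by
    calc (gs.prod gs) S = 2⁻¹ * (gs.prod gs) S + 2⁻¹ * (gs.prod gs) S := by
          rw [← add_mul, ENNReal.inv_two_add_inv_two, one_mul]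
      _ = P ((Z0 i) ⁻¹' {1} ∩ W ⁻¹' S) + P ((Z0 i) ⁻¹' {-1} ∩ W ⁻¹' Sneg) := by
          rw [hD1, hD2]
      _ = P (((Z0 i) ⁻¹' {1} ∩ W ⁻¹' S) ∪ ((Z0 i) ⁻¹' {-1} ∩ W ⁻¹' Sneg)) :=
          (measure_union hdisj hD2meas).symm
      _ ≤ P {ω | Zbar0 i ω ≠ Z0 i ω} := measure_mono (Set.union_subset hincl1 hincl2)
  have key := key_region a c ha0 hc0
  calc max (stdGaussCDF (-(Real.sqrt 2 * a)) * (1 - 2 * stdGaussCDF (-(Real.sqrt 2 * c))))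
        ((stdGaussCDF (-a)) ^ 2)
      + stdGaussCDF (-a - c) * stdGaussCDF (a - c)
      ≤ ((gs.prod gs) S).toReal := key
    _ ≤ (P {ω | Zbar0 i ω ≠ Z0 i ω}).toReal :=
        ENNReal.toReal_mono (measure_ne_top P _) hsum
end

section
/- For every x > 0, the standard normal CDF Φ satisfies √(2/π)/(x + √(x² + 4)) · exp(−x²/2) ≤ Φ(−x) ≤ √(2/π)/(x + √(x² + 8/π)) · exp(−x²/2). -/
open MeasureTheory ProbabilityTheory Real

section Aux
open Filter Set Topology
noncomputable def phi (u : ℝ) : ℝ := (Real.sqrt (2*π))⁻¹ * Real.exp (-u^2/2)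

lemma phi_eq : gaussianPDFReal 0 1 = phi := by
  ext u
  simp [gaussianPDFReal, phi, sub_zero]


lemma phi_pos (u : ℝ) : 0 < phi u := by
  have : (0:ℝ) < Real.sqrt (2*π) := Real.sqrt_pos.2 (by positivity)
  exact mul_pos (inv_pos.2 this) (Real.exp_pos _)

lemma phi_cont : Continuous phi := by
  unfold phi; fun_prop

lemma phi_integrable : Integrable phi := by
  rw [← phi_eq]; exact integrable_gaussianPDFReal 0 1

lemma phi_even (u : ℝ) : phi (-u) = phi u := by simp [phi]

lemma stdGaussCDF_eq (x : ℝ) : stdGaussCDF x = ∫ u in Set.Iic x, phi u := by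
  rw [stdGaussCDF, gaussianReal_apply_eq_integral _ one_ne_zero, phi_eq,
    ENNReal.toReal_ofReal]
  exact integral_nonneg fun u => (phi_pos u).le

lemma stdGaussCDF_eq_cdf (x : ℝ) : stdGaussCDF x = cdf (gaussianReal 0 1) x :=
  (cdf_eq_real _ x).symm

lemma Q_eq_sub (t : ℝ) : stdGaussCDF (-t) = stdGaussCDF 0 - ∫ u in (0:ℝ)..t, phi u := by
  have h := intervalIntegral.integral_Iic_sub_Iic (μ := volume) (f := phi)
    (phi_integrable.integrableOn) (phi_integrable.integrableOn) (a := -t) (b := 0)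
  have h2 : (∫ u in (-t)..(0:ℝ), phi u) = ∫ u in (0:ℝ)..t, phi u := by
    have := intervalIntegral.integral_comp_neg (a := (0:ℝ)) (b := t) (f := phi)
    simp only [phi_even, neg_zero] at this
    exact this.symm
  rw [stdGaussCDF_eq, stdGaussCDF_eq, ← h2, ← h]
  ring

lemma hasDerivAt_Q (x : ℝ) : HasDerivAt (fun t => stdGaussCDF (-t)) (-phi x) x := by
  have hF : (fun t => stdGaussCDF (-t)) = fun t => stdGaussCDF 0 - ∫ u in (0:ℝ)..t, phi u :=
    funext Q_eq_sub
  rw [hF]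
  have h : HasDerivAt (fun t => ∫ u in (0:ℝ)..t, phi u) (phi x) x :=
    intervalIntegral.integral_hasDerivAt_right (phi_integrable.intervalIntegrable)
      (phi_cont.stronglyMeasurableAtFilter _ _) phi_cont.continuousAt
  exact ((hasDerivAt_const x (stdGaussCDF 0)).sub h).congr_deriv (by simp)

lemma tendsto_Q : Tendsto (fun t => stdGaussCDF (-t)) atTop (𝓝 0) := by
  simp only [stdGaussCDF_eq_cdf]
  exact (tendsto_cdf_atBot _).comp tendsto_neg_atTop_atBot

lemma stdGaussCDF_zero : stdGaussCDF 0 = 1/2 := by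
  have hsym : (∫ u in Set.Iic (0:ℝ), phi u) = ∫ u in Set.Ioi (0:ℝ), phi u := by
    have := integral_comp_neg_Iic (0:ℝ) phi
    simp only [phi_even, neg_zero] at this
    exact this
  have htot : (∫ u in Set.Iic (0:ℝ), phi u) + ∫ u in Set.Ioi (0:ℝ), phi u = 1 := by
    rw [← setIntegral_union (by simp [Set.disjoint_left]) measurableSet_Ioi
      phi_integrable.integrableOn phi_integrable.integrableOn]
    rw [Set.Iic_union_Ioi]
    rw [MeasureTheory.setIntegral_univ, ← phi_eq]
    exact integral_gaussianPDFReal_eq_one 0 one_ne_zero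
  rw [stdGaussCDF_eq]
  linarith [hsym, htot]

lemma s_facts (a x : ℝ) (ha : 0 < a) :
    0 < Real.sqrt (x^2+a) ∧ 0 < x + Real.sqrt (x^2+a) ∧ Real.sqrt (x^2+a) ^ 2 = x^2 + a := by
  have hs2 : Real.sqrt (x^2+a) ^ 2 = x^2 + a := Real.sq_sqrt (by positivity)
  have hs0 : 0 < Real.sqrt (x^2+a) := Real.sqrt_pos.2 (by positivity)
  refine ⟨hs0, ?_, hs2⟩
  nlinarith [hs2, hs0, ha]

lemma hasDerivAt_g (a : ℝ) (ha : 0 < a) (x : ℝ) :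
    HasDerivAt (fun t => stdGaussCDF (-t) -
        Real.sqrt (2/π)/(t + Real.sqrt (t^2+a)) * Real.exp (-t^2/2))
      (phi x * ((x * Real.sqrt (x^2+a) - x^2 - a + 2) /
        (Real.sqrt (x^2+a) * (x + Real.sqrt (x^2+a))))) x := by
  obtain ⟨hs0, hxs, hs2⟩ := s_facts a x ha
  set s := Real.sqrt (x^2+a) with hs
  have hsd : HasDerivAt (fun t => Real.sqrt (t^2+a)) (x / s) x := by
    have h1 : HasDerivAt (fun t : ℝ => t^2+a) (2*x) x := by
      simpa [mul_comm] using ((hasDerivAt_pow 2 x).add_const a)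
    have h2 := h1.sqrt (by positivity)
    convert h2 using 1
    rw [← hs]; field_simp
  have hden : HasDerivAt (fun t => t + Real.sqrt (t^2+a)) (1 + x / s) x :=
    (hasDerivAt_id x).add hsd
  have hdiv : HasDerivAt (fun t => Real.sqrt (2/π) / (t + Real.sqrt (t^2+a)))
      (-(Real.sqrt (2/π) * (1 + x / s)) / (x + s)^2) x := by
    have := (hasDerivAt_const x (Real.sqrt (2/π))).div hden (by rw [← hs]; positivity)
    exact this.congr_deriv (by rw [← hs]; ring)
  have hexp : HasDerivAt (fun t : ℝ => Real.exp (-t^2/2)) (Real.exp (-x^2/2) * (-x)) x := by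
    have h1 : HasDerivAt (fun t : ℝ => -t^2/2) (-x) x := by
      have := ((hasDerivAt_pow 2 x).neg).div_const 2
      exact this.congr_deriv (by push_cast; ring)
    simpa [mul_comm] using h1.exp
  have hmul := hdiv.mul hexp
  have hQ := hasDerivAt_Q x
  have hgoal := hQ.sub hmul
  refine hgoal.congr_deriv (Eq.symm ?_)
  -- algebraic identity
  have hc : Real.sqrt (2/π) = 2 * (Real.sqrt (2*π))⁻¹ := by
    rw [eq_comm, mul_inv_eq_iff_eq_mul₀ (by positivity), ← Real.sqrt_mul (by positivity)]
    rw [show (2:ℝ)/π * (2*π) = 4 by field_simp; ring]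
    rw [show (4:ℝ) = 2^2 by norm_num, Real.sqrt_sq (by norm_num)]
  rw [phi, hc, ← hs]
  rw [show a = s^2 - x^2 by linarith]
  have h2π : (0:ℝ) < Real.sqrt (2*π) := Real.sqrt_pos.2 (by positivity)
  field_simp
  ring

lemma tendsto_h (a : ℝ) :
    Tendsto (fun t => Real.sqrt (2/π)/(t + Real.sqrt (t^2+a)) * Real.exp (-t^2/2))
      atTop (𝓝 0) := by
  have h1 : Tendsto (fun t : ℝ => t + Real.sqrt (t^2+a)) atTop atTop :=
    tendsto_atTop_mono (fun t => le_add_of_nonneg_right (Real.sqrt_nonneg _)) tendsto_id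
  have h2 : Tendsto (fun t : ℝ => Real.sqrt (2/π)/(t + Real.sqrt (t^2+a))) atTop (𝓝 0) :=
    Tendsto.div_atTop tendsto_const_nhds h1
  have h3 : Tendsto (fun t : ℝ => Real.exp (-t^2/2)) atTop (𝓝 0) := by
    apply Real.tendsto_exp_atBot.comp
    have : Tendsto (fun t : ℝ => t^2) atTop atTop := tendsto_pow_atTop two_ne_zero
    have := (tendsto_neg_atBot_iff.mpr this).atBot_div_const (by norm_num : (0:ℝ) < 2)
    simpa [neg_div] using this
  simpa using h2.mul h3

lemma tendsto_g (a : ℝ) :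
    Tendsto (fun t => stdGaussCDF (-t) -
      Real.sqrt (2/π)/(t + Real.sqrt (t^2+a)) * Real.exp (-t^2/2)) atTop (𝓝 0) := by
  simpa using tendsto_Q.sub (tendsto_h a)

lemma monoN (a : ℝ) (ha : 0 < a) {t₁ t₂ : ℝ} (h0 : 0 ≤ t₁) (h12 : t₁ ≤ t₂) :
    t₁ * Real.sqrt (t₁^2+a) - t₁^2 ≤ t₂ * Real.sqrt (t₂^2+a) - t₂^2 := by
  obtain ⟨hs01, hp1, hsq1⟩ := s_facts a t₁ ha
  obtain ⟨hs02, hp2, hsq2⟩ := s_facts a t₂ ha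
  set s₁ := Real.sqrt (t₁^2+a)
  set s₂ := Real.sqrt (t₂^2+a)
  have h02 : 0 ≤ t₂ := h0.trans h12
  have key : t₁ * s₂ ≤ t₂ * s₁ := by
    have h1 : t₁ * s₂ = Real.sqrt (t₁^2 * (t₂^2+a)) := by
      rw [Real.sqrt_mul (sq_nonneg t₁), Real.sqrt_sq h0]
    have h2 : t₂ * s₁ = Real.sqrt (t₂^2 * (t₁^2+a)) := by
      rw [Real.sqrt_mul (sq_nonneg t₂), Real.sqrt_sq h02]
    rw [h1, h2]
    apply Real.sqrt_le_sqrt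
    nlinarith [mul_le_mul_of_nonneg_left (mul_self_le_mul_self h0 h12) ha.le]
  have e1 : t₁ * s₁ - t₁^2 = a * t₁ / (t₁ + s₁) := by
    field_simp
    linear_combination t₁ * hsq1
  have e2 : t₂ * s₂ - t₂^2 = a * t₂ / (t₂ + s₂) := by
    field_simp
    linear_combination t₂ * hsq2
  rw [e1, e2, div_le_div_iff₀ hp1 hp2]
  nlinarith [mul_le_mul_of_nonneg_left key ha.le]

lemma lower_bound (x : ℝ) (hx : 0 < x) :
    Real.sqrt (2/π)/(x + Real.sqrt (x^2+4)) * Real.exp (-x^2/2) ≤ stdGaussCDF (-x) := by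
  set g : ℝ → ℝ := fun t => stdGaussCDF (-t) -
    Real.sqrt (2/π)/(t + Real.sqrt (t^2+4)) * Real.exp (-t^2/2) with hg
  have h4 : (0:ℝ) < 4 := by norm_num
  have hD : Differentiable ℝ g := fun t => (hasDerivAt_g 4 h4 t).differentiableAt
  have hd : ∀ t, deriv g t ≤ 0 := by
    intro t
    rw [(hasDerivAt_g 4 h4 t).deriv]
    obtain ⟨hs0, hp, hsq⟩ := s_facts 4 t h4
    have hnum : t * Real.sqrt (t^2+4) - t^2 - 4 + 2 ≤ 0 := by
      nlinarith [sq_nonneg (t - Real.sqrt (t^2+4))]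
    have hdenom : 0 ≤ Real.sqrt (t^2+4) * (t + Real.sqrt (t^2+4)) := by positivity
    exact mul_nonpos_iff.mpr (Or.inl ⟨(phi_pos t).le,
      div_nonpos_of_nonpos_of_nonneg hnum hdenom⟩)
  have hA : Antitone g := antitone_of_deriv_nonpos hD hd
  have hev : ∀ᶠ t in atTop, g t ≤ g x :=
    eventually_atTop.mpr ⟨x, fun t ht => hA ht⟩
  have h0 : (0:ℝ) ≤ g x := le_of_tendsto (tendsto_g 4) hev
  simpa [hg, sub_nonneg] using h0

lemma upper_bound (x : ℝ) (hx : 0 < x) :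
    stdGaussCDF (-x) ≤ Real.sqrt (2/π)/(x + Real.sqrt (x^2+8/π)) * Real.exp (-x^2/2) := by
  have ha : (0:ℝ) < 8/π := by positivity
  set g : ℝ → ℝ := fun t => stdGaussCDF (-t) -
    Real.sqrt (2/π)/(t + Real.sqrt (t^2+8/π)) * Real.exp (-t^2/2) with hg
  have hD : Differentiable ℝ g := fun t => (hasDerivAt_g (8/π) ha t).differentiableAt
  have hderiv : ∀ t, deriv g t = phi t * ((t * Real.sqrt (t^2+8/π) - t^2 - 8/π + 2) /
      (Real.sqrt (t^2+8/π) * (t + Real.sqrt (t^2+8/π)))) :=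
    fun t => (hasDerivAt_g (8/π) ha t).deriv
  have hg0 : g 0 = 0 := by
    have hs : Real.sqrt ((0:ℝ)^2 + 8/π) = 2 * Real.sqrt (2/π) := by
      rw [show (0:ℝ)^2 + 8/π = 2^2 * (2/π) by field_simp; ring,
        Real.sqrt_mul (by positivity), Real.sqrt_sq (by norm_num)]
    have hsp : (0:ℝ) < Real.sqrt (2/π) := Real.sqrt_pos.2 (by positivity)
    simp only [hg, neg_zero, stdGaussCDF_zero, hs]
    rw [show -(0:ℝ)^2/2 = 0 by norm_num, Real.exp_zero]
    field_simp
    ring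
  rw [← sub_nonpos]
  show g x ≤ 0
  rcases le_or_gt (x * Real.sqrt (x^2+8/π) - x^2 - 8/π + 2) 0 with hN | hN
  · -- antitone on [0, x]
    have hAnti : AntitoneOn g (Set.Icc 0 x) := by
      apply antitoneOn_of_deriv_nonpos (convex_Icc 0 x) hD.continuous.continuousOn
        (hD.differentiableOn)
      intro t ht
      rw [interior_Icc] at ht
      rw [hderiv t]
      have hmono := monoN (8/π) ha ht.1.le ht.2.le
      have hnum : t * Real.sqrt (t^2+8/π) - t^2 - 8/π + 2 ≤ 0 := by linarith
      have hdenom : 0 ≤ Real.sqrt (t^2+8/π) * (t + Real.sqrt (t^2+8/π)) := by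
        obtain ⟨hs0, hp, _⟩ := s_facts (8/π) t ha
        positivity
      exact mul_nonpos_iff.mpr (Or.inl ⟨(phi_pos t).le,
        div_nonpos_of_nonpos_of_nonneg hnum hdenom⟩)
    have := hAnti (Set.mem_Icc.mpr ⟨le_refl 0, hx.le⟩)
      (Set.mem_Icc.mpr ⟨hx.le, le_refl x⟩) hx.le
    linarith [hg0]
  · -- monotone on [x, ∞)
    have hMono : MonotoneOn g (Set.Ici x) := by
      apply monotoneOn_of_deriv_nonneg (convex_Ici x) hD.continuous.continuousOn
        (hD.differentiableOn)
      intro t ht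
      rw [interior_Ici] at ht
      rw [hderiv t]
      have hmono := monoN (8/π) ha hx.le ht.le
      have hnum : 0 ≤ t * Real.sqrt (t^2+8/π) - t^2 - 8/π + 2 := by linarith
      have hdenom : 0 ≤ Real.sqrt (t^2+8/π) * (t + Real.sqrt (t^2+8/π)) := by
        obtain ⟨hs0, hp, _⟩ := s_facts (8/π) t ha
        positivity
      exact mul_nonneg (phi_pos t).le (div_nonneg hnum hdenom)
    have hev : ∀ᶠ t in atTop, g x ≤ g t :=
      eventually_atTop.mpr ⟨x, fun t ht => hMono (Set.mem_Ici.mpr (le_refl x))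
        (Set.mem_Ici.mpr ht) ht⟩
    exact ge_of_tendsto (tendsto_g (8/π)) hev

end Aux

/-- **Lemma (normal tail bounds).** For every `x > 0`,
`√(2/π)/(x + √(x² + 4)) · exp(−x²/2) ≤ Φ(−x) ≤ √(2/π)/(x + √(x² + 8/π)) · exp(−x²/2)`. -/
theorem stmt16 (x : ℝ) (hx : 0 < x) :
    Real.sqrt (2 / π) / (x + Real.sqrt (x ^ 2 + 4)) * Real.exp (-x ^ 2 / 2)
        ≤ stdGaussCDF (-x) ∧
    stdGaussCDF (-x)
        ≤ Real.sqrt (2 / π) / (x + Real.sqrt (x ^ 2 + 8 / π)) * Real.exp (-x ^ 2 / 2) := by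
  exact ⟨lower_bound x hx, upper_bound x hx⟩
end

section
/- Let X, X_1, …, X_N be i.i.d. real random variables with CDF F, and let F̂_N denote the empirical CDF of X_1, …, X_N. For the quantile function Q_ζ(G) := inf{ z ∈ ℝ : G(z) ≥ ζ }, and for any ζ, η ∈ (0,1), if N ≥ C·ζ^{−2}·log(1/η) for a sufficiently large universal constant C > 0, then with probability at least 1 − η, Q_{1−ζ}(F) ≤ Q_{1−ζ/2}(F̂_N) ≤ Q_{1−ζ/3}(F). -/
open MeasureTheory ProbabilityTheory Real

/-- The quantile of a (c.d.f.-like) function `G : ℝ → ℝ` at level `ζ`: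
`Q_ζ(G) := inf { z : ζ ≤ G z }`. -/
noncomputable def quantileOf (ζ : ℝ) (G : ℝ → ℝ) : ℝ :=
  sInf {z : ℝ | ζ ≤ G z}

open scoped ENNReal NNReal
open MeasureTheory ProbabilityTheory Real Set

namespace Stmt19Aux

noncomputable def cnt {n : ℕ} (B : Set ℝ) (y : Fin n → ℝ) : ℕ :=
  ∑ i, B.indicator 1 (y i)


lemma measurable_cnt {n : ℕ} {B : Set ℝ} (hB : MeasurableSet B) :
    Measurable fun y : Fin n → ℝ => cnt B y := by
  apply Finset.measurable_sum
  intro i _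
  exact (measurable_const.indicator hB).comp (measurable_pi_apply i)

lemma measurableSet_lt_cnt {n : ℕ} {B : Set ℝ} (hB : MeasurableSet B) (v : ℝ) :
    MeasurableSet {y : Fin n → ℝ | v < (cnt B y : ℝ)} := by
  have : {y : Fin n → ℝ | v < (cnt B y : ℝ)} = (fun y => cnt B y) ⁻¹' {k : ℕ | v < (k : ℝ)} := rfl
  rw [this]
  exact measurable_cnt hB trivial

lemma measurableSet_cnt_le {n : ℕ} {B : Set ℝ} (hB : MeasurableSet B) (v : ℝ) :
    MeasurableSet {y : Fin n → ℝ | (cnt B y : ℝ) ≤ v} := by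
  have : {y : Fin n → ℝ | (cnt B y : ℝ) ≤ v} = (fun y => cnt B y) ⁻¹' {k : ℕ | (k : ℝ) ≤ v} := rfl
  rw [this]
  exact measurable_cnt hB trivial

lemma cnt_mono {n : ℕ} {B B' : Set ℝ} (h : B ⊆ B') (y : Fin n → ℝ) : cnt B y ≤ cnt B' y := by
  apply Finset.sum_le_sum
  intro i _
  exact Set.indicator_le_indicator_of_subset h (fun u => Nat.zero_le _) (y i)

lemma cnt_eq_zero {n : ℕ} {B : Set ℝ} {y : Fin n → ℝ} (h : ∀ i, y i ∉ B) : cnt B y = 0 := by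
  apply Finset.sum_eq_zero
  intro i _
  exact Set.indicator_of_notMem (h i) _

variable {ν : Measure ℝ} [IsProbabilityMeasure ν]

lemma lintegral_prod_pi (ν : Measure ℝ) [IsProbabilityMeasure ν] {g : ℝ → ℝ≥0∞}
    (hg : Measurable g) (n : ℕ) :
    ∫⁻ y, ∏ i, g (y i) ∂(Measure.pi fun _ : Fin n => ν) = (∫⁻ u, g u ∂ν) ^ n := by
  induction n with
  | zero => simp
  | succ n ih =>
    have hmp := measurePreserving_piFinSuccAbove (fun _ : Fin (n + 1) => ν) 0
    have hF : Measurable fun p : ℝ × (Fin n → ℝ) => g p.1 * ∏ j, g (p.2 j) :=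
      (hg.comp measurable_fst).mul
        (Finset.measurable_prod _ fun j _ => (hg.comp ((measurable_pi_apply j).comp measurable_snd)))
    calc ∫⁻ y, ∏ i, g (y i) ∂(Measure.pi fun _ : Fin (n + 1) => ν)
        = ∫⁻ y, (fun p : ℝ × (Fin n → ℝ) => g p.1 * ∏ j, g (p.2 j))
            ((MeasurableEquiv.piFinSuccAbove (fun _ : Fin (n+1) => ℝ) 0) y)
            ∂(Measure.pi fun _ : Fin (n + 1) => ν) := by
          refine lintegral_congr fun y => ?_
          simp only [MeasurableEquiv.piFinSuccAbove_apply]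
          rw [Fin.prod_univ_succ]
          simp [Fin.succAbove_zero, Fin.tail]
      _ = ∫⁻ p : ℝ × (Fin n → ℝ), g p.1 * ∏ j, g (p.2 j)
            ∂(ν.prod (Measure.pi fun _ : Fin n => ν)) := hmp.lintegral_comp hF
      _ = (∫⁻ u, g u ∂ν) * ∫⁻ z, ∏ j, g (z j) ∂(Measure.pi fun _ : Fin n => ν) :=
          lintegral_prod_mul hg.aemeasurable
            (Finset.measurable_prod _ fun j _ => hg.comp (measurable_pi_apply j)).aemeasurable
      _ = (∫⁻ u, g u ∂ν) ^ (n + 1) := by rw [ih]; ring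

/-- Chernoff-type upper-tail bound for the number of coordinates in `B`. -/
lemma count_upper (ν : Measure ℝ) [IsProbabilityMeasure ν] {B : Set ℝ} (hB : MeasurableSet B)
    {ρ t v : ℝ} (ht : 0 ≤ t) (hρ : 0 ≤ ρ) (hνB : ν B ≤ ENNReal.ofReal ρ) (n : ℕ) :
    (Measure.pi fun _ : Fin n => ν) {y | v ≤ (cnt B y : ℝ)}
      ≤ ENNReal.ofReal (Real.exp ((n : ℝ) * ρ * (Real.exp t - 1) - t * v)) := by
  classical
  set g : ℝ → ℝ≥0∞ := fun u => B.indicator (fun _ => ENNReal.ofReal (Real.exp t - 1)) u + 1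
    with hgdef
  have hg : Measurable g := (measurable_const.indicator hB).add measurable_const
  have hone : (1 : ℝ) ≤ Real.exp t := by simpa using Real.exp_le_exp.2 ht
  have hgeq : ∀ u, g u = ENNReal.ofReal (Real.exp t) ^ (B.indicator 1 u : ℕ) := by
    intro u
    by_cases hu : u ∈ B
    · simp only [hgdef, Set.indicator_of_mem hu, pow_one]
      rw [← ENNReal.ofReal_one, ← ENNReal.ofReal_add (by linarith) (by norm_num)]
      norm_num
    · simp [hgdef, Set.indicator_of_notMem hu]
  set f : (Fin n → ℝ) → ℝ≥0∞ := fun y => ∏ i, g (y i) with hfdef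
  have hf : Measurable f := Finset.measurable_prod _ fun i _ => hg.comp (measurable_pi_apply i)
  have hfeq : ∀ y, f y = ENNReal.ofReal (Real.exp (t * (cnt B y : ℝ))) := by
    intro y
    have h1 : f y = ENNReal.ofReal (Real.exp t) ^ cnt B y := by
      rw [hfdef]
      simp only [hgeq]
      rw [Finset.prod_pow_eq_pow_sum]
      rfl
    rw [h1, ← ENNReal.ofReal_pow (Real.exp_nonneg t), ← Real.exp_nat_mul]
    rw [mul_comm]
  have hsub : {y : Fin n → ℝ | v ≤ (cnt B y : ℝ)}
      ⊆ {y | ENNReal.ofReal (Real.exp (t * v)) ≤ f y} := by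
    intro y hy
    rw [Set.mem_setOf_eq, hfeq]
    refine ENNReal.ofReal_le_ofReal (Real.exp_le_exp.2 ?_)
    have hyy : (v : ℝ) ≤ (cnt B y : ℝ) := hy
    nlinarith
  have hmarkov := mul_meas_ge_le_lintegral₀ (μ := Measure.pi fun _ : Fin n => ν)
    hf.aemeasurable (ENNReal.ofReal (Real.exp (t * v)))
  have hint : ∫⁻ y, f y ∂(Measure.pi fun _ : Fin n => ν) = (∫⁻ u, g u ∂ν) ^ n :=
    lintegral_prod_pi ν hg n
  have hgint : ∫⁻ u, g u ∂ν ≤ ENNReal.ofReal (Real.exp (ρ * (Real.exp t - 1))) := by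
    have h2 : ∫⁻ u, g u ∂ν = ENNReal.ofReal (Real.exp t - 1) * ν B + 1 := by
      rw [hgdef]
      rw [lintegral_add_right _ measurable_const]
      rw [lintegral_indicator_const hB, lintegral_one]
      simp
    rw [h2]
    calc ENNReal.ofReal (Real.exp t - 1) * ν B + 1
        ≤ ENNReal.ofReal (Real.exp t - 1) * ENNReal.ofReal ρ + 1 := by gcongr
      _ = ENNReal.ofReal ((Real.exp t - 1) * ρ + 1) := by
          rw [← ENNReal.ofReal_mul (by linarith), ← ENNReal.ofReal_one,
            ← ENNReal.ofReal_add (by nlinarith) (by norm_num)]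
      _ ≤ ENNReal.ofReal (Real.exp (ρ * (Real.exp t - 1))) := by
          refine ENNReal.ofReal_le_ofReal ?_
          have h3 := Real.add_one_le_exp ((Real.exp t - 1) * ρ)
          calc (Real.exp t - 1) * ρ + 1 ≤ Real.exp ((Real.exp t - 1) * ρ) := h3
            _ = Real.exp (ρ * (Real.exp t - 1)) := by rw [mul_comm]
  have hε0 : (ENNReal.ofReal (Real.exp (t * v))) ≠ 0 := by
    simp [ENNReal.ofReal_eq_zero, not_le, Real.exp_pos]
  have hεtop : (ENNReal.ofReal (Real.exp (t * v))) ≠ ⊤ := ENNReal.ofReal_ne_top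
  have hfinal : (Measure.pi fun _ : Fin n => ν) {y | v ≤ (cnt B y : ℝ)}
      ≤ ENNReal.ofReal (Real.exp ((n : ℝ) * (ρ * (Real.exp t - 1))))
        / ENNReal.ofReal (Real.exp (t * v)) := by
    rw [ENNReal.le_div_iff_mul_le (Or.inl hε0) (Or.inl hεtop)]
    calc (Measure.pi fun _ : Fin n => ν) {y | v ≤ (cnt B y : ℝ)}
          * ENNReal.ofReal (Real.exp (t * v))
        = ENNReal.ofReal (Real.exp (t * v))
          * (Measure.pi fun _ : Fin n => ν) {y | v ≤ (cnt B y : ℝ)} := mul_comm _ _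
      _ ≤ ENNReal.ofReal (Real.exp (t * v))
          * (Measure.pi fun _ : Fin n => ν) {y | ENNReal.ofReal (Real.exp (t * v)) ≤ f y} := by
          exact mul_le_mul_right (measure_mono hsub) _
      _ ≤ ∫⁻ y, f y ∂(Measure.pi fun _ : Fin n => ν) := hmarkov
      _ = (∫⁻ u, g u ∂ν) ^ n := hint
      _ ≤ ENNReal.ofReal (Real.exp (ρ * (Real.exp t - 1))) ^ n := by gcongr
      _ = ENNReal.ofReal (Real.exp ((n : ℝ) * (ρ * (Real.exp t - 1)))) := by
          rw [← ENNReal.ofReal_pow (Real.exp_nonneg _), ← Real.exp_nat_mul]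
  calc (Measure.pi fun _ : Fin n => ν) {y | v ≤ (cnt B y : ℝ)}
      ≤ ENNReal.ofReal (Real.exp ((n : ℝ) * (ρ * (Real.exp t - 1))))
        / ENNReal.ofReal (Real.exp (t * v)) := hfinal
    _ = ENNReal.ofReal (Real.exp ((n : ℝ) * ρ * (Real.exp t - 1) - t * v)) := by
        rw [div_eq_mul_inv, ← ENNReal.ofReal_inv_of_pos (Real.exp_pos _),
          ← ENNReal.ofReal_mul (Real.exp_nonneg _), ← Real.exp_neg, ← Real.exp_add]
        ring_nf

/-- Chernoff-type lower-tail bound for the number of coordinates in `B`. -/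
lemma count_lower (ν : Measure ℝ) [IsProbabilityMeasure ν] {B : Set ℝ} (hB : MeasurableSet B)
    {p t v : ℝ} (ht : 0 ≤ t) (hp0 : 0 ≤ p) (hp1 : p ≤ 1) (hνB : ENNReal.ofReal p ≤ ν B) (n : ℕ) :
    (Measure.pi fun _ : Fin n => ν) {y | (cnt B y : ℝ) ≤ v}
      ≤ ENNReal.ofReal (Real.exp (t * v - (n : ℝ) * (p * (1 - Real.exp (-t))))) := by
  classical
  have hexple : Real.exp (-t) ≤ 1 := by
    rw [Real.exp_le_one_iff]; linarith
  set g : ℝ → ℝ≥0∞ := fun u =>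
      Bᶜ.indicator (fun _ => ENNReal.ofReal (1 - Real.exp (-t))) u + ENNReal.ofReal (Real.exp (-t))
    with hgdef
  have hg : Measurable g := (measurable_const.indicator hB.compl).add measurable_const
  have hgeq : ∀ u, g u = ENNReal.ofReal (Real.exp (-t)) ^ (B.indicator 1 u : ℕ) := by
    intro u
    by_cases hu : u ∈ B
    · have hu' : u ∉ Bᶜ := by simpa using hu
      simp [hgdef, Set.indicator_of_notMem hu', Set.indicator_of_mem hu]
    · have hu' : u ∈ Bᶜ := by simpa using hu
      simp only [hgdef, Set.indicator_of_mem hu', Set.indicator_of_notMem hu, pow_zero]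
      rw [← ENNReal.ofReal_add (by linarith) (Real.exp_nonneg _)]
      norm_num
  set f : (Fin n → ℝ) → ℝ≥0∞ := fun y => ∏ i, g (y i) with hfdef
  have hf : Measurable f := Finset.measurable_prod _ fun i _ => hg.comp (measurable_pi_apply i)
  have hfeq : ∀ y, f y = ENNReal.ofReal (Real.exp (-t * (cnt B y : ℝ))) := by
    intro y
    have h1 : f y = ENNReal.ofReal (Real.exp (-t)) ^ cnt B y := by
      rw [hfdef]
      simp only [hgeq]
      rw [Finset.prod_pow_eq_pow_sum]
      rfl
    rw [h1, ← ENNReal.ofReal_pow (Real.exp_nonneg _), ← Real.exp_nat_mul]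
    rw [mul_comm]
  have hsub : {y : Fin n → ℝ | (cnt B y : ℝ) ≤ v}
      ⊆ {y | ENNReal.ofReal (Real.exp (-t * v)) ≤ f y} := by
    intro y hy
    rw [Set.mem_setOf_eq, hfeq]
    refine ENNReal.ofReal_le_ofReal (Real.exp_le_exp.2 ?_)
    have hyy : (cnt B y : ℝ) ≤ v := hy
    nlinarith
  have hmarkov := mul_meas_ge_le_lintegral₀ (μ := Measure.pi fun _ : Fin n => ν)
    hf.aemeasurable (ENNReal.ofReal (Real.exp (-t * v)))
  have hint : ∫⁻ y, f y ∂(Measure.pi fun _ : Fin n => ν) = (∫⁻ u, g u ∂ν) ^ n :=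
    lintegral_prod_pi ν hg n
  have hcompl : ν Bᶜ ≤ ENNReal.ofReal (1 - p) := by
    have h1 : ν Bᶜ = 1 - ν B := prob_compl_eq_one_sub hB
    rw [h1, ENNReal.ofReal_sub _ hp0, ENNReal.ofReal_one]
    exact tsub_le_tsub le_rfl hνB
  have hgint : ∫⁻ u, g u ∂ν ≤ ENNReal.ofReal (Real.exp (-(p * (1 - Real.exp (-t))))) := by
    have h2 : ∫⁻ u, g u ∂ν
        = ENNReal.ofReal (1 - Real.exp (-t)) * ν Bᶜ + ENNReal.ofReal (Real.exp (-t)) := by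
      rw [hgdef]
      rw [lintegral_add_right _ measurable_const]
      rw [lintegral_indicator_const hB.compl, lintegral_const]
      simp
    rw [h2]
    calc ENNReal.ofReal (1 - Real.exp (-t)) * ν Bᶜ + ENNReal.ofReal (Real.exp (-t))
        ≤ ENNReal.ofReal (1 - Real.exp (-t)) * ENNReal.ofReal (1 - p)
          + ENNReal.ofReal (Real.exp (-t)) := by gcongr
      _ = ENNReal.ofReal ((1 - Real.exp (-t)) * (1 - p) + Real.exp (-t)) := by
          rw [← ENNReal.ofReal_mul (by linarith),
            ← ENNReal.ofReal_add (by nlinarith) (Real.exp_nonneg _)]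
      _ ≤ ENNReal.ofReal (Real.exp (-(p * (1 - Real.exp (-t))))) := by
          refine ENNReal.ofReal_le_ofReal ?_
          have h3 := Real.add_one_le_exp (-(p * (1 - Real.exp (-t))))
          nlinarith [Real.exp_pos (-t)]
  have hε0 : (ENNReal.ofReal (Real.exp (-t * v))) ≠ 0 := by
    simp [ENNReal.ofReal_eq_zero, not_le, Real.exp_pos]
  have hεtop : (ENNReal.ofReal (Real.exp (-t * v))) ≠ ⊤ := ENNReal.ofReal_ne_top
  have hfinal : (Measure.pi fun _ : Fin n => ν) {y | (cnt B y : ℝ) ≤ v}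
      ≤ ENNReal.ofReal (Real.exp ((n : ℝ) * (-(p * (1 - Real.exp (-t))))))
        / ENNReal.ofReal (Real.exp (-t * v)) := by
    rw [ENNReal.le_div_iff_mul_le (Or.inl hε0) (Or.inl hεtop)]
    calc (Measure.pi fun _ : Fin n => ν) {y | (cnt B y : ℝ) ≤ v}
          * ENNReal.ofReal (Real.exp (-t * v))
        = ENNReal.ofReal (Real.exp (-t * v))
          * (Measure.pi fun _ : Fin n => ν) {y | (cnt B y : ℝ) ≤ v} := mul_comm _ _
      _ ≤ ENNReal.ofReal (Real.exp (-t * v))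
          * (Measure.pi fun _ : Fin n => ν) {y | ENNReal.ofReal (Real.exp (-t * v)) ≤ f y} :=
          mul_le_mul_right (measure_mono hsub) _
      _ ≤ ∫⁻ y, f y ∂(Measure.pi fun _ : Fin n => ν) := hmarkov
      _ = (∫⁻ u, g u ∂ν) ^ n := hint
      _ ≤ ENNReal.ofReal (Real.exp (-(p * (1 - Real.exp (-t))))) ^ n := by gcongr
      _ = ENNReal.ofReal (Real.exp ((n : ℝ) * (-(p * (1 - Real.exp (-t)))))) := by
          rw [← ENNReal.ofReal_pow (Real.exp_nonneg _), ← Real.exp_nat_mul]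
  calc (Measure.pi fun _ : Fin n => ν) {y | (cnt B y : ℝ) ≤ v}
      ≤ ENNReal.ofReal (Real.exp ((n : ℝ) * (-(p * (1 - Real.exp (-t))))))
        / ENNReal.ofReal (Real.exp (-t * v)) := hfinal
    _ = ENNReal.ofReal (Real.exp (t * v - (n : ℝ) * (p * (1 - Real.exp (-t))))) := by
        rw [div_eq_mul_inv, ← ENNReal.ofReal_inv_of_pos (Real.exp_pos _),
          ← ENNReal.ofReal_mul (Real.exp_nonneg _), ← Real.exp_neg, ← Real.exp_add]
        ring_nf

lemma cnt_succ {n : ℕ} (B : Set ℝ) (y : Fin (n + 1) → ℝ) :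
    cnt B y = B.indicator 1 (y 0) + cnt B (Fin.tail y) := by
  unfold cnt
  rw [Fin.sum_univ_succ]
  rfl

/-- Decomposition of the measure of a "constrained count" event over the first coordinate. -/
lemma pi_count_rec (ν : Measure ℝ) [IsProbabilityMeasure ν] {n : ℕ} {Cs A : Set ℝ}
    (hCs : MeasurableSet Cs) (hA : MeasurableSet A) (hAC : A ⊆ Cs) (v : ℝ) :
    (Measure.pi fun _ : Fin (n + 1) => ν) {y | (∀ i, y i ∈ Cs) ∧ v < (cnt A y : ℝ)}
      = ν A * (Measure.pi fun _ : Fin n => ν) {z | (∀ i, z i ∈ Cs) ∧ v - 1 < (cnt A z : ℝ)}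
        + ν (Cs \ A) * (Measure.pi fun _ : Fin n => ν) {z | (∀ i, z i ∈ Cs) ∧ v < (cnt A z : ℝ)} := by
  classical
  set m1 := (Measure.pi fun _ : Fin n => ν) {z | (∀ i, z i ∈ Cs) ∧ v - 1 < (cnt A z : ℝ)} with hm1
  set m0 := (Measure.pi fun _ : Fin n => ν) {z | (∀ i, z i ∈ Cs) ∧ v < (cnt A z : ℝ)} with hm0
  set T : Set (ℝ × (Fin n → ℝ)) :=
    {p | (p.1 ∈ Cs ∧ ∀ j, p.2 j ∈ Cs) ∧ v < ((A.indicator 1 p.1 + cnt A p.2 : ℕ) : ℝ)} with hT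
  have hTmeas : MeasurableSet T := by
    have h1 : MeasurableSet {p : ℝ × (Fin n → ℝ) | p.1 ∈ Cs} := measurable_fst hCs
    have h2 : MeasurableSet {p : ℝ × (Fin n → ℝ) | ∀ j, p.2 j ∈ Cs} := by
      have heq : {p : ℝ × (Fin n → ℝ) | ∀ j, p.2 j ∈ Cs}
          = Prod.snd ⁻¹' (Set.pi Set.univ fun _ : Fin n => Cs) := by
        ext p; simp [Set.mem_pi]
      rw [heq]
      exact measurable_snd (MeasurableSet.univ_pi fun _ => hCs)
    have hmeasfun : Measurable fun p : ℝ × (Fin n → ℝ) => A.indicator 1 p.1 + cnt A p.2 :=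
      ((measurable_const.indicator hA).comp measurable_fst).add
        ((measurable_cnt hA).comp measurable_snd)
    have h3 : MeasurableSet {p : ℝ × (Fin n → ℝ) | v < ((A.indicator 1 p.1 + cnt A p.2 : ℕ) : ℝ)} := by
      have heq : {p : ℝ × (Fin n → ℝ) | v < ((A.indicator 1 p.1 + cnt A p.2 : ℕ) : ℝ)}
          = (fun p : ℝ × (Fin n → ℝ) => A.indicator 1 p.1 + cnt A p.2) ⁻¹' {k : ℕ | v < (k : ℝ)} := rfl
      rw [heq]
      exact hmeasfun trivial
    have heqT : T = ({p : ℝ × (Fin n → ℝ) | p.1 ∈ Cs} ∩ {p | ∀ j, p.2 j ∈ Cs})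
        ∩ {p : ℝ × (Fin n → ℝ) | v < ((A.indicator 1 p.1 + cnt A p.2 : ℕ) : ℝ)} := by
      ext p; rw [hT]; simp only [Set.mem_setOf_eq, Set.mem_inter_iff]
    rw [heqT]
    exact (h1.inter h2).inter h3
  have hmp := measurePreserving_piFinSuccAbove (fun _ : Fin (n + 1) => ν) 0
  have he : ∀ y : Fin (n + 1) → ℝ,
      (MeasurableEquiv.piFinSuccAbove (fun _ : Fin (n + 1) => ℝ) 0) y = (y 0, Fin.tail y) := by
    intro y
    simp [MeasurableEquiv.piFinSuccAbove_apply]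
  have hpre : {y : Fin (n + 1) → ℝ | (∀ i, y i ∈ Cs) ∧ v < (cnt A y : ℝ)}
      = (MeasurableEquiv.piFinSuccAbove (fun _ : Fin (n + 1) => ℝ) 0) ⁻¹' T := by
    ext y
    rw [Set.mem_preimage, he y, hT]
    simp only [Set.mem_setOf_eq]
    constructor
    · rintro ⟨h1, h2⟩
      refine ⟨⟨h1 0, fun j => h1 j.succ⟩, ?_⟩
      rw [cnt_succ A y] at h2
      exact h2
    · rintro ⟨⟨h0, hs⟩, h2⟩
      refine ⟨?_, ?_⟩
      · intro i
        rcases Fin.eq_zero_or_eq_succ i with rfl | ⟨j, rfl⟩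
        · exact h0
        · exact hs j
      · rw [cnt_succ A y]
        exact h2
  rw [hpre, hmp.measure_preimage hTmeas.nullMeasurableSet]
  rw [Measure.prod_apply hTmeas]
  have hsec : ∀ x : ℝ, (Measure.pi fun _ : Fin n => ν) (Prod.mk x ⁻¹' T)
      = A.indicator (fun _ => m1) x + (Cs \ A).indicator (fun _ => m0) x := by
    intro x
    by_cases hxA : x ∈ A
    · have hxC : x ∈ Cs := hAC hxA
      have hxD : x ∉ Cs \ A := fun h => h.2 hxA
      have hset : Prod.mk x ⁻¹' T = {z : Fin n → ℝ | (∀ i, z i ∈ Cs) ∧ v - 1 < (cnt A z : ℝ)} := by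
        ext z
        simp only [Set.mem_preimage, hT, Set.mem_setOf_eq, Set.indicator_of_mem hxA,
          Pi.one_apply]
        constructor
        · rintro ⟨⟨_, hz⟩, hcnt⟩
          refine ⟨hz, ?_⟩
          push_cast at hcnt ⊢
          linarith
        · rintro ⟨hz, hcnt⟩
          refine ⟨⟨hxC, hz⟩, ?_⟩
          push_cast
          push_cast at hcnt
          linarith
      rw [hset, Set.indicator_of_mem hxA, Set.indicator_of_notMem hxD]
      simp [hm1]
    · by_cases hxC : x ∈ Cs
      · have hxD : x ∈ Cs \ A := ⟨hxC, hxA⟩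
        have hset : Prod.mk x ⁻¹' T = {z : Fin n → ℝ | (∀ i, z i ∈ Cs) ∧ v < (cnt A z : ℝ)} := by
          ext z
          simp only [Set.mem_preimage, hT, Set.mem_setOf_eq, Set.indicator_of_notMem hxA]
          constructor
          · rintro ⟨⟨_, hz⟩, hcnt⟩
            refine ⟨hz, ?_⟩
            push_cast at hcnt ⊢
            linarith
          · rintro ⟨hz, hcnt⟩
            refine ⟨⟨hxC, hz⟩, ?_⟩
            push_cast
            push_cast at hcnt
            linarith
        rw [hset, Set.indicator_of_notMem hxA, Set.indicator_of_mem hxD]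
        simp [hm0]
      · have hxD : x ∉ Cs \ A := fun h => hxC h.1
        have hset : Prod.mk x ⁻¹' T = (∅ : Set (Fin n → ℝ)) := by
          ext z
          simp only [Set.mem_preimage, hT, Set.mem_setOf_eq, Set.mem_empty_iff_false, iff_false]
          rintro ⟨⟨h0, _⟩, _⟩
          exact hxC h0
        rw [hset, Set.indicator_of_notMem hxA, Set.indicator_of_notMem hxD]
        simp
  calc ∫⁻ x, (Measure.pi fun _ : Fin n => ν) (Prod.mk x ⁻¹' T) ∂ν
      = ∫⁻ x, (A.indicator (fun _ => m1) x + (Cs \ A).indicator (fun _ => m0) x) ∂ν :=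
        lintegral_congr hsec
    _ = m1 * ν A + m0 * ν (Cs \ A) := by
        rw [lintegral_add_left (measurable_const.indicator hA)]
        rw [lintegral_indicator_const hA, lintegral_indicator_const (hCs.diff hA)]
    _ = ν A * m1 + ν (Cs \ A) * m0 := by ring

/-- Negative-association-type inequality: conditioning on all coordinates lying in `G ⊇ A`
only increases the chance of many coordinates in `A`. -/
lemma pi_count_NA (ν : Measure ℝ) [IsProbabilityMeasure ν] {G A : Set ℝ}
    (hG : MeasurableSet G) (hA : MeasurableSet A) (hAG : A ⊆ G) :
    ∀ (n : ℕ) (v : ℝ),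
      ν G ^ n * (Measure.pi fun _ : Fin n => ν) {y | v < (cnt A y : ℝ)}
        ≤ (Measure.pi fun _ : Fin n => ν) {y | (∀ i, y i ∈ G) ∧ v < (cnt A y : ℝ)} := by
  intro n
  induction n with
  | zero =>
    intro v
    have hset : {y : Fin 0 → ℝ | (∀ i, y i ∈ G) ∧ v < (cnt A y : ℝ)}
        = {y : Fin 0 → ℝ | v < (cnt A y : ℝ)} := by
      ext y
      simp [IsEmpty.forall_iff]
    rw [hset, pow_zero, one_mul]
  | succ n ih =>
    intro v
    have hG1 : ν G ≤ 1 := prob_le_one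
    -- abbreviations
    set g1 := (Measure.pi fun _ : Fin n => ν) {y | v - 1 < (cnt A y : ℝ)} with hg1
    set g0 := (Measure.pi fun _ : Fin n => ν) {y | v < (cnt A y : ℝ)} with hg0
    have hg01 : g0 ≤ g1 := by
      apply measure_mono
      intro y hy
      simp only [Set.mem_setOf_eq] at hy ⊢
      linarith
    -- recursion for the unconstrained count (Cs = univ)
    have hrecg : (Measure.pi fun _ : Fin (n + 1) => ν) {y | v < (cnt A y : ℝ)}
        = ν A * g1 + ν Aᶜ * g0 := by
      have h1 := pi_count_rec ν (n := n) MeasurableSet.univ hA (Set.subset_univ A) v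
      have e0 : ∀ (m : ℕ) (w : ℝ), {y : Fin m → ℝ | (∀ i, y i ∈ Set.univ) ∧ w < (cnt A y : ℝ)}
          = {y : Fin m → ℝ | w < (cnt A y : ℝ)} := by
        intro m w; ext y; simp
      rw [e0, e0, e0] at h1
      rw [h1, Set.compl_eq_univ_diff]
    -- recursion for the constrained count
    have hrecf : (Measure.pi fun _ : Fin (n + 1) => ν) {y | (∀ i, y i ∈ G) ∧ v < (cnt A y : ℝ)}
        = ν A * (Measure.pi fun _ : Fin n => ν) {z | (∀ i, z i ∈ G) ∧ v - 1 < (cnt A z : ℝ)}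
          + ν (G \ A) * (Measure.pi fun _ : Fin n => ν) {z | (∀ i, z i ∈ G) ∧ v < (cnt A z : ℝ)} :=
      pi_count_rec ν hG hA hAG v
    rw [hrecg, hrecf]
    -- apply induction hypothesis
    have ih1 := ih (v - 1)
    have ih0 := ih v
    refine le_trans ?_ (add_le_add (mul_le_mul_right ih1 (ν A)) (mul_le_mul_right ih0 (ν (G \ A))))
    -- now a pure (in)equality in ℝ≥0∞
    rw [← hg1, ← hg0]
    have hsplit : ν Aᶜ = ν (G \ A) + ν Gᶜ := by
      have hdisj : Disjoint (G \ A) Gᶜ := disjoint_compl_right.mono_left Set.diff_subset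
      have hunion : (G \ A) ∪ Gᶜ = Aᶜ := by
        ext u
        constructor
        · rintro (⟨huG, huA⟩ | huG)
          · exact huA
          · exact fun huA => huG (hAG huA)
        · intro huA
          by_cases huG : u ∈ G
          · exact Or.inl ⟨huG, huA⟩
          · exact Or.inr huG
      rw [← hunion, measure_union hdisj (hG.compl)]
    have hone : ν G + ν Gᶜ = 1 := by
      rw [measure_add_measure_compl hG, measure_univ]
    have hdisj : Disjoint A (G \ A) := disjoint_sdiff_right
    have hGd : ν A + ν (G \ A) = ν G := by
      rw [← measure_union hdisj (hG.diff hA), Set.union_diff_cancel hAG]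
    have hkey0 : ν G * g0 ≤ ν A * g1 + ν (G \ A) * g0 := by
      calc ν G * g0 = (ν A + ν (G \ A)) * g0 := by rw [hGd]
        _ = ν A * g0 + ν (G \ A) * g0 := by ring
        _ ≤ ν A * g1 + ν (G \ A) * g0 := add_le_add (mul_le_mul_right hg01 _) le_rfl
    have key : ν G * (ν A * g1 + ν Aᶜ * g0) ≤ ν A * g1 + ν (G \ A) * g0 := by
      calc ν G * (ν A * g1 + ν Aᶜ * g0)
          = ν G * (ν A * g1 + ν (G \ A) * g0) + ν G * (ν Gᶜ * g0) := by
            rw [hsplit]; ring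
        _ ≤ ν G * (ν A * g1 + ν (G \ A) * g0) + ν Gᶜ * (ν A * g1 + ν (G \ A) * g0) := by
            refine add_le_add le_rfl ?_
            calc ν G * (ν Gᶜ * g0) = ν Gᶜ * (ν G * g0) := by ring
              _ ≤ ν Gᶜ * (ν A * g1 + ν (G \ A) * g0) := mul_le_mul_right hkey0 _
        _ = (ν G + ν Gᶜ) * (ν A * g1 + ν (G \ A) * g0) := by ring
        _ = ν A * g1 + ν (G \ A) * g0 := by rw [hone, one_mul]
    calc ν G ^ (n + 1) * (ν A * g1 + ν Aᶜ * g0)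
        = ν G ^ n * (ν G * (ν A * g1 + ν Aᶜ * g0)) := by ring
      _ ≤ ν G ^ n * (ν A * g1 + ν (G \ A) * g0) := mul_le_mul_right key _
      _ = ν A * (ν G ^ n * g1) + ν (G \ A) * (ν G ^ n * g0) := by ring

/-- i.i.d. variables: the joint law is the product measure. -/
lemma map_eq_pi {Ω : Type} [MeasurableSpace Ω] (P : Measure Ω) [IsProbabilityMeasure P]
    {N : ℕ} (ν : Measure ℝ) [IsProbabilityMeasure ν] (X : Fin N → Ω → ℝ)
    (hXm : ∀ i, Measurable (X i)) (hXd : ∀ i, P.map (X i) = ν)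
    (hXi : iIndepFun X P) :
    P.map (fun ω i => X i ω) = Measure.pi fun _ : Fin N => ν := by
  have hJ : Measurable fun ω (i : Fin N) => X i ω := measurable_pi_lambda _ hXm
  refine (Measure.pi_eq fun s hs => ?_).symm
  rw [Measure.map_apply hJ (MeasurableSet.univ_pi hs)]
  have hpre : (fun ω (i : Fin N) => X i ω) ⁻¹' Set.pi Set.univ s = ⋂ i, X i ⁻¹' s i := by
    ext ω
    simp [Set.mem_pi]
  rw [hpre]
  rw [hXi.meas_iInter fun i => ⟨s i, hs i, rfl⟩]
  refine Finset.prod_congr rfl fun i _ => ?_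
  rw [← hXd i, Measure.map_apply (hXm i) (hs i)]

section CDF

variable (ν : Measure ℝ) [IsProbabilityMeasure ν]

lemma cdf_mem_iff {c : ℝ} (z : ℝ) :
    z ∈ {z : ℝ | c ≤ (ν (Set.Iic z)).toReal} ↔ ENNReal.ofReal c ≤ ν (Set.Iic z) :=
  (ENNReal.ofReal_le_iff_le_toReal (measure_ne_top ν _)).symm

lemma cdf_S_nonempty {c : ℝ} (hc1 : c < 1) :
    {z : ℝ | c ≤ (ν (Set.Iic z)).toReal}.Nonempty := by
  have h1 : Filter.Tendsto (fun z : ℝ => ν (Set.Iic z)) Filter.atTop (nhds (ν Set.univ)) :=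
    tendsto_measure_Iic_atTop ν
  rw [measure_univ] at h1
  have hlt : ENNReal.ofReal c < 1 := by
    rcases le_or_gt c 0 with h | h
    · simpa [ENNReal.ofReal_eq_zero.2 h] using zero_lt_one
    · exact ENNReal.ofReal_lt_one.2 hc1
  have h2 : ∀ᶠ z in Filter.atTop, ENNReal.ofReal c < ν (Set.Iic z) :=
    h1.eventually (eventually_gt_nhds hlt)
  obtain ⟨z, hz⟩ := h2.exists
  exact ⟨z, (cdf_mem_iff ν z).2 hz.le⟩

lemma cdf_S_bddBelow {c : ℝ} (hc0 : 0 < c) :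
    BddBelow {z : ℝ | c ≤ (ν (Set.Iic z)).toReal} := by
  have hInt : (⋂ k : ℕ, Set.Iic (-(k : ℝ))) = (∅ : Set ℝ) := by
    ext u
    simp only [Set.mem_iInter, Set.mem_Iic, Set.mem_empty_iff_false, iff_false, not_forall, not_le]
    obtain ⟨k, hk⟩ := exists_nat_gt (-u)
    exact ⟨k, by linarith⟩
  have h1 : Filter.Tendsto (fun k : ℕ => ν (Set.Iic (-(k : ℝ)))) Filter.atTop
      (nhds (ν (⋂ k : ℕ, Set.Iic (-(k : ℝ))))) := by
    refine tendsto_measure_iInter_atTop (fun k => measurableSet_Iic.nullMeasurableSet)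
      (fun a b hab => ?_) ⟨0, measure_ne_top ν _⟩
    exact Set.Iic_subset_Iic.2 (by exact_mod_cast neg_le_neg (Nat.cast_le.2 hab))
  rw [hInt, measure_empty] at h1
  have hpos : (0 : ℝ≥0∞) < ENNReal.ofReal c := ENNReal.ofReal_pos.2 hc0
  have h2 : ∀ᶠ k : ℕ in Filter.atTop, ν (Set.Iic (-(k : ℝ))) < ENNReal.ofReal c :=
    h1.eventually (eventually_lt_nhds hpos)
  obtain ⟨k, hk⟩ := h2.exists
  refine ⟨-(k : ℝ), fun z hz => ?_⟩
  by_contra hzk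
  push_neg at hzk
  have : ν (Set.Iic z) ≤ ν (Set.Iic (-(k : ℝ))) := measure_mono (Set.Iic_subset_Iic.2 hzk.le)
  have h3 := (cdf_mem_iff ν z).1 hz
  exact absurd (le_trans h3 this) (not_le.2 hk)

lemma cdf_quantile_mem {c : ℝ} (hc0 : 0 < c) (hc1 : c < 1) :
    ENNReal.ofReal c ≤ ν (Set.Iic (quantileOf c fun z => (ν (Set.Iic z)).toReal)) := by
  set S := {z : ℝ | c ≤ (ν (Set.Iic z)).toReal} with hS
  have hbdd := cdf_S_bddBelow ν hc0
  have hne := cdf_S_nonempty ν hc1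
  set q := sInf S with hq
  have hseq : ∀ k : ℕ, ENNReal.ofReal c ≤ ν (Set.Iic (q + ((k : ℝ) + 1)⁻¹)) := by
    intro k
    have hpos : (0 : ℝ) < ((k : ℝ) + 1)⁻¹ := by positivity
    have hq' : sInf S < q + ((k : ℝ) + 1)⁻¹ := by rw [← hq]; linarith
    obtain ⟨z, hzS, hzlt⟩ := (csInf_lt_iff hbdd hne).1 hq'
    exact le_trans ((cdf_mem_iff ν z).1 hzS) (measure_mono (Set.Iic_subset_Iic.2 hzlt.le))
  have hInt : (⋂ k : ℕ, Set.Iic (q + ((k : ℝ) + 1)⁻¹)) = Set.Iic q := by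
    ext u
    simp only [Set.mem_iInter, Set.mem_Iic]
    constructor
    · intro h
      by_contra hq'
      push_neg at hq'
      obtain ⟨k, hk⟩ := exists_nat_one_div_lt (sub_pos.2 hq')
      have hku := h k
      rw [one_div] at hk
      linarith
    · intro h k
      have : (0 : ℝ) < ((k : ℝ) + 1)⁻¹ := by positivity
      linarith
  have htend : Filter.Tendsto (fun k : ℕ => ν (Set.Iic (q + ((k : ℝ) + 1)⁻¹))) Filter.atTop
      (nhds (ν (Set.Iic q))) := by
    have h1 := tendsto_measure_iInter_atTop (μ := ν)
      (s := fun k : ℕ => Set.Iic (q + ((k : ℝ) + 1)⁻¹))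
      (fun k => measurableSet_Iic.nullMeasurableSet)
      (fun a b hab => Set.Iic_subset_Iic.2 (by
        have : ((b : ℝ) + 1)⁻¹ ≤ ((a : ℝ) + 1)⁻¹ := by
          apply inv_anti₀ (by positivity)
          exact_mod_cast Nat.add_le_add_right hab 1
        linarith)) ⟨0, measure_ne_top ν _⟩
    rw [hInt] at h1
    exact h1
  exact ge_of_tendsto htend (Filter.Eventually.of_forall hseq)

lemma cdf_quantile_out {c : ℝ} (hc0 : 0 < c) (hc1 : c < 1) :
    ν (Set.Iio (quantileOf c fun z => (ν (Set.Iic z)).toReal)) ≤ ENNReal.ofReal c := by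
  set S := {z : ℝ | c ≤ (ν (Set.Iic z)).toReal} with hS
  have hbdd := cdf_S_bddBelow ν hc0
  set q := sInf S with hq
  have hnotmem : ∀ z, z < q → ν (Set.Iic z) ≤ ENNReal.ofReal c := by
    intro z hz
    have hzS : z ∉ S := fun hmem => absurd (csInf_le hbdd hmem) (not_le.2 hz)
    have h1 : (ν (Set.Iic z)).toReal < c := not_le.1 hzS
    exact ((ENNReal.lt_ofReal_iff_toReal_lt (measure_ne_top ν _)).2 h1).le
  have hUnion : Set.Iio q = ⋃ k : ℕ, Set.Iic (q - ((k : ℝ) + 1)⁻¹) := by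
    ext u
    simp only [Set.mem_Iio, Set.mem_iUnion, Set.mem_Iic]
    constructor
    · intro h
      obtain ⟨k, hk⟩ := exists_nat_one_div_lt (sub_pos.2 h)
      rw [one_div] at hk
      exact ⟨k, by linarith⟩
    · rintro ⟨k, hk⟩
      have : (0 : ℝ) < ((k : ℝ) + 1)⁻¹ := by positivity
      linarith
  have hdir : Directed (· ⊆ ·) fun k : ℕ => Set.Iic (q - ((k : ℝ) + 1)⁻¹) := by
    refine Monotone.directed_le fun a b hab => Set.Iic_subset_Iic.2 ?_
    have : ((b : ℝ) + 1)⁻¹ ≤ ((a : ℝ) + 1)⁻¹ := by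
      apply inv_anti₀ (by positivity)
      exact_mod_cast Nat.add_le_add_right hab 1
    linarith
  calc ν (Set.Iio q) = ⨆ k : ℕ, ν (Set.Iic (q - ((k : ℝ) + 1)⁻¹)) := by
        rw [hUnion]; exact hdir.measure_iUnion
    _ ≤ ENNReal.ofReal c := by
        refine iSup_le fun k => hnotmem _ ?_
        have : (0 : ℝ) < ((k : ℝ) + 1)⁻¹ := by positivity
        linarith

end CDF

section Emp

lemma cnt_eq_card {n : ℕ} (B : Set ℝ) (y : Fin n → ℝ) [DecidablePred (· ∈ B)] :
    cnt B y = (Finset.univ.filter fun i => y i ∈ B).card := by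
  rw [Finset.card_filter]
  unfold cnt
  refine Finset.sum_congr rfl fun i _ => ?_
  by_cases h : y i ∈ B <;> simp [h]

lemma card_filter_le_add_cnt {N : ℕ} (y : Fin N → ℝ) (z : ℝ) :
    (Finset.univ.filter fun i => y i ≤ z).card + cnt (Set.Ioi z) y = N := by
  classical
  rw [Finset.card_filter]
  unfold cnt
  rw [← Finset.sum_add_distrib]
  have h1 : ∀ i : Fin N, ((if y i ≤ z then 1 else 0) + (Set.Ioi z).indicator 1 (y i) : ℕ) = 1 := by
    intro i
    by_cases h : y i ≤ z
    · have : y i ∉ Set.Ioi z := by simp [not_lt.2 h]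
      simp [h, Set.indicator_of_notMem this]
    · have : y i ∈ Set.Ioi z := Set.mem_Ioi.2 (not_le.1 h)
      simp [h, Set.indicator_of_mem this]
  rw [Finset.sum_congr rfl fun i _ => h1 i]
  simp

lemma emp_quantile_le {N : ℕ} (hN : 0 < N) {ζ : ℝ} (hζ0 : 0 < ζ) (hζ1 : ζ < 1)
    (y : Fin N → ℝ) (q3 : ℝ) (hH : (cnt (Set.Ioi q3) y : ℝ) ≤ (N : ℝ) * ζ / 2) :
    quantileOf (1 - ζ / 2)
      (fun z => ((Finset.univ.filter fun i => y i ≤ z).card : ℝ) / N) ≤ q3 := by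
  classical
  have hNpos : (0 : ℝ) < N := by exact_mod_cast hN
  have hinh : Nonempty (Fin N) := ⟨⟨0, hN⟩⟩
  have hmem : 1 - ζ / 2 ≤ ((Finset.univ.filter fun i => y i ≤ q3).card : ℝ) / N := by
    have hsum := card_filter_le_add_cnt y q3
    have hc : ((Finset.univ.filter fun i => y i ≤ q3).card : ℝ) = N - cnt (Set.Ioi q3) y := by
      have h2 := congrArg (Nat.cast : ℕ → ℝ) hsum
      push_cast at h2
      linarith
    rw [hc, le_div_iff₀ hNpos]
    nlinarith
  have hbdd : BddBelow {z : ℝ | 1 - ζ / 2 ≤ ((Finset.univ.filter fun i => y i ≤ z).card : ℝ) / N} := by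
    refine ⟨(Finset.univ.image y).min' (Finset.Nonempty.image Finset.univ_nonempty y), fun z hz => ?_⟩
    have hz' : 1 - ζ / 2 ≤ ((Finset.univ.filter fun i => y i ≤ z).card : ℝ) / N := hz
    have hpos : 0 < (Finset.univ.filter fun i => y i ≤ z).card := by
      by_contra h
      push_neg at h
      have h0 : (Finset.univ.filter fun i => y i ≤ z).card = 0 := Nat.le_zero.1 h
      rw [h0] at hz'
      simp only [Nat.cast_zero, zero_div] at hz'
      linarith
    obtain ⟨i, hi⟩ := Finset.card_pos.1 hpos
    have hi' : y i ≤ z := (Finset.mem_filter.1 hi).2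
    have hmin : (Finset.univ.image y).min' (Finset.Nonempty.image Finset.univ_nonempty y) ≤ y i :=
      Finset.min'_le _ _ (Finset.mem_image_of_mem y (Finset.mem_univ i))
    linarith
  exact csInf_le hbdd hmem

lemma le_emp_quantile {N : ℕ} (hN : 0 < N) {ζ : ℝ} (hζ0 : 0 < ζ) (hζ1 : ζ < 1)
    (y : Fin N → ℝ) (q1 : ℝ) (hW : (N : ℝ) * ζ / 2 < (cnt (Set.Ici q1) y : ℝ)) :
    q1 ≤ quantileOf (1 - ζ / 2)
      (fun z => ((Finset.univ.filter fun i => y i ≤ z).card : ℝ) / N) := by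
  classical
  have hNpos : (0 : ℝ) < N := by exact_mod_cast hN
  have hinh : Nonempty (Fin N) := ⟨⟨0, hN⟩⟩
  have hne : {z : ℝ | 1 - ζ / 2 ≤ ((Finset.univ.filter fun i => y i ≤ z).card : ℝ) / N}.Nonempty := by
    refine ⟨(Finset.univ.image y).max' (Finset.Nonempty.image Finset.univ_nonempty y), ?_⟩
    have hfull : (Finset.univ.filter fun i =>
        y i ≤ (Finset.univ.image y).max' (Finset.Nonempty.image Finset.univ_nonempty y))
        = Finset.univ := by
      refine Finset.filter_true_of_mem fun i _ => ?_
      exact Finset.le_max' _ _ (Finset.mem_image_of_mem y (Finset.mem_univ i))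
    show 1 - ζ / 2 ≤ _
    rw [hfull]
    rw [Finset.card_univ, Fintype.card_fin, div_self (ne_of_gt hNpos)]
    linarith
  refine le_csInf hne fun z hz => ?_
  have hz' : 1 - ζ / 2 ≤ ((Finset.univ.filter fun i => y i ≤ z).card : ℝ) / N := hz
  have hcard : (N : ℝ) - N * ζ / 2 ≤ ((Finset.univ.filter fun i => y i ≤ z).card : ℝ) := by
    rw [le_div_iff₀ hNpos] at hz'
    nlinarith
  have hcnt : cnt (Set.Ici q1) y = (Finset.univ.filter fun i => y i ∈ Set.Ici q1).card :=
    cnt_eq_card _ _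
  have hltN : N < (Finset.univ.filter fun i => y i ≤ z).card
      + (Finset.univ.filter fun i => y i ∈ Set.Ici q1).card := by
    have hr : (N : ℝ) < ((Finset.univ.filter fun i => y i ≤ z).card : ℝ)
        + ((Finset.univ.filter fun i => y i ∈ Set.Ici q1).card : ℝ) := by
      rw [hcnt] at hW
      linarith
    exact_mod_cast hr
  have hun : ((Finset.univ.filter fun i => y i ≤ z)
      ∪ (Finset.univ.filter fun i => y i ∈ Set.Ici q1)).card ≤ N := by
    have := Finset.card_le_univ ((Finset.univ.filter fun i => y i ≤ z)
      ∪ (Finset.univ.filter fun i => y i ∈ Set.Ici q1))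
    simpa [Finset.card_univ, Fintype.card_fin] using this
  have hint := Finset.card_union_add_card_inter (Finset.univ.filter fun i => y i ≤ z)
    (Finset.univ.filter fun i => y i ∈ Set.Ici q1)
  have hpos : 0 < ((Finset.univ.filter fun i => y i ≤ z)
      ∩ (Finset.univ.filter fun i => y i ∈ Set.Ici q1)).card := by omega
  obtain ⟨i, hi⟩ := Finset.card_pos.1 hpos
  rcases Finset.mem_inter.1 hi with ⟨hiA, hiB⟩
  have h1 : y i ≤ z := (Finset.mem_filter.1 hiA).2
  have h2 : q1 ≤ y i := (Finset.mem_filter.1 hiB).2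
  linarith

end Emp

section Numeric

lemma log_three_half : (23 : ℝ) / 60 ≤ Real.log (3 / 2) := by
  rw [Real.le_log_iff_exp_le (by norm_num : (0 : ℝ) < 3 / 2)]
  have h60 : Real.exp ((23 : ℝ) / 60) ^ (60 : ℕ) = Real.exp 23 := by
    rw [← Real.exp_nat_mul]
    norm_num
  refine le_of_pow_le_pow_left₀ (n := 60) (by norm_num) (by norm_num) ?_
  rw [h60]
  have h1 : Real.exp 23 ≤ (2.7182818286 : ℝ) ^ (23 : ℕ) := by
    have he : Real.exp (23 : ℝ) = Real.exp 1 ^ (23 : ℕ) := by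
      rw [Real.exp_one_pow]; norm_num
    rw [he]
    exact pow_le_pow_left₀ (Real.exp_pos 1).le Real.exp_one_lt_d9.le 23
  have h2 : (2.7182818286 : ℝ) ^ (23 : ℕ) ≤ (3 / 2 : ℝ) ^ (60 : ℕ) := by norm_num
  linarith

lemma log_two_le : Real.log 2 ≤ 5 / 7 := by
  have := Real.log_two_lt_d9
  norm_num at this ⊢
  linarith

lemma log_four_third : Real.log (4 / 3) ≤ 22 / 75 := by
  rw [Real.log_le_iff_le_exp (by norm_num : (0 : ℝ) < 4 / 3)]
  have h75 : Real.exp ((22 : ℝ) / 75) ^ (75 : ℕ) = Real.exp 22 := by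
    rw [← Real.exp_nat_mul]
    norm_num
  refine le_of_pow_le_pow_left₀ (n := 75) (by norm_num) (Real.exp_pos _).le ?_
  rw [h75]
  have h1 : (2.7182818283 : ℝ) ^ (22 : ℕ) ≤ Real.exp 22 := by
    have he : Real.exp (22 : ℝ) = Real.exp 1 ^ (22 : ℕ) := by
      rw [Real.exp_one_pow]; norm_num
    rw [he]
    exact pow_le_pow_left₀ (by norm_num) Real.exp_one_gt_d9.le 22
  have h2 : (4 / 3 : ℝ) ^ (75 : ℕ) ≤ (2.7182818283 : ℝ) ^ (22 : ℕ) := by norm_num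
  linarith

lemma fifty_le_exp_five : (50 : ℝ) ≤ Real.exp 5 := by
  have h1 : (2.7182818283 : ℝ) ^ (5 : ℕ) ≤ Real.exp 5 := by
    have he : Real.exp (5 : ℝ) = Real.exp 1 ^ (5 : ℕ) := by
      rw [Real.exp_one_pow]; norm_num
    rw [he]
    exact pow_le_pow_left₀ (by norm_num) Real.exp_one_gt_d9.le 5
  have h2 : (50 : ℝ) ≤ (2.7182818283 : ℝ) ^ (5 : ℕ) := by norm_num
  linarith

lemma eighty_le_exp_sixty : (80 : ℝ) ≤ Real.exp 60 := by
  have h1 : (2 : ℝ) ^ (60 : ℕ) ≤ Real.exp 60 := by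
    have he : Real.exp (60 : ℝ) = Real.exp 1 ^ (60 : ℕ) := by
      rw [Real.exp_one_pow]; norm_num
    rw [he]
    refine pow_le_pow_left₀ (by norm_num) ?_ 60
    have := Real.exp_one_gt_d9
    linarith
  have h2 : (80 : ℝ) ≤ (2 : ℝ) ^ (60 : ℕ) := by norm_num
  linarith

lemma two_le_exp_one : (2 : ℝ) ≤ Real.exp 1 := by
  have := Real.exp_one_gt_d9
  linarith

lemma exp_neg_two_mul_le {u : ℝ} (hu0 : 0 ≤ u) (hu1 : u ≤ 1 / 2) :
    Real.exp (-(2 * u)) ≤ 1 - u := by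
  have h1 := Real.add_one_le_exp (2 * u)
  have h2 : Real.exp (2 * u) * Real.exp (-(2 * u)) = 1 := by
    rw [← Real.exp_add]
    norm_num
  nlinarith [Real.exp_pos (-(2 * u)), Real.exp_pos (2 * u)]

lemma self_exp_le_one_sub {x : ℝ} (hx : 0 ≤ x) :
    x * Real.exp (-x) ≤ 1 - Real.exp (-x) := by
  have h1 := Real.add_one_le_exp x
  have h2 : Real.exp x * Real.exp (-x) = 1 := by
    rw [← Real.exp_add]
    norm_num
  nlinarith [Real.exp_pos (-x)]

end Numeric

end Stmt19Aux

set_option maxHeartbeats 2000000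
open Stmt19Aux

/-- **Lemma (empirical quantiles sandwich the population quantile).**
Let `X_1,…,X_N` be i.i.d. with c.d.f. `F` and let `F̂_N` be their empirical c.d.f.
For any `ζ, η ∈ (0,1)`, if `N ≥ C·ζ⁻²·log(1/η)` for a sufficiently large universal
constant `C > 0`, then with probability at least `1 − η`,
`Q_{1−ζ}(F) ≤ Q_{1−ζ/2}(F̂_N) ≤ Q_{1−ζ/3}(F)`. -/
theorem stmt19 :
    ∃ C : ℝ, 0 < C ∧
      ∀ (Ω : Type) [MeasurableSpace Ω] (P : Measure Ω), IsProbabilityMeasure P →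
      ∀ (N : ℕ) (_ : 0 < N) (ν : Measure ℝ), IsProbabilityMeasure ν →
      ∀ (X : Fin N → Ω → ℝ),
        (∀ i, Measurable (X i)) →
        (∀ i, P.map (X i) = ν) →
        iIndepFun X P →
      ∀ (ζ η : ℝ), 0 < ζ → ζ < 1 → 0 < η → η < 1 →
        C * ζ⁻¹ ^ 2 * Real.log (1 / η) ≤ N →
        ENNReal.ofReal (1 - η) ≤
          P {ω |
            quantileOf (1 - ζ) (fun z => (ν (Set.Iic z)).toReal)
                ≤ quantileOf (1 - ζ / 2)
                    (fun z => ((Finset.univ.filter fun i => X i ω ≤ z).card : ℝ) / N) ∧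
            quantileOf (1 - ζ / 2)
                    (fun z => ((Finset.univ.filter fun i => X i ω ≤ z).card : ℝ) / N)
                ≤ quantileOf (1 - ζ / 3) (fun z => (ν (Set.Iic z)).toReal)} := by
  classical
  refine ⟨Real.exp 60, Real.exp_pos _, ?_⟩
  intro Ω mΩ P hP N hN ν hν X hXm hXd hXi ζ η hζ0 hζ1 hη0 hη1 hNb
  haveI := hP
  haveI := hν
  have hNpos : (0 : ℝ) < N := by exact_mod_cast hN
  have ht0 : (0 : ℝ) < (N : ℝ) * ζ := mul_pos hNpos hζ0
  set q1 : ℝ := quantileOf (1 - ζ) (fun z => (ν (Set.Iic z)).toReal) with hq1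
  set q3 : ℝ := quantileOf (1 - ζ / 3) (fun z => (ν (Set.Iic z)).toReal) with hq3
  -- c.d.f. facts
  have hIic3 : ENNReal.ofReal (1 - ζ / 3) ≤ ν (Set.Iic q3) :=
    cdf_quantile_mem ν (by linarith) (by linarith)
  have hIio1 : ν (Set.Iio q1) ≤ ENNReal.ofReal (1 - ζ) :=
    cdf_quantile_out ν (by linarith) (by linarith)
  have hq13 : q1 ≤ q3 := by
    rw [hq1, hq3]
    unfold quantileOf
    refine csInf_le_csInf (cdf_S_bddBelow ν (show (0:ℝ) < 1 - ζ by linarith))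
      (cdf_S_nonempty ν (show (1:ℝ) - ζ/3 < 1 by linarith)) fun z hz => ?_
    simp only [Set.mem_setOf_eq] at hz ⊢
    linarith
  have hIoi3 : ν (Set.Ioi q3) ≤ ENNReal.ofReal (ζ / 3) := by
    have hc : Set.Ioi q3 = (Set.Iic q3)ᶜ := Set.compl_Iic.symm
    rw [hc, prob_compl_eq_one_sub measurableSet_Iic]
    calc 1 - ν (Set.Iic q3) ≤ 1 - ENNReal.ofReal (1 - ζ / 3) := tsub_le_tsub_left hIic3 1
      _ = ENNReal.ofReal 1 - ENNReal.ofReal (1 - ζ / 3) := by rw [ENNReal.ofReal_one]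
      _ = ENNReal.ofReal (1 - (1 - ζ / 3)) := (ENNReal.ofReal_sub 1 (by linarith)).symm
      _ = ENNReal.ofReal (ζ / 3) := by rw [show (1:ℝ) - (1 - ζ/3) = ζ/3 by ring]
  have hIci1 : ENNReal.ofReal ζ ≤ ν (Set.Ici q1) := by
    have hc : Set.Ici q1 = (Set.Iio q1)ᶜ := Set.compl_Iio.symm
    rw [hc, prob_compl_eq_one_sub measurableSet_Iio]
    calc ENNReal.ofReal ζ = ENNReal.ofReal (1 - (1 - ζ)) := by
          rw [show (1:ℝ) - (1 - ζ) = ζ by ring]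
      _ = ENNReal.ofReal 1 - ENNReal.ofReal (1 - ζ) := ENNReal.ofReal_sub 1 (by linarith)
      _ = 1 - ENNReal.ofReal (1 - ζ) := by rw [ENNReal.ofReal_one]
      _ ≤ 1 - ν (Set.Iio q1) := tsub_le_tsub_left hIio1 1
  have hIcc : ENNReal.ofReal (2 * ζ / 3) ≤ ν (Set.Icc q1 q3) := by
    have hdisj : Disjoint (Set.Iio q1) (Set.Icc q1 q3) :=
      Set.disjoint_left.2 fun u hu1 hu2 => absurd hu2.1 (not_le.2 hu1)
    have hsplit : ν (Set.Iio q1) + ν (Set.Icc q1 q3) = ν (Set.Iic q3) := by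
      rw [← measure_union hdisj measurableSet_Icc, Set.Iio_union_Icc_eq_Iic hq13]
    have h3 : ν (Set.Iic q3) - ν (Set.Iio q1) ≤ ν (Set.Icc q1 q3) := by
      rw [← hsplit]
      exact tsub_le_iff_left.2 le_rfl
    calc ENNReal.ofReal (2 * ζ / 3)
        = ENNReal.ofReal ((1 - ζ / 3) - (1 - ζ)) := by
          rw [show (1:ℝ) - ζ/3 - (1 - ζ) = 2*ζ/3 by ring]
      _ = ENNReal.ofReal (1 - ζ / 3) - ENNReal.ofReal (1 - ζ) :=
          ENNReal.ofReal_sub _ (by linarith)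
      _ ≤ ν (Set.Iic q3) - ν (Set.Iio q1) := tsub_le_tsub hIic3 hIio1
      _ ≤ ν (Set.Icc q1 q3) := h3
  -- transfer to the product measure
  have hJ : Measurable fun ω (i : Fin N) => X i ω := measurable_pi_lambda _ hXm
  have hmap : P.map (fun ω i => X i ω) = Measure.pi fun _ : Fin N => ν :=
    map_eq_pi P ν X hXm hXd hXi
  -- the two-sided count event
  set SE : Set (Fin N → ℝ) := {y | (cnt (Set.Ioi q3) y : ℝ) ≤ (N : ℝ) * ζ / 2
      ∧ (N : ℝ) * ζ / 2 < (cnt (Set.Ici q1) y : ℝ)} with hSE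
  have hSEmeas : MeasurableSet SE := by
    have hcap : SE = {y : Fin N → ℝ | (cnt (Set.Ioi q3) y : ℝ) ≤ (N : ℝ) * ζ / 2}
        ∩ {y : Fin N → ℝ | (N : ℝ) * ζ / 2 < (cnt (Set.Ici q1) y : ℝ)} := by
      rw [hSE]
      ext y
      simp only [Set.mem_setOf_eq, Set.mem_inter_iff]
    rw [hcap]
    exact (measurableSet_cnt_le measurableSet_Ioi _).inter (measurableSet_lt_cnt measurableSet_Ici _)
  have hsub : (fun ω (i : Fin N) => X i ω) ⁻¹' SE ⊆
      {ω | q1 ≤ quantileOf (1 - ζ / 2)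
              (fun z => ((Finset.univ.filter fun i => X i ω ≤ z).card : ℝ) / N) ∧
           quantileOf (1 - ζ / 2)
              (fun z => ((Finset.univ.filter fun i => X i ω ≤ z).card : ℝ) / N) ≤ q3} := by
    intro ω hω
    rcases hω with ⟨hH, hW⟩
    exact ⟨le_emp_quantile hN hζ0 hζ1 (fun i => X i ω) q1 hW,
      emp_quantile_le hN hζ0 hζ1 (fun i => X i ω) q3 hH⟩
  -- Chernoff bounds
  have hU : (Measure.pi fun _ : Fin N => ν) {y | (N : ℝ) * ζ / 2 ≤ (cnt (Set.Ioi q3) y : ℝ)}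
      ≤ ENNReal.ofReal (Real.exp (-((N : ℝ) * ζ / 40))) := by
    have h := count_upper ν measurableSet_Ioi (t := Real.log (3 / 2)) (ρ := ζ / 3)
      (v := (N : ℝ) * ζ / 2) (Real.log_nonneg (by norm_num)) (by linarith) hIoi3 N
    refine le_trans h (ENNReal.ofReal_le_ofReal (Real.exp_le_exp.2 ?_))
    rw [Real.exp_log (by norm_num : (0:ℝ) < 3/2)]
    have hl := log_three_half
    nlinarith [mul_nonneg ht0.le (sub_nonneg.2 hl)]
  have hWb : (Measure.pi fun _ : Fin N => ν) {y | (cnt (Set.Ici q1) y : ℝ) ≤ (N : ℝ) * ζ / 2}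
      ≤ ENNReal.ofReal (Real.exp (-((N : ℝ) * ζ / 7))) := by
    have h := count_lower ν measurableSet_Ici (t := Real.log 2) (p := ζ)
      (v := (N : ℝ) * ζ / 2) (Real.log_nonneg one_le_two) hζ0.le hζ1.le hIci1 N
    refine le_trans h (ENNReal.ofReal_le_ofReal (Real.exp_le_exp.2 ?_))
    rw [Real.exp_neg, Real.exp_log (by norm_num : (0:ℝ) < 2)]
    have hl := log_two_le
    nlinarith [mul_nonneg ht0.le (sub_nonneg.2 hl)]
  have hMb : (Measure.pi fun _ : Fin N => ν) {y | (cnt (Set.Icc q1 q3) y : ℝ) ≤ (N : ℝ) * ζ / 2}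
      ≤ ENNReal.ofReal (Real.exp (-((N : ℝ) * ζ / 50))) := by
    have h := count_lower ν measurableSet_Icc (t := Real.log (4 / 3)) (p := 2 * ζ / 3)
      (v := (N : ℝ) * ζ / 2) (Real.log_nonneg (by norm_num)) (by linarith) (by linarith) hIcc N
    refine le_trans h (ENNReal.ofReal_le_ofReal (Real.exp_le_exp.2 ?_))
    rw [Real.exp_neg, Real.exp_log (by norm_num : (0:ℝ) < 4/3)]
    have hl := log_four_third
    have h43 : ((4:ℝ)/3)⁻¹ = 3/4 := by norm_num
    rw [h43]
    nlinarith [mul_nonneg ht0.le (sub_nonneg.2 hl)]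
  -- logarithm bookkeeping
  have hL0 : 0 ≤ Real.log (1 / η) := Real.log_nonneg (one_le_one_div hη0 hη1.le)
  have hLη : Real.exp (-Real.log (1 / η)) = η := by
    rw [one_div, Real.log_inv, neg_neg, Real.exp_log hη0]
  have hLle : Real.log (1 / η) * Real.exp 60 ≤ (N : ℝ) * ζ ^ 2 := by
    have h := mul_le_mul_of_nonneg_right hNb (le_of_lt (mul_pos hζ0 hζ0))
    have hz : Real.exp 60 * ζ⁻¹ ^ 2 * Real.log (1 / η) * (ζ * ζ)
        = Real.log (1 / η) * Real.exp 60 := by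
      field_simp
    rw [hz] at h
    calc Real.log (1 / η) * Real.exp 60 ≤ (N : ℝ) * (ζ * ζ) := h
      _ = (N : ℝ) * ζ ^ 2 := by ring
  -- main lower bound on the product-measure event
  have key : ENNReal.ofReal (1 - η) ≤ (Measure.pi fun _ : Fin N => ν) SE := by
    by_cases hcase : 40 * (Real.log (1 / η) + 1) ≤ (N : ℝ) * ζ
    · -- concentration regime
      have hcsub : SEᶜ ⊆ {y : Fin N → ℝ | (N : ℝ) * ζ / 2 ≤ (cnt (Set.Ioi q3) y : ℝ)}
          ∪ {y : Fin N → ℝ | (cnt (Set.Ici q1) y : ℝ) ≤ (N : ℝ) * ζ / 2} := by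
        intro y hy
        rw [Set.mem_compl_iff, hSE, Set.mem_setOf_eq, not_and_or] at hy
        rcases hy with h | h
        · exact Or.inl (le_of_lt (not_le.1 h))
        · exact Or.inr (not_lt.1 h)
      have hreal : Real.exp (-((N : ℝ) * ζ / 40)) + Real.exp (-((N : ℝ) * ζ / 7)) ≤ η := by
        have e1 : Real.exp (-((N : ℝ) * ζ / 7)) ≤ Real.exp (-((N : ℝ) * ζ / 40)) :=
          Real.exp_le_exp.2 (by nlinarith)
        have e2 : Real.exp (-((N : ℝ) * ζ / 40)) ≤ Real.exp (-(Real.log (1 / η) + 1)) :=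
          Real.exp_le_exp.2 (by linarith)
        have e3 : Real.exp (-(Real.log (1 / η) + 1)) = η * Real.exp (-1) := by
          rw [show -(Real.log (1/η) + 1) = -Real.log (1/η) + -1 by ring, Real.exp_add, hLη]
        have e5 : Real.exp (-1) ≤ 1 / 2 := by
          have hmul : Real.exp (-1) * Real.exp 1 = 1 := by
            rw [← Real.exp_add]
            norm_num
          nlinarith [two_le_exp_one, Real.exp_pos (-1)]
        nlinarith [hη0.le]
      have hcb : (Measure.pi fun _ : Fin N => ν) SEᶜ ≤ ENNReal.ofReal η := by
        calc (Measure.pi fun _ : Fin N => ν) SEᶜ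
            ≤ (Measure.pi fun _ : Fin N => ν)
                ({y : Fin N → ℝ | (N : ℝ) * ζ / 2 ≤ (cnt (Set.Ioi q3) y : ℝ)}
                ∪ {y : Fin N → ℝ | (cnt (Set.Ici q1) y : ℝ) ≤ (N : ℝ) * ζ / 2}) :=
              measure_mono hcsub
          _ ≤ (Measure.pi fun _ : Fin N => ν) {y : Fin N → ℝ | (N : ℝ) * ζ / 2 ≤ (cnt (Set.Ioi q3) y : ℝ)}
              + (Measure.pi fun _ : Fin N => ν) {y : Fin N → ℝ | (cnt (Set.Ici q1) y : ℝ) ≤ (N : ℝ) * ζ / 2} :=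
              measure_union_le _ _
          _ ≤ ENNReal.ofReal (Real.exp (-((N : ℝ) * ζ / 40)))
              + ENNReal.ofReal (Real.exp (-((N : ℝ) * ζ / 7))) := add_le_add hU hWb
          _ = ENNReal.ofReal (Real.exp (-((N : ℝ) * ζ / 40)) + Real.exp (-((N : ℝ) * ζ / 7))) :=
              (ENNReal.ofReal_add (Real.exp_nonneg _) (Real.exp_nonneg _)).symm
          _ ≤ ENNReal.ofReal η := ENNReal.ofReal_le_ofReal hreal
      have hsum : (Measure.pi fun _ : Fin N => ν) SE + (Measure.pi fun _ : Fin N => ν) SEᶜ = 1 := by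
        rw [measure_add_measure_compl hSEmeas]
        exact measure_univ
      have h1 : ENNReal.ofReal (1 - η) + ENNReal.ofReal η = 1 := by
        rw [← ENNReal.ofReal_add (by linarith) hη0.le]
        norm_num
      have h2 : ENNReal.ofReal (1 - η) + ENNReal.ofReal η
          ≤ (Measure.pi fun _ : Fin N => ν) SE + ENNReal.ofReal η := by
        rw [h1, ← hsum]
        exact add_le_add le_rfl hcb
      exact (ENNReal.add_le_add_iff_right ENNReal.ofReal_ne_top).1 h2
    · -- small `Nζ` regime
      push_neg at hcase
      have h80L : 80 * Real.log (1 / η) ≤ (N : ℝ) * ζ := by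
        calc 80 * Real.log (1 / η) ≤ Real.log (1 / η) * Real.exp 60 := by
              nlinarith [mul_le_mul_of_nonneg_left eighty_le_exp_sixty hL0]
          _ ≤ (N : ℝ) * ζ ^ 2 := hLle
          _ = ((N : ℝ) * ζ) * ζ := by ring
          _ ≤ (N : ℝ) * ζ := mul_le_of_le_one_right ht0.le hζ1.le
      have hu80 : (N : ℝ) * ζ < 80 := by linarith
      have hsubF : {y : Fin N → ℝ | (∀ i, y i ∈ Set.Iic q3)
          ∧ (N : ℝ) * ζ / 2 < (cnt (Set.Icc q1 q3) y : ℝ)} ⊆ SE := by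
        rintro y ⟨h1, h2⟩
        constructor
        · have h0 : cnt (Set.Ioi q3) y = 0 :=
            cnt_eq_zero fun i hmem => absurd (Set.mem_Iic.1 (h1 i)) (not_le.2 (Set.mem_Ioi.1 hmem))
          rw [h0]
          norm_num
          linarith
        · have hmono := cnt_mono (Set.Icc_subset_Ici_self : Set.Icc q1 q3 ⊆ Set.Ici q1) y
          have hmr : (cnt (Set.Icc q1 q3) y : ℝ) ≤ (cnt (Set.Ici q1) y : ℝ) := by
            exact_mod_cast hmono
          linarith
      have hNA := pi_count_NA ν (G := Set.Iic q3) (A := Set.Icc q1 q3) measurableSet_Iic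
        measurableSet_Icc (fun u hu => hu.2) N ((N : ℝ) * ζ / 2)
      have hgl : ENNReal.ofReal (1 - Real.exp (-((N : ℝ) * ζ / 50)))
          ≤ (Measure.pi fun _ : Fin N => ν)
            {y : Fin N → ℝ | (N : ℝ) * ζ / 2 < (cnt (Set.Icc q1 q3) y : ℝ)} := by
        have hofr : ENNReal.ofReal (1 - Real.exp (-((N : ℝ) * ζ / 50)))
            = 1 - ENNReal.ofReal (Real.exp (-((N : ℝ) * ζ / 50))) := by
          have hadd : ENNReal.ofReal (1 - Real.exp (-((N : ℝ) * ζ / 50)))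
              + ENNReal.ofReal (Real.exp (-((N : ℝ) * ζ / 50))) = 1 := by
            have hle1 : Real.exp (-((N : ℝ) * ζ / 50)) ≤ 1 :=
              Real.exp_le_one_iff.2 (by nlinarith)
            rw [← ENNReal.ofReal_add (by linarith) (Real.exp_nonneg _)]
            norm_num
          rw [← hadd, ENNReal.add_sub_cancel_right ENNReal.ofReal_ne_top]
        have hcpl : {y : Fin N → ℝ | (N : ℝ) * ζ / 2 < (cnt (Set.Icc q1 q3) y : ℝ)}
            = {y : Fin N → ℝ | (cnt (Set.Icc q1 q3) y : ℝ) ≤ (N : ℝ) * ζ / 2}ᶜ := by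
          ext y
          simp [not_le]
        rw [hofr, hcpl, prob_compl_eq_one_sub (measurableSet_cnt_le measurableSet_Icc _)]
        exact tsub_le_tsub_left hMb 1
      have hpow : ENNReal.ofReal ((1 - ζ / 3) ^ N) ≤ ν (Set.Iic q3) ^ N := by
        rw [ENNReal.ofReal_pow (by linarith)]
        exact pow_le_pow_left' hIic3 N
      have hreal : 1 - η ≤ (1 - ζ / 3) ^ N * (1 - Real.exp (-((N : ℝ) * ζ / 50))) := by
        have r1 : 1 - η ≤ Real.log (1 / η) := by
          have h := Real.log_le_sub_one_of_pos hη0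
          rw [one_div, Real.log_inv]
          linarith
        have r2 : Real.log (1 / η) ≤ (N : ℝ) * ζ / Real.exp 60 := by
          rw [le_div_iff₀ (Real.exp_pos _)]
          calc Real.log (1 / η) * Real.exp 60 ≤ (N : ℝ) * ζ ^ 2 := hLle
            _ = ((N : ℝ) * ζ) * ζ := by ring
            _ ≤ (N : ℝ) * ζ := mul_le_of_le_one_right ht0.le hζ1.le
        have r3 : (N : ℝ) * ζ / Real.exp 60 ≤ ((N : ℝ) * ζ / 50) * Real.exp (-55) := by
          rw [div_le_iff₀ (Real.exp_pos 60)]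
          have he : Real.exp (-55) * Real.exp 60 = Real.exp 5 := by
            rw [← Real.exp_add]
            norm_num
          have h5 := fifty_le_exp_five
          calc (N : ℝ) * ζ = ((N : ℝ) * ζ / 50) * 50 := by ring
            _ ≤ ((N : ℝ) * ζ / 50) * Real.exp 5 := by
                apply mul_le_mul_of_nonneg_left h5 (by positivity)
            _ = ((N : ℝ) * ζ / 50) * Real.exp (-55) * Real.exp 60 := by rw [mul_assoc, he]
        have r4 : ((N : ℝ) * ζ / 50) * Real.exp (-55)
            ≤ ((N : ℝ) * ζ / 50) * Real.exp (-(2 / 3 * ((N : ℝ) * ζ)) - (N : ℝ) * ζ / 50) := by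
          apply mul_le_mul_of_nonneg_left _ (by positivity)
          exact Real.exp_le_exp.2 (by nlinarith)
        have r5 : ((N : ℝ) * ζ / 50) * Real.exp (-(2 / 3 * ((N : ℝ) * ζ)) - (N : ℝ) * ζ / 50)
            ≤ (1 - ζ / 3) ^ N * (1 - Real.exp (-((N : ℝ) * ζ / 50))) := by
          have ha : Real.exp (-(2 / 3 * ((N : ℝ) * ζ))) ≤ (1 - ζ / 3) ^ N := by
            have h1 : Real.exp (-(2 * (ζ / 3))) ≤ 1 - ζ / 3 :=
              exp_neg_two_mul_le (by linarith) (by linarith)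
            have h2 : Real.exp (-(2 * (ζ / 3))) ^ N ≤ (1 - ζ / 3) ^ N :=
              pow_le_pow_left₀ (Real.exp_nonneg _) h1 N
            have h3 : Real.exp (-(2 * (ζ / 3))) ^ N = Real.exp (-(2 / 3 * ((N : ℝ) * ζ))) := by
              rw [← Real.exp_nat_mul]
              ring_nf
            rw [← h3]
            exact h2
          have hb : ((N : ℝ) * ζ / 50) * Real.exp (-((N : ℝ) * ζ / 50))
              ≤ 1 - Real.exp (-((N : ℝ) * ζ / 50)) := self_exp_le_one_sub (by positivity)
          calc ((N : ℝ) * ζ / 50) * Real.exp (-(2 / 3 * ((N : ℝ) * ζ)) - (N : ℝ) * ζ / 50)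
              = Real.exp (-(2 / 3 * ((N : ℝ) * ζ)))
                * (((N : ℝ) * ζ / 50) * Real.exp (-((N : ℝ) * ζ / 50))) := by
                rw [show -(2 / 3 * ((N : ℝ) * ζ)) - (N : ℝ) * ζ / 50
                    = -(2 / 3 * ((N : ℝ) * ζ)) + -((N : ℝ) * ζ / 50) by ring, Real.exp_add]
                ring
            _ ≤ (1 - ζ / 3) ^ N * (1 - Real.exp (-((N : ℝ) * ζ / 50))) := by
                apply mul_le_mul ha hb (by positivity) (pow_nonneg (by linarith) N)
        linarith
      calc ENNReal.ofReal (1 - η)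
          ≤ ENNReal.ofReal ((1 - ζ / 3) ^ N * (1 - Real.exp (-((N : ℝ) * ζ / 50)))) :=
            ENNReal.ofReal_le_ofReal hreal
        _ = ENNReal.ofReal ((1 - ζ / 3) ^ N)
            * ENNReal.ofReal (1 - Real.exp (-((N : ℝ) * ζ / 50))) :=
            ENNReal.ofReal_mul (pow_nonneg (by linarith) N)
        _ ≤ ν (Set.Iic q3) ^ N * (Measure.pi fun _ : Fin N => ν)
              {y : Fin N → ℝ | (N : ℝ) * ζ / 2 < (cnt (Set.Icc q1 q3) y : ℝ)} :=
            mul_le_mul' hpow hgl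
        _ ≤ (Measure.pi fun _ : Fin N => ν)
              {y : Fin N → ℝ | (∀ i, y i ∈ Set.Iic q3)
                ∧ (N : ℝ) * ζ / 2 < (cnt (Set.Icc q1 q3) y : ℝ)} := hNA
        _ ≤ (Measure.pi fun _ : Fin N => ν) SE := measure_mono hsubF
  -- conclude
  calc ENNReal.ofReal (1 - η) ≤ (Measure.pi fun _ : Fin N => ν) SE := key
    _ = P ((fun ω (i : Fin N) => X i ω) ⁻¹' SE) := by
        rw [← hmap, Measure.map_apply hJ hSEmeas]
    _ ≤ P {ω |
            q1 ≤ quantileOf (1 - ζ / 2)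
                (fun z => ((Finset.univ.filter fun i => X i ω ≤ z).card : ℝ) / N) ∧
            quantileOf (1 - ζ / 2)
                (fun z => ((Finset.univ.filter fun i => X i ω ≤ z).card : ℝ) / N) ≤ q3} :=
        measure_mono hsub
end
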